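/- arXiv:2403.09082 — 12 statements merged into one kernel-verified Lean document; each statement's English description precedes it below -/
import Mathlib

section
/- Let G be a mono-C3-free edge-colored complete graph K_n and let P = v_1 v_2 ⋯ v_t be a properly colored path in G with t ≥ 2. If a vertex v ∈ V(G) \ V(P) satisfies col(v v_i) = col(v_i v_{i+1}) for some i ∈ [1, t−1], then there exists j ∈ [i, t−1] such that Q = v_1 v_2 ⋯ v_j v v_{j+1} ⋯ v_t is a properly colored path with col(v v_j) = col(v_j v_{j+1}). -/
/-- An edge-coloring of `K_n` (on vertex set `Fin n`) has no monochromatic triangle. -/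
def MonoC3Free (n : ℕ) (c : Fin n → Fin n → ℕ) : Prop :=
  ∀ u v w : Fin n, u ≠ v → v ≠ w → u ≠ w → ¬(c u v = c v w ∧ c u v = c u w)

/-- `p 0, p 1, …, p (t-1)` is a properly colored path on `t` vertices in the
edge-colored `K_n`: the vertices are distinct and consecutive edges get distinct colors. -/
def IsPCPath (n : ℕ) (c : Fin n → Fin n → ℕ) (p : ℕ → Fin n) (t : ℕ) : Prop :=
  Set.InjOn p (Set.Iio t) ∧
    ∀ j : ℕ, j + 3 ≤ t → c (p j) (p (j + 1)) ≠ c (p (j + 1)) (p (j + 2))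

/-- Let `G` be a mono-`C3`-free edge-colored `K_n` and let
`P = p 0, …, p (t-1)` be a properly colored path in `G` (`t ≥ 2`).  If a vertex `x`
outside `P` satisfies `col(x, p i) = col(p i, p (i+1))` for some `i ≤ t - 2`, then there
is `j` with `i ≤ j ≤ t - 2` such that inserting `x` between `p j` and `p (j+1)` yields a
properly colored path `Q` with `col(x, p j) = col(p j, p (j+1))`. -/
theorem pc_path_insert (n t : ℕ) (c : Fin n → Fin n → ℕ)
    (hsym : ∀ u v, c u v = c v u) (hmono : MonoC3Free n c)
    (p : ℕ → Fin n) (ht : 2 ≤ t) (hP : IsPCPath n c p t)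
    (x : Fin n) (hx : ∀ j < t, p j ≠ x)
    (i : ℕ) (hi : i + 1 < t) (hcol : c x (p i) = c (p i) (p (i + 1))) :
    ∃ j : ℕ, i ≤ j ∧ j + 1 < t ∧ c x (p j) = c (p j) (p (j + 1)) ∧
      IsPCPath n c (fun m => if m ≤ j then p m else if m = j + 1 then x else p (m - 1))
        (t + 1) := by
  obtain ⟨hinj, hedge⟩ := hP
  have hpne : ∀ a b, a < t → b < t → a ≠ b → p a ≠ p b := by
    intro a b ha hb hab h
    exact hab (hinj (Set.mem_Iio.mpr ha) (Set.mem_Iio.mpr hb) h)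
  have hib : i ≤ t - 2 := by omega
  set j := Nat.findGreatest (fun k => c x (p k) = c (p k) (p (k + 1))) (t - 2) with hjdef
  have hPj : c x (p j) = c (p j) (p (j + 1)) := Nat.findGreatest_spec (P := fun k => c x (p k) = c (p k) (p (k + 1))) hib hcol
  have hij : i ≤ j := Nat.le_findGreatest (P := fun k => c x (p k) = c (p k) (p (k + 1))) hib hcol
  have hjb : j ≤ t - 2 := Nat.findGreatest_le _
  have hmax : ∀ k, j < k → k ≤ t - 2 → c x (p k) ≠ c (p k) (p (k + 1)) :=
    fun k hk hkb => Nat.findGreatest_is_greatest (P := fun k => c x (p k) = c (p k) (p (k + 1))) hk hkb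
  have hj1t : j + 1 < t := by omega
  -- key non-monochromatic-triangle fact
  have hkey : c (p j) x ≠ c x (p (j + 1)) := by
    intro h
    have h1 : x ≠ p j := fun hh => hx j (by omega) hh.symm
    have h2 : p j ≠ p (j + 1) := hpne j (j + 1) (by omega) (by omega) (by omega)
    have h3 : x ≠ p (j + 1) := fun hh => hx (j + 1) (by omega) hh.symm
    exact hmono x (p j) (p (j + 1)) h1 h2 h3 ⟨hPj, (hsym x (p j)).trans h⟩
  refine ⟨j, hij, hj1t, hPj, ?_, ?_⟩
  · intro a ha b hb hab
    simp only [Set.mem_Iio] at ha hb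
    dsimp only at hab
    split_ifs at hab
    all_goals first
      | omega
      | exact absurd hab (hx _ (by omega))
      | exact absurd hab.symm (hx _ (by omega))
      | (have h := hinj (Set.mem_Iio.mpr (by omega)) (Set.mem_Iio.mpr (by omega)) hab; omega)
  · intro m hm
    simp only
    split_ifs
    all_goals try omega
    · exact hedge m (by omega)
    · -- m + 1 = j
      intro h
      apply hedge m (by omega)
      rw [h, show m + 1 = j by omega, hsym, hPj, show j + 1 = m + 2 by omega]
    · -- m = j
      have hmj : m = j := by omega
      subst hmj
      exact hkey
    · -- m = j + 1
      exact hmax m (by omega) (by omega)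
    · -- m ≥ j + 2
      have h1 : m - 1 + 1 = m := by omega
      have h2 : m - 1 + 2 = m + 1 := by omega
      have := hedge (m - 1) (by omega)
      rw [h1, h2] at this
      exact this
end

section
/- Let G be a mono-C3-free edge-colored complete graph K_n. Then for each vertex v ∈ V(G), there is a properly colored Hamilton path in G starting at v. -/
lemma extend_path (n : ℕ) (c : Fin n → Fin n → ℕ)
    (hsym : ∀ u v, c u v = c v u) (hmono : MonoC3Free n c)
    (t : ℕ) (ht1 : 1 ≤ t) (htn : t < n) (p : ℕ → Fin n)
    (hp : IsPCPath n c p t) :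
    ∃ q : ℕ → Fin n, q 0 = p 0 ∧ IsPCPath n c q (t + 1) := by
  obtain ⟨hinj, hpc⟩ := hp
  -- find an unused vertex x
  obtain ⟨x, hx⟩ : ∃ x : Fin n, ∀ j, j < t → p j ≠ x := by
    by_contra h
    push_neg at h
    have hsub : (Finset.univ : Finset (Fin n)) ⊆ (Finset.range t).image p := by
      intro y _
      obtain ⟨j, hj, hjy⟩ := h y
      exact Finset.mem_image.mpr ⟨j, Finset.mem_range.mpr hj, hjy⟩
    have h1 := Finset.card_le_card hsub
    have h2 : ((Finset.range t).image p).card ≤ t := by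
      calc ((Finset.range t).image p).card ≤ (Finset.range t).card :=
            Finset.card_image_le
        _ = t := Finset.card_range t
    simp only [Finset.card_univ, Fintype.card_fin] at h1
    omega
  -- find a good insertion index k
  suffices h : ∃ k, 1 ≤ k ∧ k ≤ t ∧
      (2 ≤ k → c (p (k - 2)) (p (k - 1)) ≠ c (p (k - 1)) x) ∧
      (k < t → c (p (k - 1)) x ≠ c x (p k)) ∧
      (k + 2 ≤ t → c x (p k) ≠ c (p k) (p (k + 1))) by
    obtain ⟨k, hk1, hk2, hA, hB, hC⟩ := h
    refine ⟨fun i => if i < k then p i else if i = k then x else p (i - 1), ?_, ?_, ?_⟩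
    · simp only [if_pos (show 0 < k by omega)]
    · -- injectivity
      intro i hi j hj hij
      simp only [Set.mem_Iio] at hi hj
      by_cases h1 : i < k <;> by_cases h2 : j < k <;>
        simp only [h1, h2, if_true, if_false] at hij
      · exact hinj (show i ∈ Set.Iio t by simpa using (by omega : i < t))
          (show j ∈ Set.Iio t by simpa using (by omega : j < t)) hij
      · by_cases h3 : j = k
        · simp only [h3, if_pos rfl] at hij
          exact absurd hij (hx i (by omega))
        · simp only [if_neg h3] at hij
          have := hinj (show i ∈ Set.Iio t by simpa using (by omega : i < t))
            (show j - 1 ∈ Set.Iio t by simpa using (by omega : j - 1 < t)) hij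
          omega
      · by_cases h3 : i = k
        · simp only [h3, if_pos rfl] at hij
          exact absurd hij.symm (hx j (by omega))
        · simp only [if_neg h3] at hij
          have := hinj (show i - 1 ∈ Set.Iio t by simpa using (by omega : i - 1 < t))
            (show j ∈ Set.Iio t by simpa using (by omega : j < t)) hij
          omega
      · by_cases h3 : i = k <;> by_cases h4 : j = k
        · omega
        · simp only [h3, h4, if_pos rfl, if_neg h4] at hij
          exact absurd hij.symm (hx (j - 1) (by omega))
        · simp only [h3, h4, if_pos rfl, if_neg h3] at hij
          exact absurd hij (hx (i - 1) (by omega))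
        · simp only [if_neg h3, if_neg h4] at hij
          have := hinj (show i - 1 ∈ Set.Iio t by simpa using (by omega : i - 1 < t))
            (show j - 1 ∈ Set.Iio t by simpa using (by omega : j - 1 < t)) hij
          omega
    · -- properly colored
      intro j hj
      have hqlt : ∀ i, i < k → (if i < k then p i else if i = k then x else p (i - 1)) = p i := by
        intro i hik; simp [hik]
      have hqk : (if k < k then p k else if k = k then x else p (k - 1)) = x := by simp
      have hqgt : ∀ i, k < i →
          (if i < k then p i else if i = k then x else p (i - 1)) = p (i - 1) := by
        intro i hik
        simp only [if_neg (by omega : ¬ i < k), if_neg (by omega : ¬ i = k)]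
      simp only
      rcases lt_trichotomy (j + 2) k with hc | hc | hc
      · rw [hqlt j (by omega), hqlt (j + 1) (by omega), hqlt (j + 2) (by omega)]
        exact hpc j (by omega)
      · rw [hqlt j (by omega), hqlt (j + 1) (by omega), hc, hqk]
        have := hA (by omega)
        have e1 : k - 2 = j := by omega
        have e2 : k - 1 = j + 1 := by omega
        rwa [e1, e2] at this
      · rcases lt_trichotomy (j + 1) k with hd | hd | hd
        · omega
        · rw [hqlt j (by omega), hd, hqk, hqgt (j + 2) (by omega)]
          have := hB (by omega)
          have e1 : k - 1 = j := by omega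
          have e2 : j + 2 - 1 = k := by omega
          rw [e1] at this
          rw [e2]
          exact this
        · rcases lt_trichotomy j k with he | he | he
          · omega
          · rw [he, hqk, hqgt (k + 1) (by omega), hqgt (k + 2) (by omega)]
            have e1 : k + 1 - 1 = k := by omega
            have e2 : k + 2 - 1 = k + 1 := by omega
            rw [e1, e2]
            exact hC (by omega)
          · rw [hqgt j (by omega), hqgt (j + 1) (by omega), hqgt (j + 2) (by omega)]
            have := hpc (j - 1) (by omega)
            have e1 : j - 1 + 1 = j := by omega
            have e2 : j - 1 + 2 = j + 1 := by omega
            rw [e1, e2] at this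
            have e3 : j + 1 - 1 = j := by omega
            have e4 : j + 2 - 1 = j + 1 := by omega
            rwa [e3, e4]
  -- now find the index k
  by_cases ht2 : t = 1
  · exact ⟨1, le_refl 1, by omega, fun h => absurd h (by omega),
      fun h => absurd h (by omega), fun h => absurd h (by omega)⟩
  · have ht2' : 2 ≤ t := by omega
    by_cases hP : c (p (t - 1)) x = c (p (t - 2)) (p (t - 1))
    · -- need insertion; use least bad index
      have hQex : ∃ j, 1 ≤ j ∧ j ≤ t - 1 ∧ c (p j) x = c (p (j - 1)) (p j) := by
        refine ⟨t - 1, by omega, le_refl _, ?_⟩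
        have e : t - 1 - 1 = t - 2 := by omega
        rw [e]; exact hP
      classical
      set k := Nat.find hQex with hkdef
      obtain ⟨hk1, hk2, hPk⟩ := Nat.find_spec hQex
      refine ⟨k, hk1, by omega, ?_, ?_, ?_⟩
      · intro h2 heq
        have hlt : k - 1 < k := by omega
        apply Nat.find_min hQex hlt
        refine ⟨by omega, by omega, ?_⟩
        have e : k - 1 - 1 = k - 2 := by omega
        rw [e]
        exact heq.symm
      · intro _
        have hne1 : p (k - 1) ≠ p k := by
          intro heq
          have := hinj (show (k : ℕ) - 1 ∈ Set.Iio t by simpa using (by omega : k - 1 < t))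
            (show (k : ℕ) ∈ Set.Iio t by simpa using (by omega : k < t)) heq
          omega
        have hne2 : p k ≠ x := hx k (by omega)
        have hne3 : p (k - 1) ≠ x := hx (k - 1) (by omega)
        have hm := hmono (p (k - 1)) (p k) x hne1 hne2 hne3
        have hfirst : c (p (k - 1)) (p k) = c (p k) x := hPk.symm
        have hsecond : c (p (k - 1)) (p k) ≠ c (p (k - 1)) x := by
          intro heq; exact hm ⟨hfirst, heq⟩
        intro heq
        apply hsecond
        rw [hsym x (p k)] at heq
        exact hfirst.trans heq.symm
      · intro hkt
        rw [hsym x (p k), hPk]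
        have := hpc (k - 1) (by omega)
        have e1 : k - 1 + 1 = k := by omega
        have e2 : k - 1 + 2 = k + 1 := by omega
        rwa [e1, e2] at this
    · -- append at the end: k = t
      refine ⟨t, by omega, le_refl t, ?_, fun h => absurd h (by omega),
        fun h => absurd h (by omega)⟩
      intro _
      intro heq
      exact hP (heq.symm)

/-- Let `G` be a mono-`C3`-free edge-colored `K_n`.  Then for each
vertex `v` there is a properly colored Hamilton path in `G` starting at `v`. -/
theorem pc_hamilton_path_from_vertex (n : ℕ) (c : Fin n → Fin n → ℕ)
    (hsym : ∀ u v, c u v = c v u) (hmono : MonoC3Free n c) (v : Fin n) :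
    ∃ p : ℕ → Fin n, p 0 = v ∧ IsPCPath n c p n ∧ ∀ x : Fin n, ∃ j < n, p j = x := by
  have hn : 1 ≤ n := v.pos
  have key : ∀ t, 1 ≤ t → t ≤ n → ∃ p : ℕ → Fin n, p 0 = v ∧ IsPCPath n c p t := by
    intro t
    induction t with
    | zero => intro h; omega
    | succ t ih =>
      intro h1 h2
      by_cases ht : t = 0
      · subst ht
        refine ⟨fun _ => v, rfl, ?_, ?_⟩
        · intro i hi j hj _
          simp only [Set.mem_Iio] at hi hj
          omega
        · intro j hj; omega
      · obtain ⟨p, hp0, hp⟩ := ih (by omega) (by omega)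
        obtain ⟨q, hq0, hq⟩ := extend_path n c hsym hmono t (by omega) (by omega) p hp
        exact ⟨q, hq0.trans hp0, hq⟩
  obtain ⟨p, hp0, hp⟩ := key n hn le_rfl
  refine ⟨p, hp0, hp, ?_⟩
  intro x
  by_contra h
  push_neg at h
  have hinj := hp.1
  have hcard : ((Finset.range n).image p).card = n := by
    rw [Finset.card_image_of_injOn (by rw [Finset.coe_range]; exact hinj), Finset.card_range]
  have huniv : (Finset.range n).image p = Finset.univ := by
    apply Finset.eq_univ_of_card
    rw [hcard, Fintype.card_fin]
  have hxmem : x ∈ (Finset.range n).image p := by rw [huniv]; exact Finset.mem_univ x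
  obtain ⟨j, hj, hjx⟩ := Finset.mem_image.mp hxmem
  exact h j (Finset.mem_range.mp hj) hjx
end

section
/- Let G be a mono-C3-free edge-colored complete graph K_n with n ≥ 3. Then G contains a spanning subgraph which is a nice (n−2)-shovel. -/
/-- A nice `t`-shovel in the edge-colored `K_n`: a triangle `p 0, u₂, u₃` together with a
path `p 0, p 1, …, p (t-1)` on `t ≥ 1` vertices meeting the triangle exactly in `p 0`,
such that the path is properly colored, `u₂u₃` is a center edge of the triangle
(its color appears on no other edge of the triangle), and the color of the first path
edge `p 0 p 1` (when the path has an edge) differs from the colors of both triangle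
edges at `p 0`. -/
def IsNiceShovel (n : ℕ) (c : Fin n → Fin n → ℕ) (t : ℕ) (p : ℕ → Fin n)
    (u₂ u₃ : Fin n) : Prop :=
  1 ≤ t ∧ u₂ ≠ u₃ ∧ (∀ j < t, p j ≠ u₂ ∧ p j ≠ u₃) ∧
    IsPCPath n c p t ∧
    c u₂ u₃ ≠ c (p 0) u₂ ∧ c u₂ u₃ ≠ c (p 0) u₃ ∧
    (2 ≤ t → c (p 0) (p 1) ≠ c (p 0) u₂ ∧ c (p 0) (p 1) ≠ c (p 0) u₃)


/-!
The shovel is grown one vertex at a time, starting from a triangle with its center edge. A vertex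
`x` outside a nice shovel is inserted into the path `p 0 ⋯ p (t-1)` by scanning it from the end:
`x` can follow `p i` unless `c (p (i-1)) (p i) = c (p i) x`, and then the two equal colors at
`p i` force `c (p (i-1)) x ≠ c x (p i)`, so `x` fits between `p (i-1)` and `p i` as soon as it
can follow `p (i-1)`. The scan only fails at `p 0`, when `c (p 0) x` is the color of a triangle
edge at `p 0`, say `c (p 0) u₂`. Then `u₂ x` is a center edge of `p 0 u₂ x`, and the scan is
repeated with `u₃` for that shovel. If this fails too, `p 0` sends edges of one color `α` to
`u₂, u₃, x`, so the triangle `u₂ u₃ x` avoids `α` and the apex of one of its center edges can be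
put in front of `p 0`.
-/

def IsCenterEdge {V C : Type*} (c : V → V → C) (v a b : V) : Prop :=
  c a b ≠ c v a ∧ c a b ≠ c v b

def insertAt {α : Type*} (p : ℕ → α) (i : ℕ) (x : α) : ℕ → α :=
  fun j => if j < i then p j else if j = i then x else p (j - 1)

def shovelVertices {V : Type*} [DecidableEq V] (t : ℕ) (p : ℕ → V) (u₂ u₃ : V) : Finset V :=
  insert u₂ (insert u₃ ((Finset.range t).image p))

lemma mem_shovelVertices {V : Type*} [DecidableEq V] {t : ℕ} {p : ℕ → V} {u₂ u₃ x : V} :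
    x ∈ shovelVertices t p u₂ u₃ ↔ x = u₂ ∨ x = u₃ ∨ ∃ j < t, p j = x := by
  simp [shovelVertices]

open Finset

section insertAt

variable {α : Type*} {p : ℕ → α} {i j t : ℕ} {x : α}

lemma insertAt_of_lt (h : j < i) : insertAt p i x j = p j := if_pos h

lemma insertAt_self : insertAt p i x i = x := by simp [insertAt]

lemma insertAt_succ_of_le (h : i ≤ j) : insertAt p i x (j + 1) = p j := by
  simp [insertAt, show ¬ j + 1 < i by omega, show j + 1 ≠ i by omega]

lemma insertAt_of_ne (h : j ≠ i) : insertAt p i x j = p (if j < i then j else j - 1) := by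
  unfold insertAt; split_ifs <;> trivial

lemma insertAt_eq_or (hi : i ≤ t) (hj : j < t + 1) :
    insertAt p i x j = x ∨ ∃ k < t, insertAt p i x j = p k := by
  by_cases h : j = i
  · exact .inl (h ▸ insertAt_self)
  · exact .inr ⟨_, by split_ifs <;> omega, insertAt_of_ne h⟩

lemma injOn_insertAt (hp : Set.InjOn p (Set.Iio t)) (hx : ∀ k < t, p k ≠ x) (hi : i ≤ t) :
    Set.InjOn (insertAt p i x) (Set.Iio (t + 1)) := by
  intro j₁ h₁ j₂ h₂ heq
  simp only [Set.mem_Iio] at h₁ h₂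
  by_cases e₁ : j₁ = i <;> by_cases e₂ : j₂ = i
  · exact e₁.trans e₂.symm
  · rw [e₁, insertAt_self, insertAt_of_ne e₂] at heq
    exact absurd heq.symm (hx _ (by split_ifs <;> omega))
  · rw [e₂, insertAt_self, insertAt_of_ne e₁] at heq
    exact absurd heq (hx _ (by split_ifs <;> omega))
  · rw [insertAt_of_ne e₁, insertAt_of_ne e₂] at heq
    have := hp (by simp only [Set.mem_Iio]; split_ifs <;> omega)
      (by simp only [Set.mem_Iio]; split_ifs <;> omega) heq
    split_ifs at this <;> omega

end insertAt

section Shovel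

variable {n : ℕ} {c : Fin n → Fin n → ℕ} {t i : ℕ} {p : ℕ → Fin n} {u₂ u₃ x : Fin n}

lemma MonoC3Free.isCenterEdge_of_eq (hmono : MonoC3Free n c) {v a b : Fin n}
    (hva : v ≠ a) (hvb : v ≠ b) (hab : a ≠ b) (h : c v a = c v b) : IsCenterEdge c v a b :=
  ⟨fun e => hmono v a b hva hab hvb ⟨e.symm, h⟩, fun e => hmono v a b hva hab hvb ⟨h ▸ e.symm, h⟩⟩

lemma MonoC3Free.exists_isCenterEdge (hsym : ∀ u v, c u v = c v u) (hmono : MonoC3Free n c)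
    (P : Fin n → Prop) {x y z : Fin n} (hx : P x) (hy : P y) (hz : P z)
    (hxy : x ≠ y) (hyz : y ≠ z) (hxz : x ≠ z) :
    ∃ v a b, P v ∧ P a ∧ P b ∧ v ≠ a ∧ v ≠ b ∧ a ≠ b ∧ IsCenterEdge c v a b := by
  -- not all three colors agree, so one of them occurs on a single edge
  have := hmono x y z hxy hyz hxz
  by_cases h₁ : IsCenterEdge c x y z
  · exact ⟨x, y, z, hx, hy, hz, hxy, hxz, hyz, h₁⟩
  by_cases h₂ : IsCenterEdge c y x z
  · exact ⟨y, x, z, hy, hx, hz, hxy.symm, hyz, hxz, h₂⟩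
  refine ⟨z, x, y, hz, hx, hy, hxz.symm, hyz.symm, hxy, ?_⟩
  simp only [IsCenterEdge, hsym y x, hsym z x, hsym z y] at *
  grind

lemma IsPCPath.insertAt (hp : IsPCPath n c p t) (hx : ∀ k < t, p k ≠ x) (hi : i ≤ t)
    (hleft : ∀ k, k + 2 = i → c (p k) (p (k + 1)) ≠ c (p (k + 1)) x)
    (hmid : ∀ k, k + 1 = i → i < t → c (p k) x ≠ c x (p i))
    (hright : i + 2 ≤ t → c x (p i) ≠ c (p i) (p (i + 1))) :
    IsPCPath n c (insertAt p i x) (t + 1) := by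
  refine ⟨injOn_insertAt hp.1 hx hi, fun j hj => ?_⟩
  rcases lt_or_ge (j + 2) i with h | h
  · rw [insertAt_of_lt (by omega), insertAt_of_lt (by omega), insertAt_of_lt h]
    exact hp.2 j (by omega)
  obtain rfl | rfl | rfl | h := show i = j + 2 ∨ i = j + 1 ∨ i = j ∨ i < j by omega
  · rw [insertAt_of_lt (by omega), insertAt_of_lt (by omega), insertAt_self]
    exact hleft j rfl
  · rw [insertAt_of_lt (by omega), insertAt_self, insertAt_succ_of_le le_rfl]
    exact hmid j rfl (by omega)
  · rw [insertAt_self, insertAt_succ_of_le le_rfl, insertAt_succ_of_le (by omega)]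
    exact hright (by omega)
  · obtain ⟨k, rfl⟩ : ∃ k, j = k + 1 := ⟨j - 1, by omega⟩
    rw [insertAt_succ_of_le (by omega), insertAt_succ_of_le (j := k + 1) (by omega),
      insertAt_succ_of_le (j := k + 2) (by omega)]
    exact hp.2 k (by omega)

lemma isNiceShovel_one {v a b : Fin n} (hva : v ≠ a) (hvb : v ≠ b) (hab : a ≠ b)
    (h : IsCenterEdge c v a b) : IsNiceShovel n c 1 (fun _ => v) a b :=
  ⟨le_rfl, hab, fun _ _ => ⟨hva, hvb⟩,
    ⟨fun j₁ h₁ j₂ h₂ _ => by simp only [Set.mem_Iio] at h₁ h₂; omega, fun j hj => by omega⟩,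
    h.1, h.2, fun h => by omega⟩

lemma IsNiceShovel.symm (hsym : ∀ u v, c u v = c v u) (hs : IsNiceShovel n c t p u₂ u₃) :
    IsNiceShovel n c t p u₃ u₂ := by
  obtain ⟨ht, hne, hav, hpc, h₂, h₃, hfirst⟩ := hs
  exact ⟨ht, hne.symm, fun j hj => (hav j hj).symm, hpc, hsym u₃ u₂ ▸ h₃, hsym u₃ u₂ ▸ h₂,
    fun h => (hfirst h).symm⟩

lemma IsNiceShovel.replace_right (hmono : MonoC3Free n c) (hs : IsNiceShovel n c t p u₂ u₃)
    (hx₂ : x ≠ u₂) (hxp : ∀ j < t, p j ≠ x) (heq : c (p 0) x = c (p 0) u₂) :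
    IsNiceShovel n c t p u₂ x := by
  obtain ⟨ht, hne, hav, hpc, -, -, hfirst⟩ := hs
  have hcen := hmono.isCenterEdge_of_eq (hav 0 ht).1 (hxp 0 ht) hx₂.symm heq.symm
  exact ⟨ht, hx₂.symm, fun j hj => ⟨(hav j hj).1, hxp j hj⟩, hpc, hcen.1, hcen.2,
    fun h => ⟨(hfirst h).1, heq ▸ (hfirst h).1⟩⟩

lemma IsPCPath.isNiceShovel_insertAt_zero (hp : IsPCPath n c p t) {v a b : Fin n}
    (hav : ∀ j < t, p j ≠ v ∧ p j ≠ a ∧ p j ≠ b) (hva : v ≠ a) (hvb : v ≠ b) (hab : a ≠ b)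
    (hcen : IsCenterEdge c v a b) (hfa : c v (p 0) ≠ c v a) (hfb : c v (p 0) ≠ c v b)
    (hpc : 2 ≤ t → c v (p 0) ≠ c (p 0) (p 1)) :
    IsNiceShovel n c (t + 1) (_root_.insertAt p 0 v) a b := by
  refine ⟨by omega, hab, fun j hj => ?_,
    hp.insertAt (fun k hk => (hav k hk).1) (Nat.zero_le t) (by omega) (by omega) ?_, ?_⟩
  · rcases insertAt_eq_or (Nat.zero_le t) hj with h | ⟨k, hk, h⟩ <;> rw [h]
    exacts [⟨hva, hvb⟩, (hav k hk).2]
  · simpa using hpc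
  · have h₁ : _root_.insertAt p 0 v 1 = p 0 := insertAt_succ_of_le le_rfl
    rw [insertAt_self, h₁]
    exact ⟨hcen.1, hcen.2, fun _ => ⟨hfa, hfb⟩⟩

lemma IsNiceShovel.insertAt_succ (hsym : ∀ u v, c u v = c v u) (hmono : MonoC3Free n c)
    (hs : IsNiceShovel n c t p u₂ u₃) (hx₂ : x ≠ u₂) (hx₃ : x ≠ u₃) (hxp : ∀ j < t, p j ≠ x)
    (hi : i < t) (hprev : ∀ k, k + 1 = i → c (p k) (p i) ≠ c (p i) x)
    (hnext : i + 1 < t → c (p (i + 1)) x = c (p i) (p (i + 1)))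
    (hhead : i = 0 → c (p 0) x ≠ c (p 0) u₂ ∧ c (p 0) x ≠ c (p 0) u₃) :
    IsNiceShovel n c (t + 1) (insertAt p (i + 1) x) u₂ u₃ := by
  obtain ⟨ht, hne, hav, hp, h₂, h₃, hfirst⟩ := hs
  have hmid (hlt : i + 1 < t) : c (p i) x ≠ c x (p (i + 1)) := by
    have hpi : p (i + 1) ≠ p i := fun e => by
      have := hp.1 (Set.mem_Iio.2 hlt) (Set.mem_Iio.2 (by omega)) e; omega
    rw [hsym x]
    exact (hmono.isCenterEdge_of_eq hpi (hxp _ hlt) (hxp _ (by omega))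
      ((hnext hlt).trans (hsym _ _)).symm).2
  refine ⟨by omega, hne, fun j hj => ?_, hp.insertAt hxp hi ?_ ?_ ?_, ?_⟩
  · rcases insertAt_eq_or hi hj with h | ⟨k, hk, h⟩ <;> rw [h]
    exacts [⟨hx₂, hx₃⟩, hav k hk]
  · rintro k hk
    obtain rfl : k + 1 = i := by omega
    exact hprev k rfl
  · rintro k hk hlt
    obtain rfl : k = i := by omega
    exact hmid hlt
  · intro hle
    rw [hsym x, hnext (by omega)]
    exact hp.2 i (by omega)
  rw [insertAt_of_lt (Nat.succ_pos i)]
  refine ⟨h₂, h₃, fun _ => ?_⟩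
  rcases Nat.eq_zero_or_pos i with rfl | hpos
  · rw [insertAt_self]; exact hhead rfl
  · rw [insertAt_of_lt (by omega)]; exact hfirst (by omega)

lemma IsNiceShovel.exists_succ_or_head_eq (hsym : ∀ u v, c u v = c v u)
    (hmono : MonoC3Free n c) (hs : IsNiceShovel n c t p u₂ u₃) (hx₂ : x ≠ u₂) (hx₃ : x ≠ u₃)
    (hxp : ∀ j < t, p j ≠ x) :
    (∃ q, IsNiceShovel n c (t + 1) q u₂ u₃) ∨ c (p 0) x = c (p 0) u₂ ∨ c (p 0) x = c (p 0) u₃ := by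
  suffices ∀ i < t, (i + 1 < t → c (p (i + 1)) x = c (p i) (p (i + 1))) →
      (∃ q, IsNiceShovel n c (t + 1) q u₂ u₃) ∨
        c (p 0) x = c (p 0) u₂ ∨ c (p 0) x = c (p 0) u₃ from
    this (t - 1) (by have := hs.1; omega) (fun h => by omega)
  intro i
  induction i with
  | zero =>
    intro hi hnext
    by_cases hhead : c (p 0) x = c (p 0) u₂ ∨ c (p 0) x = c (p 0) u₃
    · exact .inr hhead
    rw [not_or] at hhead
    exact .inl ⟨_, hs.insertAt_succ hsym hmono hx₂ hx₃ hxp hi (by omega) hnext fun _ => hhead⟩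
  | succ k ih =>
    intro hi hnext
    by_cases hprev : c (p k) (p (k + 1)) = c (p (k + 1)) x
    · exact ih (by omega) fun _ => hprev.symm
    refine .inl ⟨_, hs.insertAt_succ hsym hmono hx₂ hx₃ hxp hi ?_ hnext (by omega)⟩
    rintro k' hk'
    obtain rfl : k' = k := by omega
    exact hprev

lemma IsPCPath.exists_isNiceShovel_succ_of_star (hsym : ∀ u v, c u v = c v u)
    (hmono : MonoC3Free n c) (hp : IsPCPath n c p t) (ht : 1 ≤ t) {α : ℕ}
    (hu₂ : c (p 0) u₂ = α) (hu₃ : c (p 0) u₃ = α) (hx : c (p 0) x = α)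
    (hfirst : 2 ≤ t → c (p 0) (p 1) ≠ α) (h₂₃ : u₂ ≠ u₃) (h₂x : u₂ ≠ x) (h₃x : u₃ ≠ x)
    (hav : ∀ j < t, p j ≠ u₂ ∧ p j ≠ u₃ ∧ p j ≠ x) :
    ∃ q a b, IsNiceShovel n c (t + 1) q a b := by
  obtain ⟨v, a, b, ⟨hv, hpv⟩, ⟨ha, hpa⟩, ⟨hb, hpb⟩, hva, hvb, hab, hcen⟩ :=
    hmono.exists_isCenterEdge hsym (fun w => c (p 0) w = α ∧ ∀ j < t, p j ≠ w)
      ⟨hu₂, fun j hj => (hav j hj).1⟩ ⟨hu₃, fun j hj => (hav j hj).2.1⟩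
      ⟨hx, fun j hj => (hav j hj).2.2⟩ h₂₃ h₃x h₂x
  have hv₀ : c v (p 0) = α := hsym v _ ▸ hv
  have hcen₀ (w : Fin n) (hw : c (p 0) w = α) (hpw : p 0 ≠ w) (hvw : v ≠ w) :
      c v (p 0) ≠ c v w := by
    rw [hsym v (p 0)]
    exact (hmono.isCenterEdge_of_eq (hpv 0 ht) hpw hvw (hv.trans hw.symm)).1.symm
  refine ⟨_, a, b, hp.isNiceShovel_insertAt_zero (fun j hj => ⟨hpv j hj, hpa j hj, hpb j hj⟩)
    hva hvb hab hcen (hcen₀ a ha (hpa 0 ht) hva) (hcen₀ b hb (hpb 0 ht) hvb) fun h => ?_⟩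
  rw [hv₀]
  exact (hfirst h).symm

lemma IsNiceShovel.exists_succ_of_head_eq (hsym : ∀ u v, c u v = c v u)
    (hmono : MonoC3Free n c) (hs : IsNiceShovel n c t p u₂ u₃) (hx₂ : x ≠ u₂) (hx₃ : x ≠ u₃)
    (hxp : ∀ j < t, p j ≠ x) (heq : c (p 0) x = c (p 0) u₂) :
    ∃ q a b, IsNiceShovel n c (t + 1) q a b := by
  have hs' := hs.replace_right hmono hx₂ hxp heq
  obtain ⟨ht, h₂₃, hav, hp, -, -, hfirst⟩ := hs
  rcases hs'.exists_succ_or_head_eq hsym hmono h₂₃.symm (Ne.symm hx₃)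
    (fun j hj => (hav j hj).2) with ⟨q, hq⟩ | h | h
  · exact ⟨q, u₂, x, hq⟩
  all_goals
    refine hp.exists_isNiceShovel_succ_of_star hsym hmono ht rfl ?_ heq (fun h => (hfirst h).1)
      h₂₃ hx₂.symm hx₃.symm fun j hj => ⟨(hav j hj).1, (hav j hj).2, hxp j hj⟩
  exacts [h, h.trans heq]

lemma IsNiceShovel.exists_succ (hsym : ∀ u v, c u v = c v u) (hmono : MonoC3Free n c)
    (hs : IsNiceShovel n c t p u₂ u₃) (hx₂ : x ≠ u₂) (hx₃ : x ≠ u₃) (hxp : ∀ j < t, p j ≠ x) :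
    ∃ q a b, IsNiceShovel n c (t + 1) q a b := by
  rcases hs.exists_succ_or_head_eq hsym hmono hx₂ hx₃ hxp with ⟨q, hq⟩ | h | h
  · exact ⟨q, u₂, u₃, hq⟩
  · exact hs.exists_succ_of_head_eq hsym hmono hx₂ hx₃ hxp h
  · exact (hs.symm hsym).exists_succ_of_head_eq hsym hmono hx₃ hx₂ hxp h

lemma IsNiceShovel.card_shovelVertices (hs : IsNiceShovel n c t p u₂ u₃) :
    #(shovelVertices t p u₂ u₃) = t + 2 := by
  obtain ⟨-, h₂₃, hav, hp, -⟩ := hs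
  rw [shovelVertices, card_insert_of_notMem, card_insert_of_notMem,
    card_image_of_injOn (by simpa using hp.1), card_range]
  · simpa using fun j hj => (hav j hj).2
  · simpa [h₂₃] using fun j hj => (hav j hj).1

lemma exists_isNiceShovel (hsym : ∀ u v, c u v = c v u) (hmono : MonoC3Free n c)
    (ht : 1 ≤ t) (htn : t + 2 ≤ n) : ∃ p u₂ u₃, IsNiceShovel n c t p u₂ u₃ := by
  induction t, ht using Nat.le_induction with
  | base =>
    obtain ⟨v, a, b, -, -, -, hva, hvb, hab, hcen⟩ := hmono.exists_isCenterEdge hsym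
      (fun _ => True) (x := ⟨0, by omega⟩) (y := ⟨1, by omega⟩) (z := ⟨2, by omega⟩)
      trivial trivial trivial (by simp [Fin.ext_iff]) (by simp [Fin.ext_iff])
      (by simp [Fin.ext_iff])
    exact ⟨_, a, b, isNiceShovel_one hva hvb hab hcen⟩
  | succ t _ ih =>
    obtain ⟨p, u₂, u₃, hs⟩ := ih (by omega)
    obtain ⟨x, -, hx⟩ := exists_mem_notMem_of_card_lt_card (t := univ)
      (by rw [hs.card_shovelVertices, card_univ, Fintype.card_fin]; omega)
    simp only [mem_shovelVertices, not_or, not_exists, not_and] at hx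
    exact hs.exists_succ hsym hmono hx.1 hx.2.1 hx.2.2

end Shovel

/-- Let `G` be a mono-`C3`-free edge-colored `K_n` with `n ≥ 3`.  Then
`G` contains a spanning subgraph which is a nice `(n-2)`-shovel. -/
theorem spanning_nice_shovel (n : ℕ) (c : Fin n → Fin n → ℕ)
    (hsym : ∀ u v, c u v = c v u) (hmono : MonoC3Free n c) (hn : 3 ≤ n) :
    ∃ (p : ℕ → Fin n) (u₂ u₃ : Fin n), IsNiceShovel n c (n - 2) p u₂ u₃ ∧
      ∀ x : Fin n, x = u₂ ∨ x = u₃ ∨ ∃ j < n - 2, p j = x := by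
  obtain ⟨p, u₂, u₃, hs⟩ := exists_isNiceShovel hsym hmono (t := n - 2) (by omega) (by omega)
  have hspan : shovelVertices (n - 2) p u₂ u₃ = univ :=
    eq_univ_of_card _ (by rw [hs.card_shovelVertices, Fintype.card_fin]; omega)
  exact ⟨p, u₂, u₃, hs, fun x => mem_shovelVertices.1 (hspan ▸ mem_univ x)⟩
end

section
/- Let G be a mono-C3-free edge-colored complete graph K_n. Let S and Y be vertex-disjoint subgraphs of G such that S = u_1 u_2 u_3 u_1 is a triangle with u_2 u_3 being a center edge and Y is either a nice shovel or a vertex set of size at most 2. Then G contains a properly colored path P = z_1 z_2 ⋯ z_ℓ such that V(P) = V(S) ∪ V(Y), z_1 = u_1, and col(z_1 z_2) ∈ {col(u_1 u_2), col(u_1 u_3)}. -/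
/-!
Walks are built by prepending vertices to a properly coloured tail; that they are paths is
checked only at the end, by counting vertices. Write `α = col(u₂u₃)` and `β = col(w₂w₃)`, where
`w₂w₃` is the centre edge of the shovel; a set `Y = {y, z}` is treated as a shovel whose path
is empty. If some edge between `{u₂, u₃}` and `{w₂, w₃}` has a colour other than `α` and `β`,
say `u₃w₂`, then `u₁u₂u₃w₂w₃` followed by the shovel path is properly coloured. Otherwise,
since no triangle is monochromatic, the cross edges alternate: up to swapping `w₂` and `w₃`,
`u₂w₂` and `u₃w₃` have colour `α` and `u₃w₂` has colour `β ≠ α`. Then `u₁u₂w₂u₃w₃` or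
`u₁u₂w₂w₃u₃` continues into the shovel path, unless `u₃` sees the first shovel vertex in the
colour of the first shovel edge; in that case `u₃` is absorbed into the shovel path (walk along
it while `u₃` sees each vertex in the colour of the next edge; where this first fails, or
before the last vertex, `u₃` can be inserted) and `u₁u₂w₂w₃` is followed by the result.
-/

open Set

section

variable {V : Type*}

def pathCons (a : V) (s : ℕ → V) : ℕ → V
  | 0 => a
  | k + 1 => s k

infixr:67 " ::ᵖ " => pathCons

theorem image_Iio_succ (s : ℕ → V) (t : ℕ) :
    s '' Iio (t + 1) = insert (s 0) ((fun k => s (k + 1)) '' Iio t) := by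
  ext x
  simp only [mem_image, mem_Iio, mem_insert_iff]
  constructor
  · rintro ⟨_ | j, hj, rfl⟩
    · exact Or.inl rfl
    · exact Or.inr ⟨j, by omega, rfl⟩
  · rintro (rfl | ⟨j, hj, rfl⟩)
    · exact ⟨0, by omega, rfl⟩
    · exact ⟨j + 1, by omega, rfl⟩

theorem image_pathCons_Iio (a : V) (s : ℕ → V) (t : ℕ) :
    (a ::ᵖ s) '' Iio (t + 1) = insert a (s '' Iio t) :=
  image_Iio_succ _ t

end

def IsPCWalk (n : ℕ) (c : Fin n → Fin n → ℕ) (p : ℕ → Fin n) (t : ℕ) : Prop :=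
  ∀ j : ℕ, j + 3 ≤ t → c (p j) (p (j + 1)) ≠ c (p (j + 1)) (p (j + 2))

section

variable {n : ℕ} {c : Fin n → Fin n → ℕ} {p q : ℕ → Fin n} {t : ℕ}

theorem IsPCWalk.cons {v : Fin n} (hp : IsPCWalk n c p t)
    (hv : 2 ≤ t → c v (p 0) ≠ c (p 0) (p 1)) : IsPCWalk n c (v ::ᵖ p) (t + 1)
  | 0, _ => hv (by omega)
  | j + 1, hj => hp j (by omega)

theorem IsPCWalk.cons₅ {z₀ z₁ z₂ z₃ z₄ : Fin n} (hq : IsPCWalk n c q t)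
    (h₀ : c z₀ z₁ ≠ c z₁ z₂) (h₁ : c z₁ z₂ ≠ c z₂ z₃) (h₂ : c z₂ z₃ ≠ c z₃ z₄)
    (h₃ : 1 ≤ t → c z₃ z₄ ≠ c z₄ (q 0)) (h₄ : 2 ≤ t → c z₄ (q 0) ≠ c (q 0) (q 1)) :
    IsPCWalk n c (z₀ ::ᵖ z₁ ::ᵖ z₂ ::ᵖ z₃ ::ᵖ z₄ ::ᵖ q) (t + 5) :=
  ((((hq.cons h₄).cons fun h => h₃ (by omega)).cons fun _ => h₂).cons fun _ => h₁).cons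
    fun _ => h₀

theorem IsPCPath.isPCWalk (hp : IsPCPath n c p t) : IsPCWalk n c p t := hp.2

theorem IsPCWalk.isPCPath (hp : IsPCWalk n c p t) (hcard : (p '' Iio t).ncard = t) :
    IsPCPath n c p t :=
  ⟨injOn_of_ncard_image_eq (by rwa [ncard_Iio_nat]), hp⟩

theorem IsPCPath.tail (hq : IsPCPath n c q (t + 1)) : IsPCPath n c (fun k => q (k + 1)) t :=
  ⟨fun _ hi _ hj h => Nat.succ_injective (hq.1 (Nat.succ_lt_succ hi) (Nat.succ_lt_succ hj) h),
    fun j _ => hq.2 (j + 1) (by omega)⟩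

theorem IsPCPath.exists_pcWalk_insert_after_head (hsym : ∀ u v, c u v = c v u)
    (hmono : MonoC3Free n c) {v : Fin n} (hq : IsPCPath n c q (t + 2)) (hv : v ∉ q '' Iio (t + 2))
    (hvq : c (q 0) v = c (q 0) (q 1)) (hnext : 1 ≤ t → c (q 1) v ≠ c (q 1) (q 2)) :
    ∃ r : ℕ → Fin n, r 0 = q 0 ∧ c (r 0) (r 1) = c (q 0) (q 1) ∧ IsPCWalk n c r (t + 3) ∧
      r '' Iio (t + 3) = insert v (q '' Iio (t + 2)) := by
  have hv₀ : q 0 ≠ v := fun h => hv ⟨0, by simp, h⟩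
  have hv₁ : q 1 ≠ v := fun h => hv ⟨1, by simp, h⟩
  have h₀₁ : q 0 ≠ q 1 := fun h =>
    zero_ne_one (hq.1 (show 0 < t + 2 by omega) (show 1 < t + 2 by omega) h)
  have hmid : c (q 0) (q 1) ≠ c (q 1) v := fun h => hmono _ _ _ h₀₁ hv₁ hv₀ ⟨h, hvq.symm⟩
  refine ⟨q 0 ::ᵖ v ::ᵖ fun k => q (k + 1), rfl, hvq, ?_, ?_⟩
  · refine (hq.tail.isPCWalk.cons fun h => ?_).cons fun _ => ?_
    · rw [hsym]; exact hnext (by omega)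
    · show c (q 0) v ≠ c v (q 1)
      rw [hvq, hsym v]; exact hmid
  · rw [image_pathCons_Iio, image_pathCons_Iio, image_Iio_succ q, insert_comm]

theorem IsPCPath.exists_pcWalk_absorb (hsym : ∀ u v, c u v = c v u) (hmono : MonoC3Free n c)
    {v : Fin n} (hq : IsPCPath n c q (t + 2)) (hv : v ∉ q '' Iio (t + 2))
    (hvq : c (q 0) v = c (q 0) (q 1)) :
    ∃ r : ℕ → Fin n, r 0 = q 0 ∧ c (r 0) (r 1) = c (q 0) (q 1) ∧ IsPCWalk n c r (t + 3) ∧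
      r '' Iio (t + 3) = insert v (q '' Iio (t + 2)) := by
  induction t generalizing q with
  | zero => exact hq.exists_pcWalk_insert_after_head hsym hmono hv hvq (by omega)
  | succ t ih =>
    by_cases hnext : c (q 1) v = c (q 1) (q 2)
    · rw [image_Iio_succ q] at hv ⊢
      obtain ⟨r, hr₀, hr₁, hr, himg⟩ := ih hq.tail (fun h => hv (mem_insert_of_mem _ h)) hnext
      refine ⟨q 0 ::ᵖ r, rfl, congrArg _ hr₀, hr.cons fun _ => ?_, ?_⟩
      · rw [hr₁, hr₀]; exact hq.2 0 (by omega)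
      · rw [image_pathCons_Iio, himg, insert_comm]
    · exact hq.exists_pcWalk_insert_after_head hsym hmono hv hvq fun _ => hnext

theorem exists_pcWalk_of_alternating (hsym : ∀ u v, c u v = c v u) (hmono : MonoC3Free n c)
    {u₁ u₂ u₃ w₂ w₃ : Fin n} (hq : IsPCPath n c q t) (hu₃w₃ : u₃ ≠ w₃)
    (hu₃ : u₃ ∉ q '' Iio t) (hw₃ : w₃ ∉ q '' Iio t)
    (h₁₂ : c u₁ u₂ ≠ c u₂ w₂) (hα : c u₃ w₃ = c u₂ w₂) (hβ : c u₃ w₂ = c w₂ w₃)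
    (hαβ : c u₂ w₂ ≠ c w₂ w₃) (hnice : 2 ≤ t → c (q 0) (q 1) ≠ c (q 0) w₃) :
    ∃ p : ℕ → Fin n, p 0 = u₁ ∧ p 1 = u₂ ∧ IsPCWalk n c p (t + 5) ∧
      p '' Iio (t + 5) = {u₁, u₂, u₃} ∪ ({w₂, w₃} ∪ q '' Iio t) := by
  by_cases hA : 1 ≤ t → c w₃ (q 0) ≠ c u₂ w₂
  · refine ⟨u₁ ::ᵖ u₂ ::ᵖ w₂ ::ᵖ u₃ ::ᵖ w₃ ::ᵖ q, rfl, rfl,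
      hq.isPCWalk.cons₅ h₁₂ ?_ ?_ (fun h => ?_) (fun h => ?_), ?_⟩
    · rw [hsym w₂, hβ]; exact hαβ
    · rw [hsym w₂, hβ, hα]; exact hαβ.symm
    · rw [hα]; exact (hA h).symm
    · rw [hsym w₃]; exact (hnice h).symm
    · simp only [image_pathCons_Iio]; ext; simp only [mem_insert_iff, mem_union]; tauto
  push Not at hA
  obtain ⟨ht, hw₃q⟩ := hA
  have hu₃q : c u₃ (q 0) ≠ c u₂ w₂ := fun h =>
    hmono w₃ u₃ (q 0) hu₃w₃.symm (fun h' => hu₃ ⟨0, ht, h'.symm⟩)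
      (fun h' => hw₃ ⟨0, ht, h'.symm⟩) ⟨by rw [hsym, hα, h], by rw [hsym, hα, hw₃q]⟩
  by_cases hB : 2 ≤ t → c u₃ (q 0) ≠ c (q 0) (q 1)
  · refine ⟨u₁ ::ᵖ u₂ ::ᵖ w₂ ::ᵖ w₃ ::ᵖ u₃ ::ᵖ q, rfl, rfl,
      hq.isPCWalk.cons₅ h₁₂ hαβ ?_ (fun _ => ?_) hB, ?_⟩
    · rw [hsym w₃, hα]; exact hαβ.symm
    · rw [hsym w₃, hα]; exact hu₃q.symm
    · simp only [image_pathCons_Iio]; ext; simp only [mem_insert_iff, mem_union]; tauto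
  push Not at hB
  obtain ⟨ht₂, hγ⟩ := hB
  obtain ⟨t, rfl⟩ : ∃ t', t = t' + 2 := ⟨t - 2, by omega⟩
  obtain ⟨r, hr₀, hr₁, hr, himg⟩ := hq.exists_pcWalk_absorb hsym hmono hu₃ (by rw [hsym]; exact hγ)
  refine ⟨u₁ ::ᵖ u₂ ::ᵖ w₂ ::ᵖ w₃ ::ᵖ r, rfl, rfl,
    (((hr.cons fun _ => ?_).cons fun _ => ?_).cons fun _ => hαβ).cons fun _ => h₁₂, ?_⟩
  · rw [hr₁, hr₀, hsym w₃]; exact (hnice ht₂).symm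
  · show c w₂ w₃ ≠ c w₃ (r 0)
    rw [hr₀, hw₃q]; exact hαβ.symm
  · simp only [image_pathCons_Iio, himg]; ext; simp only [mem_insert_iff, mem_union]; tauto

theorem exists_pcWalk_of_cross_edge (hsym : ∀ u v, c u v = c v u)
    {u₁ u₂ u₃ w₂ w₃ : Fin n} (hq : IsPCWalk n c q t) (hcen : c u₂ u₃ ≠ c u₁ u₂)
    (hα : c u₃ w₂ ≠ c u₂ u₃) (hβ : c u₃ w₂ ≠ c w₂ w₃)
    (hcenter : 1 ≤ t → c w₂ w₃ ≠ c (q 0) w₃) (hnice : 2 ≤ t → c (q 0) (q 1) ≠ c (q 0) w₃) :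
    ∃ p : ℕ → Fin n, p 0 = u₁ ∧ p 1 = u₂ ∧ IsPCWalk n c p (t + 5) ∧
      p '' Iio (t + 5) = {u₁, u₂, u₃} ∪ ({w₂, w₃} ∪ q '' Iio t) := by
  refine ⟨u₁ ::ᵖ u₂ ::ᵖ u₃ ::ᵖ w₂ ::ᵖ w₃ ::ᵖ q, rfl, rfl,
    hq.cons₅ hcen.symm hα.symm hβ (fun h => ?_) (fun h => ?_), ?_⟩
  · rw [hsym w₃]; exact hcenter h
  · rw [hsym w₃]; exact (hnice h).symm
  · simp only [image_pathCons_Iio, insert_union, singleton_union]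

theorem exists_pcWalk_of_exists_cross_edge (hsym : ∀ u v, c u v = c v u)
    {u₁ u₂ u₃ w₂ w₃ : Fin n} (hq : IsPCWalk n c q t)
    (hcen : c u₂ u₃ ≠ c u₁ u₂ ∧ c u₂ u₃ ≠ c u₁ u₃)
    (hcenter : 1 ≤ t → c w₂ w₃ ≠ c (q 0) w₂ ∧ c w₂ w₃ ≠ c (q 0) w₃)
    (hnice : 2 ≤ t → c (q 0) (q 1) ≠ c (q 0) w₂ ∧ c (q 0) (q 1) ≠ c (q 0) w₃)
    (hcross : ∃ b ∈ ({u₂, u₃} : Set (Fin n)), ∃ x ∈ ({w₂, w₃} : Set (Fin n)),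
      c b x ≠ c u₂ u₃ ∧ c b x ≠ c w₂ w₃) :
    ∃ p : ℕ → Fin n, p 0 = u₁ ∧ (p 1 = u₂ ∨ p 1 = u₃) ∧ IsPCWalk n c p (t + 5) ∧
      p '' Iio (t + 5) = {u₁, u₂, u₃} ∪ ({w₂, w₃} ∪ q '' Iio t) := by
  obtain ⟨b, hb, x, hx, hα, hβ⟩ := hcross
  simp only [mem_insert_iff, mem_singleton_iff] at hb hx
  have hcen₃ : c u₃ u₂ ≠ c u₁ u₃ := by rw [hsym u₃]; exact hcen.2
  have hcenter₂ (h : 1 ≤ t) : c w₃ w₂ ≠ c (q 0) w₂ := by rw [hsym w₃]; exact (hcenter h).1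
  rcases hb with hb | hb <;> rcases hx with hx | hx <;> subst b x
  · obtain ⟨p, h₀, h₁, hp, himg⟩ := exists_pcWalk_of_cross_edge hsym hq (u₂ := u₃) (u₃ := u₂)
      hcen₃ (by rwa [hsym u₃]) hβ (fun h => (hcenter h).2) (fun h => (hnice h).2)
    exact ⟨p, h₀, Or.inr h₁, hp, by rw [himg, pair_comm u₃]⟩
  · obtain ⟨p, h₀, h₁, hp, himg⟩ := exists_pcWalk_of_cross_edge hsym hq (u₂ := u₃) (u₃ := u₂)
      (w₂ := w₃) (w₃ := w₂) hcen₃ (by rwa [hsym u₃]) (by rwa [hsym w₃]) hcenter₂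
      (fun h => (hnice h).1)
    exact ⟨p, h₀, Or.inr h₁, hp, by rw [himg, pair_comm u₃, pair_comm w₃]⟩
  · obtain ⟨p, h₀, h₁, hp, himg⟩ := exists_pcWalk_of_cross_edge hsym hq hcen.1 hα hβ
      (fun h => (hcenter h).2) (fun h => (hnice h).2)
    exact ⟨p, h₀, Or.inl h₁, hp, himg⟩
  · obtain ⟨p, h₀, h₁, hp, himg⟩ := exists_pcWalk_of_cross_edge hsym hq (w₂ := w₃) (w₃ := w₂)
      hcen.1 hα (by rwa [hsym w₃]) hcenter₂ (fun h => (hnice h).1)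
    exact ⟨p, h₀, Or.inl h₁, hp, by rw [himg, pair_comm w₃]⟩

theorem exists_pcWalk_through_triangle_and_tail (hsym : ∀ u v, c u v = c v u)
    (hmono : MonoC3Free n c) {u₁ u₂ u₃ w₂ w₃ : Fin n} (h₂₃ : u₂ ≠ u₃)
    (hcen : c u₂ u₃ ≠ c u₁ u₂ ∧ c u₂ u₃ ≠ c u₁ u₃) (hw : w₂ ≠ w₃) (hq : IsPCPath n c q t)
    (hwq : ∀ j < t, q j ≠ w₂ ∧ q j ≠ w₃) (hu₂ : u₂ ∉ ({w₂, w₃} : Set (Fin n)))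
    (hu₃ : u₃ ∉ {w₂, w₃} ∪ q '' Iio t)
    (hcenter : 1 ≤ t → c w₂ w₃ ≠ c (q 0) w₂ ∧ c w₂ w₃ ≠ c (q 0) w₃)
    (hnice : 2 ≤ t → c (q 0) (q 1) ≠ c (q 0) w₂ ∧ c (q 0) (q 1) ≠ c (q 0) w₃) :
    ∃ p : ℕ → Fin n, p 0 = u₁ ∧ (p 1 = u₂ ∨ p 1 = u₃) ∧ IsPCWalk n c p (t + 5) ∧
      p '' Iio (t + 5) = {u₁, u₂, u₃} ∪ ({w₂, w₃} ∪ q '' Iio t) := by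
  by_cases hcross : ∃ b ∈ ({u₂, u₃} : Set (Fin n)), ∃ x ∈ ({w₂, w₃} : Set (Fin n)),
      c b x ≠ c u₂ u₃ ∧ c b x ≠ c w₂ w₃
  · exact exists_pcWalk_of_exists_cross_edge hsym hq.isPCWalk hcen hcenter hnice hcross
  push Not at hcross
  simp only [mem_union, mem_insert_iff, mem_singleton_iff, not_or] at hu₂ hu₃
  obtain ⟨hu₂w₂, hu₂w₃⟩ := hu₂
  obtain ⟨⟨hu₃w₂, hu₃w₃⟩, hu₃q⟩ := hu₃
  have hβ {b x} (hb : b = u₂ ∨ b = u₃) (hx : x = w₂ ∨ x = w₃) (h : c b x ≠ c u₂ u₃) :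
      c b x = c w₂ w₃ := hcross b (by simpa using hb) x (by simpa using hx) h
  have hcol {x} (h₂ : u₂ ≠ x) (h₃ : u₃ ≠ x) (hx : c u₂ x = c u₂ u₃) : c u₃ x ≠ c u₂ u₃ :=
    fun h => hmono u₂ u₃ x h₂₃ h₃ h₂ ⟨h.symm, hx.symm⟩
  have hrow {b} (h₂ : b ≠ w₂) (h₃ : b ≠ w₃) : ¬(c b w₂ = c w₂ w₃ ∧ c b w₃ = c w₂ w₃) :=
    fun ⟨hb₂, hb₃⟩ => hmono w₂ w₃ b hw h₃.symm h₂.symm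
      ⟨by rw [hsym w₃ b, hb₃], by rw [hsym w₂ b, hb₂]⟩
  by_cases hα : c u₂ w₂ = c u₂ u₃
  · have h₃₂ : c u₃ w₂ = c w₂ w₃ := hβ (.inr rfl) (.inl rfl) (hcol hu₂w₂ hu₃w₂ hα)
    have h₃₃ : c u₃ w₃ = c u₂ u₃ := by
      by_contra h
      exact hrow hu₃w₂ hu₃w₃ ⟨h₃₂, hβ (.inr rfl) (.inr rfl) h⟩
    have hαβ : c u₂ w₂ ≠ c w₂ w₃ := fun h => hcol hu₂w₂ hu₃w₂ hα (h₃₂.trans (h.symm.trans hα))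
    obtain ⟨p, h₀, h₁, hp, himg⟩ := exists_pcWalk_of_alternating hsym hmono hq hu₃w₃ hu₃q
      (fun ⟨j, hj, h⟩ => (hwq j hj).2 h) (hα ▸ hcen.1.symm) (h₃₃.trans hα.symm) h₃₂ hαβ
      (fun h => (hnice h).2)
    exact ⟨p, h₀, Or.inl h₁, hp, himg⟩
  · have h₂₂ : c u₂ w₂ = c w₂ w₃ := hβ (.inl rfl) (.inl rfl) hα
    have h₂₃ : c u₂ w₃ = c u₂ u₃ := by
      by_contra h
      exact hrow hu₂w₂ hu₂w₃ ⟨h₂₂, hβ (.inl rfl) (.inr rfl) h⟩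
    have h₃₃ : c u₃ w₃ = c w₂ w₃ := hβ (.inr rfl) (.inr rfl) (hcol hu₂w₃ hu₃w₃ h₂₃)
    have h₃₂ : c u₃ w₂ = c u₂ u₃ := by
      by_contra h
      exact hrow hu₃w₂ hu₃w₃ ⟨hβ (.inr rfl) (.inl rfl) h, h₃₃⟩
    have hαβ : c u₂ w₃ ≠ c w₃ w₂ := fun h => hα (h₂₂.trans (hsym w₂ w₃ ▸ h.symm.trans h₂₃))
    obtain ⟨p, h₀, h₁, hp, himg⟩ := exists_pcWalk_of_alternating hsym hmono hq hu₃w₂ hu₃q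
      (fun ⟨j, hj, h⟩ => (hwq j hj).1 h) (h₂₃ ▸ hcen.1.symm) (h₃₂.trans h₂₃.symm)
      (by rw [h₃₃, hsym]) hαβ (fun h => (hnice h).1)
    exact ⟨p, h₀, Or.inl h₁, hp, by rw [himg, pair_comm w₃]⟩

theorem exists_pcWalk_through_triangle_and_shovel (hsym : ∀ u v, c u v = c v u)
    (hmono : MonoC3Free n c) {u₁ u₂ u₃ w₂ w₃ : Fin n} (h₂₃ : u₂ ≠ u₃)
    (hcen : c u₂ u₃ ≠ c u₁ u₂ ∧ c u₂ u₃ ≠ c u₁ u₃) {Y : Finset (Fin n)} (hu₂ : u₂ ∉ Y)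
    (hu₃ : u₃ ∉ Y) (hshovel : IsNiceShovel n c t q w₂ w₃)
    (hY : ∀ x, x ∈ Y ↔ (x = w₂ ∨ x = w₃ ∨ ∃ j < t, q j = x)) :
    ∃ p : ℕ → Fin n, p 0 = u₁ ∧ (p 1 = u₂ ∨ p 1 = u₃) ∧ IsPCWalk n c p (3 + Y.card) ∧
      p '' Iio (3 + Y.card) = {u₁, u₂, u₃} ∪ ↑Y := by
  obtain ⟨-, hw, hwq, hq, hs₂, hs₃, hnice⟩ := hshovel
  have hYset : (Y : Set (Fin n)) = {w₂, w₃} ∪ q '' Iio t := by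
    ext x
    simp [hY, or_assoc]
  have hcard : Y.card = t + 2 := by
    rw [← ncard_coe_finset, hYset, ncard_union_eq, ncard_pair hw, hq.1.ncard_image,
      ncard_Iio_nat, add_comm]
    simp only [disjoint_insert_left, disjoint_singleton_left]
    exact ⟨fun ⟨j, hj, h⟩ => (hwq j hj).1 h, fun ⟨j, hj, h⟩ => (hwq j hj).2 h⟩
  rw [hcard, show 3 + (t + 2) = t + 5 by omega, hYset]
  rw [← Finset.mem_coe, hYset] at hu₂ hu₃
  exact exists_pcWalk_through_triangle_and_tail hsym hmono h₂₃ hcen hw hq hwq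
    (fun h => hu₂ (mem_union_left _ h)) hu₃ (fun _ => ⟨hs₂, hs₃⟩) hnice

theorem exists_pcWalk_through_triangle_and_vertex (hsym : ∀ u v, c u v = c v u)
    (hmono : MonoC3Free n c) {u₁ u₂ u₃ y : Fin n} (h₂₃ : u₂ ≠ u₃)
    (hcen : c u₂ u₃ ≠ c u₁ u₂ ∧ c u₂ u₃ ≠ c u₁ u₃) (hu₂ : u₂ ≠ y) (hu₃ : u₃ ≠ y) :
    ∃ p : ℕ → Fin n, p 0 = u₁ ∧ (p 1 = u₂ ∨ p 1 = u₃) ∧ IsPCWalk n c p 4 ∧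
      p '' Iio 4 = {u₁, u₂, u₃, y} := by
  have hwalk {a b : Fin n} (h₀ : c u₁ a ≠ c a b) (h₁ : c a b ≠ c b y) :
      IsPCWalk n c (u₁ ::ᵖ a ::ᵖ b ::ᵖ fun _ => y) 4 := fun j hj => by
    obtain rfl | rfl : j = 0 ∨ j = 1 := by omega
    exacts [h₀, h₁]
  by_cases h₃ : c u₃ y = c u₂ u₃
  · have h₂ : c u₂ y ≠ c u₂ u₃ := fun h₂ => hmono u₂ u₃ y h₂₃ hu₃ hu₂ ⟨h₃.symm, h₂.symm⟩
    refine ⟨_, rfl, Or.inr rfl, hwalk (by rw [hsym u₃]; exact hcen.2.symm)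
      (by rw [hsym u₃]; exact h₂.symm), ?_⟩
    simp [image_pathCons_Iio, insert_comm u₃ u₂]
  · exact ⟨_, rfl, Or.inl rfl, hwalk hcen.1.symm (Ne.symm h₃), by simp [image_pathCons_Iio]⟩

theorem exists_pcWalk_through_triangle_and_small (hsym : ∀ u v, c u v = c v u)
    (hmono : MonoC3Free n c) {u₁ u₂ u₃ : Fin n} (h₂₃ : u₂ ≠ u₃)
    (hcen : c u₂ u₃ ≠ c u₁ u₂ ∧ c u₂ u₃ ≠ c u₁ u₃) {Y : Finset (Fin n)} (hY : Y.card ≤ 2)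
    (hu₂ : u₂ ∉ Y) (hu₃ : u₃ ∉ Y) :
    ∃ p : ℕ → Fin n, p 0 = u₁ ∧ (p 1 = u₂ ∨ p 1 = u₃) ∧ IsPCWalk n c p (3 + Y.card) ∧
      p '' Iio (3 + Y.card) = {u₁, u₂, u₃} ∪ ↑Y := by
  obtain h | h | h : Y.card = 0 ∨ Y.card = 1 ∨ Y.card = 2 := by omega
  · obtain rfl := Finset.card_eq_zero.1 h
    refine ⟨u₁ ::ᵖ u₂ ::ᵖ fun _ => u₃, rfl, Or.inl rfl, fun j hj => ?_, ?_⟩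
    · obtain rfl : j = 0 := by simp at hj; omega
      exact hcen.1.symm
    · simp [image_pathCons_Iio]
  · obtain ⟨y, rfl⟩ := Finset.card_eq_one.1 h
    simp only [Finset.mem_singleton] at hu₂ hu₃
    simpa only [Finset.card_singleton, Finset.coe_singleton, insert_union, singleton_union] using
      exists_pcWalk_through_triangle_and_vertex hsym hmono h₂₃ hcen hu₂ hu₃
  · obtain ⟨y, z, hyz, rfl⟩ := Finset.card_eq_two.1 h
    simp only [Finset.mem_insert, Finset.mem_singleton, not_or] at hu₂ hu₃
    simpa [Finset.card_pair hyz] using exists_pcWalk_through_triangle_and_tail hsym hmono h₂₃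
      hcen hyz (t := 0) (q := fun _ => y) ⟨by simp, fun j hj => by omega⟩ (fun j hj => by omega)
      (by simpa using hu₂) (by simpa using hu₃) (by omega) (by omega)

end

/-- Let `G` be a mono-`C3`-free edge-colored `K_n`.  Let `S` and `Y` be
vertex-disjoint subgraphs of `G`, where `S = u₁u₂u₃u₁` is a triangle with `u₂u₃` a center
edge and `Y` (with vertex set the finset `Y`) is either a vertex set of size at most `2`
or a nice shovel.  Then `G` contains a properly colored path `P` starting at `u₁`, with
vertex set `V(S) ∪ V(Y)`, whose first edge has color `col(u₁u₂)` or `col(u₁u₃)`. -/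
theorem pc_path_through_triangle_and_shovel (n : ℕ) (c : Fin n → Fin n → ℕ)
    (hsym : ∀ u v, c u v = c v u) (hmono : MonoC3Free n c)
    (u₁ u₂ u₃ : Fin n) (h12 : u₁ ≠ u₂) (h13 : u₁ ≠ u₃) (h23 : u₂ ≠ u₃)
    (hcen : c u₂ u₃ ≠ c u₁ u₂ ∧ c u₂ u₃ ≠ c u₁ u₃)
    (Y : Finset (Fin n)) (hd1 : u₁ ∉ Y) (hd2 : u₂ ∉ Y) (hd3 : u₃ ∉ Y)
    (hY : Y.card ≤ 2 ∨
      ∃ (t : ℕ) (q : ℕ → Fin n) (w₂ w₃ : Fin n), IsNiceShovel n c t q w₂ w₃ ∧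
        ∀ x : Fin n, x ∈ Y ↔ (x = w₂ ∨ x = w₃ ∨ ∃ j < t, q j = x)) :
    ∃ p : ℕ → Fin n, p 0 = u₁ ∧ IsPCPath n c p (3 + Y.card) ∧
      (c (p 0) (p 1) = c u₁ u₂ ∨ c (p 0) (p 1) = c u₁ u₃) ∧
      ∀ x : Fin n, (∃ j < 3 + Y.card, p j = x) ↔ (x = u₁ ∨ x = u₂ ∨ x = u₃ ∨ x ∈ Y) := by
  obtain ⟨p, hp₀, hp₁, hp, himg⟩ : ∃ p : ℕ → Fin n, p 0 = u₁ ∧ (p 1 = u₂ ∨ p 1 = u₃) ∧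
      IsPCWalk n c p (3 + Y.card) ∧ p '' Iio (3 + Y.card) = {u₁, u₂, u₃} ∪ ↑Y := by
    rcases hY with hY | ⟨t, q, w₂, w₃, hshovel, hYq⟩
    · exact exists_pcWalk_through_triangle_and_small hsym hmono h23 hcen hY hd2 hd3
    · exact exists_pcWalk_through_triangle_and_shovel hsym hmono h23 hcen hd2 hd3 hshovel hYq
  have hcard : ({u₁, u₂, u₃} ∪ ↑Y : Set (Fin n)).ncard = 3 + Y.card := by
    simp only [insert_union, singleton_union]
    rw [ncard_insert_of_notMem, ncard_insert_of_notMem, ncard_insert_of_notMem, ncard_coe_finset]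
    · omega
    all_goals simp [h12, h13, h23, hd1, hd2, hd3]
  refine ⟨p, hp₀, hp.isPCPath (by rw [himg, hcard]), ?_, fun x => ?_⟩
  · rcases hp₁ with h | h <;> simp [hp₀, h]
  · simpa [or_assoc] using congrArg (x ∈ ·) himg
end

section
/- Let D be a strongly connected mono-C3-free tournament with |V(D)| ≥ 4. Then each vertex of D is contained in directed cycles of every length from 4 to |V(D)|. -/
/-- A mono-`C3`-free tournament: a multipartite tournament (an orientation of a complete
multipartite graph) whose partite sets have at most `2` vertices, such that distinct
vertices of a common partite set have no common out-neighbor.  Since partite sets have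
size at most `2`, this amounts to: `A` is irreflexive and asymmetric, the non-adjacency
relation among distinct vertices forms a matching (no two incident non-edges), and two
distinct non-adjacent vertices (i.e. vertices of a common partite set of size `2`) have
no common out-neighbor. -/
def IsMonoC3FreeTournament {V : Type*} (A : V → V → Prop) : Prop :=
  (∀ v, ¬A v v) ∧
  (∀ u v, A u v → ¬A v u) ∧
  (∀ u v w, u ≠ v → v ≠ w → u ≠ w → ¬A u v → ¬A v u → A v w ∨ A w v) ∧
  (∀ x y, x ≠ y → ¬A x y → ¬A y x → ∀ z, ¬(A x z ∧ A y z))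

namespace MonoC3

variable {V : Type*} (A : V → V → Prop)

def IsCyc (k : ℕ) (w : ℕ → V) : Prop :=
  Set.InjOn w (Set.Iio k) ∧ ∀ i < k, A (w i) (w ((i + 1) % k))

variable {A}

lemma mod_cancel {k i j r : ℕ} (hi : i < k) (hj : j < k)
    (h : (i + r) % k = (j + r) % k) : i = j := by
  have h2 : i % k = j % k := Nat.ModEq.add_right_cancel' r h
  rwa [Nat.mod_eq_of_lt hi, Nat.mod_eq_of_lt hj] at h2

lemma IsCyc.rot {k : ℕ} {w : ℕ → V} (h : IsCyc A k w) (r : ℕ) :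
    IsCyc A k (fun i => w ((i + r) % k)) := by
  rcases k.eq_zero_or_pos with rfl | hk
  · exact ⟨fun i hi => by simp at hi, fun i hi => by omega⟩
  constructor
  · intro i hi j hj hij
    simp only [Set.mem_Iio] at hi hj
    have := h.1 (Set.mem_Iio.2 (Nat.mod_lt _ hk : (i + r) % k < k))
      (Set.mem_Iio.2 (Nat.mod_lt _ hk : (j + r) % k < k)) hij
    exact mod_cancel hi hj this
  · intro i hi
    have hlt : (i + r) % k < k := Nat.mod_lt _ hk
    have harc := h.2 _ hlt
    have heq : ((i + 1) % k + r) % k = ((i + r) % k + 1) % k := by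
      rw [Nat.mod_add_mod, Nat.mod_add_mod]
      congr 1
      omega
    simpa [heq] using harc

lemma rot_index {k r i0 : ℕ} (hi0 : i0 < k) : ∃ i < k, (i + r) % k = i0 := by
  have hk : 0 < k := lt_of_le_of_lt (Nat.zero_le _) hi0
  refine ⟨(i0 + (k - r % k)) % k, Nat.mod_lt _ hk, ?_⟩
  rw [Nat.mod_add_mod]
  obtain ⟨c, hc⟩ : ∃ c, r = r % k + k * c := ⟨r / k, (Nat.mod_add_div r k).symm⟩
  have hr : r % k < k := Nat.mod_lt _ hk
  have h2 : i0 + (k - r % k) + r = i0 + k * c + k := by omega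
  rw [h2, Nat.add_mod_right, Nat.add_mul_mod_self_left, Nat.mod_eq_of_lt hi0]

lemma reach_closed {X : Set V} (hX : ∀ a ∈ X, ∀ b, A a b → b ∈ X) {u v : V}
    (hu : u ∈ X) (h : Relation.ReflTransGen A u v) : v ∈ X := by
  induction h with
  | refl => exact hu
  | tail _ hab ih => exact hX _ ih _ hab

lemma dichotomy (hD : IsMonoC3FreeTournament A) {k : ℕ} {w : ℕ → V}
    (hcyc : IsCyc A k w) {u : V} (hu : ∀ i < k, w i ≠ u)
    (hno : ∀ c < k, ¬(A (w c) u ∧ A u (w ((c + 1) % k)))) :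
    (∀ i < k, A u (w i)) ∨ (∀ i < k, ¬ A u (w i)) := by
  classical
  obtain ⟨hirr, hasym, htot, hcom⟩ := hD
  by_contra hcon
  push_neg at hcon
  obtain ⟨⟨i0, hi0k, hi0⟩, ⟨j0, hj0k, hj0⟩⟩ := hcon
  have hk : 0 < k := lt_of_le_of_lt (Nat.zero_le _) hi0k
  have hex : ∃ j, i0 ≤ j ∧ A u (w (j % k)) := by
    refine ⟨j0 + k, by omega, ?_⟩
    rw [Nat.add_mod_right, Nat.mod_eq_of_lt hj0k]
    exact hj0
  set j := Nat.find hex with hjdef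
  obtain ⟨hij, hAj⟩ := Nat.find_spec hex
  rw [← hjdef] at hij hAj
  have hj_ne : j ≠ i0 := by
    intro h
    rw [h, Nat.mod_eq_of_lt hi0k] at hAj
    exact hi0 hAj
  have hji : i0 < j := lt_of_le_of_ne hij (Ne.symm hj_ne)
  have hnotc := Nat.find_min hex (show j - 1 < j by omega)
  have hnAc : ¬ A u (w ((j - 1) % k)) := fun h => hnotc ⟨by omega, h⟩
  have hck : (j - 1) % k < k := Nat.mod_lt _ hk
  have harc := hcyc.2 _ hck
  have hmod : ((j - 1) % k + 1) % k = j % k := by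
    rw [Nat.mod_add_mod]
    congr 1
    omega
  have hAu : A u (w (((j - 1) % k + 1) % k)) := by rw [hmod]; exact hAj
  by_cases hwc : A (w ((j - 1) % k)) u
  · exact hno ((j - 1) % k) hck ⟨hwc, hAu⟩
  · have hne : u ≠ w ((j - 1) % k) := fun h => hu _ hck h.symm
    exact hcom u (w ((j - 1) % k)) hne hnAc hwc _ ⟨hAu, harc⟩

lemma extend [Fintype V] (hD : IsMonoC3FreeTournament A)
    (hstrong : ∀ u v : V, Relation.ReflTransGen A u v)
    {k : ℕ} {w : ℕ → V} {v : V} (hcyc : IsCyc A k w) (h3 : 3 ≤ k)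
    (hlt : k < Fintype.card V) (hv : ∃ i < k, w i = v) :
    ∃ w', IsCyc A (k + 1) w' ∧ ∃ i < k + 1, w' i = v := by
  classical
  obtain ⟨hirr, hasym, htot, hcom⟩ := hD
  have hk : 0 < k := by omega
  obtain ⟨i0, hi0k, hi0v⟩ := hv
  -- an outside vertex exists
  obtain ⟨u0, hu0⟩ : ∃ u : V, ∀ i < k, w i ≠ u := by
    by_contra hno
    push_neg at hno
    have hsub : (Finset.univ : Finset V) ⊆ (Finset.range k).image w := by
      intro u _
      obtain ⟨i, hik, hiw⟩ := hno u
      exact Finset.mem_image.2 ⟨i, Finset.mem_range.2 hik, hiw⟩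
    have h1 : Fintype.card V ≤ ((Finset.range k).image w).card := by
      simpa using Finset.card_le_card hsub
    have h2 := Finset.card_image_le (s := Finset.range k) (f := w)
    rw [Finset.card_range] at h2
    omega
  by_cases hins : ∃ u, (∀ i < k, w i ≠ u) ∧ ∃ c < k, A (w c) u ∧ A u (w ((c + 1) % k))
  · -- insertion case
    obtain ⟨u, hu, c, hck, h1, h2⟩ := hins
    set w₂ : ℕ → V := fun i => w ((i + c) % k) with hw₂
    have hcyc₂ : IsCyc A k w₂ := hcyc.rot c
    have hu₂ : ∀ i, i < k → w₂ i ≠ u := fun i _ => hu _ (Nat.mod_lt _ hk)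
    have hw20 : w₂ 0 = w c := by simp [hw₂, Nat.mod_eq_of_lt hck]
    have hw21 : w₂ 1 = w ((c + 1) % k) := by simp [hw₂, Nat.add_comm]
    set W : ℕ → V := fun i => if i = 0 then w₂ 0 else if i = 1 then u else w₂ (i - 1)
      with hW
    have e0 : W 0 = w₂ 0 := rfl
    have e1 : W 1 = u := rfl
    have e2 : ∀ i, 2 ≤ i → W i = w₂ (i - 1) := by
      intro i h
      have h0 : i ≠ 0 := by omega
      have h1 : i ≠ 1 := by omega
      simp [hW, h0, h1]
    refine ⟨W, ⟨?_, ?_⟩, ?_⟩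
    · intro a ha b hb hab
      simp only [Set.mem_Iio] at ha hb
      have hinj := hcyc₂.1
      rcases (by omega : a = 0 ∨ a = 1 ∨ 2 ≤ a) with rfl | rfl | ha2 <;>
        rcases (by omega : b = 0 ∨ b = 1 ∨ 2 ≤ b) with rfl | rfl | hb2
      · rfl
      · rw [e0, e1] at hab; exact absurd hab (hu₂ 0 hk)
      · rw [e0, e2 b hb2] at hab
        have := hinj (Set.mem_Iio.2 hk) (Set.mem_Iio.2 (show b - 1 < k by omega)) hab
        omega
      · rw [e1, e0] at hab; exact absurd hab.symm (hu₂ 0 hk)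
      · rfl
      · rw [e1, e2 b hb2] at hab
        exact absurd hab.symm (hu₂ (b - 1) (by omega))
      · rw [e2 a ha2, e0] at hab
        have := hinj (Set.mem_Iio.2 (show a - 1 < k by omega)) (Set.mem_Iio.2 hk) hab
        omega
      · rw [e2 a ha2, e1] at hab
        exact absurd hab (hu₂ (a - 1) (by omega))
      · rw [e2 a ha2, e2 b hb2] at hab
        have := hinj (Set.mem_Iio.2 (show a - 1 < k by omega))
          (Set.mem_Iio.2 (show b - 1 < k by omega)) hab
        omega
    · intro i hik
      rcases (by omega : i = 0 ∨ i = 1 ∨ (2 ≤ i ∧ i < k) ∨ i = k) with rfl | rfl | ⟨hi2, hikk⟩ | hik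
      · rw [Nat.mod_eq_of_lt (show 0 + 1 < k + 1 by omega), e0, e1, hw20]
        exact h1
      · rw [Nat.mod_eq_of_lt (show 1 + 1 < k + 1 by omega), e1, e2 2 (by omega)]
        rw [show (2 : ℕ) - 1 = 1 from rfl, hw21]
        exact h2
      · rw [Nat.mod_eq_of_lt (show i + 1 < k + 1 by omega), e2 i hi2, e2 (i + 1) (by omega)]
        have harc := hcyc₂.2 (i - 1) (by omega)
        rw [show i - 1 + 1 = i by omega, Nat.mod_eq_of_lt hikk] at harc
        rw [show i + 1 - 1 = i by omega]
        exact harc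
      · rw [hik, Nat.mod_self, e0, e2 k (by omega)]
        have harc := hcyc₂.2 (k - 1) (by omega)
        rw [show k - 1 + 1 = k by omega, Nat.mod_self] at harc
        exact harc
    · obtain ⟨i1, hi1k, hi1⟩ := rot_index (r := c) hi0k
      have hv₂ : w₂ i1 = v := by rw [hw₂]; simp only []; rw [hi1]; exact hi0v
      refine ⟨if i1 = 0 then 0 else i1 + 1, ?_, ?_⟩
      · split <;> omega
      · split
        · next h => rw [e0, ← h]; exact hv₂
        · next h => rw [e2 (i1 + 1) (by omega)]; simpa using hv₂
  · -- no insertion possible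
    have hdich : ∀ u : V, (∀ i < k, w i ≠ u) →
        (∀ i < k, A u (w i)) ∨ (∀ i < k, ¬ A u (w i)) := by
      intro u hu
      refine dichotomy ⟨hirr, hasym, htot, hcom⟩ hcyc hu ?_
      intro c hck hpair
      exact hins ⟨u, hu, c, hck, hpair.1, hpair.2⟩
    -- a vertex of T exists
    have hTex : ∃ t, (∀ i < k, w i ≠ t) ∧ ∀ i < k, ¬ A t (w i) := by
      by_contra hnoT
      push_neg at hnoT
      have hclosed : ∀ a ∈ {x : V | ∃ i < k, w i = x}, ∀ b, A a b →
          b ∈ {x : V | ∃ i < k, w i = x} := by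
        rintro a ⟨i, hik, rfl⟩ b hab
        by_contra hbC
        have hbC' : ∀ j < k, w j ≠ b := by
          intro j hjk hjb
          exact hbC ⟨j, hjk, hjb⟩
        rcases hdich b hbC' with hS | hT
        · exact hasym _ _ (hS i hik) hab
        · obtain ⟨j, hj, hA⟩ := hnoT b hbC'
          exact hT j hj hA
      obtain ⟨i, hik, hiu⟩ := reach_closed hclosed ⟨i0, hi0k, hi0v⟩ (hstrong v u0)
      exact hu0 i hik hiu
    obtain ⟨t0, ht0C, ht0T⟩ := hTex
    -- an arc from T to S exists
    have hescape : ∃ t s, ((∀ i < k, w i ≠ t) ∧ ∀ i < k, ¬ A t (w i)) ∧ A t s ∧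
        (∀ i < k, w i ≠ s) ∧ (∀ i < k, A s (w i)) := by
      by_contra hno2
      have hclosed : ∀ a ∈ {x : V | (∀ i < k, w i ≠ x) ∧ ∀ i < k, ¬ A x (w i)}, ∀ b,
          A a b → b ∈ {x : V | (∀ i < k, w i ≠ x) ∧ ∀ i < k, ¬ A x (w i)} := by
        rintro a ⟨haC, haT⟩ b hab
        have hbC : ∀ i < k, w i ≠ b := by
          intro i hik hbeq
          exact haT i hik (hbeq ▸ hab)
        rcases hdich b hbC with hS | hT
        · exact absurd ⟨a, b, ⟨haC, haT⟩, hab, hbC, hS⟩ hno2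
        · exact ⟨hbC, hT⟩
      exact (reach_closed hclosed ⟨ht0C, ht0T⟩ (hstrong t0 v)).1 i0 hi0k hi0v
    obtain ⟨t, s, ⟨htC, htT⟩, hts, hsC, hsS⟩ := hescape
    have hst : t ≠ s := fun h => hirr t (h ▸ hts)
    -- at most one index of the cycle has no arc to t
    have hbad : ∀ i j, i < k → j < k → ¬ A (w i) t → ¬ A (w j) t → i = j := by
      intro i j hik hjk hi hj
      by_contra hne
      have hwij : w i ≠ w j :=
        fun h => hne (hcyc.1 (Set.mem_Iio.2 hik) (Set.mem_Iio.2 hjk) h)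
      rcases htot (w i) t (w j) (htC i hik) (Ne.symm (htC j hjk)) hwij hi
          (htT i hik) with h | h
      · exact htT j hjk h
      · exact hj h
    -- choose the splice position
    have hrex : ∃ r < k, w ((r + 1) % k) ≠ v ∧ A (w r) t := by
      by_contra hnor
      push_neg at hnor
      set B1 := (Finset.range k).filter (fun r => (r + 1) % k = i0) with hB1
      set B2 := (Finset.range k).filter (fun r => ¬ A (w r) t) with hB2
      have hsub : Finset.range k ⊆ B1 ∪ B2 := by
        intro r hr
        have hrk := Finset.mem_range.1 hr
        by_cases h1 : (r + 1) % k = i0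
        · exact Finset.mem_union.2 (Or.inl (Finset.mem_filter.2 ⟨hr, h1⟩))
        · refine Finset.mem_union.2 (Or.inr (Finset.mem_filter.2 ⟨hr, ?_⟩))
          refine hnor r hrk ?_
          intro heq
          exact h1 (hcyc.1 (Set.mem_Iio.2 (Nat.mod_lt _ hk)) (Set.mem_Iio.2 hi0k)
            (heq.trans hi0v.symm))
      have hc1 : B1.card ≤ 1 := by
        refine Finset.card_le_one.2 ?_
        intro a ha b hb
        rw [hB1, Finset.mem_filter, Finset.mem_range] at ha hb
        exact mod_cancel ha.1 hb.1 (ha.2.trans hb.2.symm)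
      have hc2 : B2.card ≤ 1 := by
        refine Finset.card_le_one.2 ?_
        intro a ha b hb
        rw [hB2, Finset.mem_filter, Finset.mem_range] at ha hb
        exact hbad a b ha.1 hb.1 ha.2 hb.2
      have hle1 := Finset.card_le_card hsub
      have hle2 := Finset.card_union_le B1 B2
      rw [Finset.card_range] at hle1
      omega
    obtain ⟨r, hrk, hrv, hrt⟩ := hrex
    set w₂ : ℕ → V := fun i => w ((i + r) % k) with hw₂
    have hcyc₂ : IsCyc A k w₂ := hcyc.rot r
    have hw20 : w₂ 0 = w r := by simp [hw₂, Nat.mod_eq_of_lt hrk]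
    have hw21 : w₂ 1 ≠ v := by
      rw [hw₂]
      simpa [Nat.add_comm] using hrv
    have ht₂ : ∀ i, i < k → w₂ i ≠ t := fun i _ => htC _ (Nat.mod_lt _ hk)
    have hs₂ : ∀ i, i < k → w₂ i ≠ s := fun i _ => hsC _ (Nat.mod_lt _ hk)
    have hdom₂ : ∀ i, i < k → A s (w₂ i) := fun i _ => hsS _ (Nat.mod_lt _ hk)
    set W : ℕ → V := fun i => if i = 0 then w₂ 0 else if i = 1 then t else
      if i = 2 then s else w₂ (i - 1) with hW
    have e0 : W 0 = w₂ 0 := rfl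
    have e1 : W 1 = t := rfl
    have e2 : W 2 = s := rfl
    have e3 : ∀ i, 3 ≤ i → W i = w₂ (i - 1) := by
      intro i h
      have h0 : i ≠ 0 := by omega
      have h1 : i ≠ 1 := by omega
      have h2 : i ≠ 2 := by omega
      simp [hW, h0, h1, h2]
    refine ⟨W, ⟨?_, ?_⟩, ?_⟩
    · intro a ha b hb hab
      simp only [Set.mem_Iio] at ha hb
      have hinj := hcyc₂.1
      rcases (by omega : a = 0 ∨ a = 1 ∨ a = 2 ∨ 3 ≤ a) with rfl | rfl | rfl | ha3 <;>
        rcases (by omega : b = 0 ∨ b = 1 ∨ b = 2 ∨ 3 ≤ b) with rfl | rfl | rfl | hb3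
      · rfl
      · rw [e0, e1] at hab; exact absurd hab (ht₂ 0 hk)
      · rw [e0, e2] at hab; exact absurd hab (hs₂ 0 hk)
      · rw [e0, e3 b hb3] at hab
        have := hinj (Set.mem_Iio.2 hk) (Set.mem_Iio.2 (show b - 1 < k by omega)) hab
        omega
      · rw [e1, e0] at hab; exact absurd hab.symm (ht₂ 0 hk)
      · rfl
      · rw [e1, e2] at hab; exact absurd hab hst
      · rw [e1, e3 b hb3] at hab
        exact absurd hab.symm (ht₂ (b - 1) (by omega))
      · rw [e2, e0] at hab; exact absurd hab.symm (hs₂ 0 hk)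
      · rw [e2, e1] at hab; exact absurd hab.symm hst
      · rfl
      · rw [e2, e3 b hb3] at hab
        exact absurd hab.symm (hs₂ (b - 1) (by omega))
      · rw [e3 a ha3, e0] at hab
        have := hinj (Set.mem_Iio.2 (show a - 1 < k by omega)) (Set.mem_Iio.2 hk) hab
        omega
      · rw [e3 a ha3, e1] at hab
        exact absurd hab (ht₂ (a - 1) (by omega))
      · rw [e3 a ha3, e2] at hab
        exact absurd hab (hs₂ (a - 1) (by omega))
      · rw [e3 a ha3, e3 b hb3] at hab
        have := hinj (Set.mem_Iio.2 (show a - 1 < k by omega))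
          (Set.mem_Iio.2 (show b - 1 < k by omega)) hab
        omega
    · intro i hik
      rcases (by omega : i = 0 ∨ i = 1 ∨ i = 2 ∨ (3 ≤ i ∧ i < k) ∨ i = k) with
        rfl | rfl | rfl | ⟨hi3, hikk⟩ | hik'
      · rw [Nat.mod_eq_of_lt (show 0 + 1 < k + 1 by omega), e0, e1, hw20]
        exact hrt
      · rw [Nat.mod_eq_of_lt (show 1 + 1 < k + 1 by omega), e1, e2]
        exact hts
      · rw [Nat.mod_eq_of_lt (show 2 + 1 < k + 1 by omega), e2, e3 3 (by omega)]
        exact hdom₂ 2 (by omega)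
      · rw [Nat.mod_eq_of_lt (show i + 1 < k + 1 by omega), e3 i hi3, e3 (i + 1) (by omega)]
        have harc := hcyc₂.2 (i - 1) (by omega)
        rw [show i - 1 + 1 = i by omega, Nat.mod_eq_of_lt hikk] at harc
        rw [show i + 1 - 1 = i by omega]
        exact harc
      · rw [hik', Nat.mod_self, e0, e3 k (by omega)]
        have harc := hcyc₂.2 (k - 1) (by omega)
        rw [show k - 1 + 1 = k by omega, Nat.mod_self] at harc
        exact harc
    · obtain ⟨i1, hi1k, hi1⟩ := rot_index (r := r) hi0k
      have hv₂ : w₂ i1 = v := by rw [hw₂]; simp only []; rw [hi1]; exact hi0v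
      have hi1ne : i1 ≠ 1 := fun h => hw21 (h ▸ hv₂)
      refine ⟨if i1 = 0 then 0 else i1 + 1, ?_, ?_⟩
      · split <;> omega
      · split
        · next h => rw [e0, ← h]; exact hv₂
        · next h => rw [e3 (i1 + 1) (by omega)]; simpa using hv₂
lemma base [Fintype V] (hD : IsMonoC3FreeTournament A)
    (hstrong : ∀ u v : V, Relation.ReflTransGen A u v)
    (hcard : 4 ≤ Fintype.card V) (v : V) :
    ∃ k w, (k = 3 ∨ k = 4) ∧ IsCyc A k w ∧ w 0 = v := by
  classical
  obtain ⟨hirr, hasym, htot, hcom⟩ := hD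
  have hO : ∃ o, A v o := by
    by_contra h
    push_neg at h
    obtain ⟨x, hx⟩ := Fintype.exists_ne_of_one_lt_card (by omega) v
    have := reach_closed (X := {y : V | y = v})
      (by rintro a rfl b hab; exact absurd hab (h b)) rfl (hstrong v x)
    exact hx this
  have hI : ∃ i, A i v := by
    by_contra h
    push_neg at h
    obtain ⟨x, hx⟩ := Fintype.exists_ne_of_one_lt_card (by omega) v
    have := reach_closed (X := {y : V | y ≠ v})
      (by intro a ha b hab hb; exact h a (hb ▸ hab)) hx (hstrong x v)
    exact this rfl
  by_cases h3c : ∃ o i, A v o ∧ A o i ∧ A i v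
  · obtain ⟨o, i, h1, h2, h3⟩ := h3c
    have hvo : v ≠ o := fun h => hirr v (h ▸ h1)
    have hoi : o ≠ i := fun h => hirr o (h ▸ h2)
    have hiv : i ≠ v := fun h => hirr i (h ▸ h3)
    refine ⟨3, fun j => if j = 0 then v else if j = 1 then o else i, Or.inl rfl,
      ⟨?_, ?_⟩, rfl⟩
    · intro a ha b hb hab
      simp only [Set.mem_Iio] at ha hb
      rcases (by omega : a = 0 ∨ a = 1 ∨ a = 2) with rfl | rfl | rfl <;>
        rcases (by omega : b = 0 ∨ b = 1 ∨ b = 2) with rfl | rfl | rfl <;>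
        simp_all
    · intro j hj
      rcases (by omega : j = 0 ∨ j = 1 ∨ j = 2) with rfl | rfl | rfl <;> simpa
  · push_neg at h3c
    by_cases hnw : ∃ nw, nw ≠ v ∧ ¬A v nw ∧ ¬A nw v
    · obtain ⟨nw, hnv, hvn, hnv'⟩ := hnw
      have huniq : ∀ b, b ≠ v → ¬A v b → ¬A b v → b = nw := by
        intro b hbv h1 h2
        by_contra hbnw
        rcases htot nw v b hnv (Ne.symm hbv) (fun h => hbnw h.symm) hnv' hvn with
          h | h
        · exact h1 h
        · exact h2 h
      have hOnw : ∃ o, A v o ∧ A o nw := by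
        by_contra h
        push_neg at h
        have hclosed : ∀ a ∈ {x : V | x = v ∨ A v x}, ∀ b, A a b →
            b ∈ {x : V | x = v ∨ A v x} := by
          rintro a (rfl | hva) b hab
          · exact Or.inr hab
          · have hbv : b ≠ v := fun h' => hasym v a hva (h' ▸ hab)
            by_cases hvb : A v b
            · exact Or.inr hvb
            · have hbv2 : ¬A b v := h3c a b hva hab
              exact absurd ((huniq b hbv hvb hbv2) ▸ hab) (h a hva)
        have := reach_closed hclosed (Or.inl rfl) (hstrong v nw)
        rcases this with h' | h'
        · exact hnv h'
        · exact hvn h'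
      obtain ⟨o, hvo, honw⟩ := hOnw
      have hnwI : ∃ i, A nw i ∧ A i v := by
        by_contra h
        push_neg at h
        have hclosed : ∀ a ∈ {x : V | x = v ∨ x = nw ∨ A v x}, ∀ b, A a b →
            b ∈ {x : V | x = v ∨ x = nw ∨ A v x} := by
          rintro a (rfl | rfl | hva) b hab
          · exact Or.inr (Or.inr hab)
          · have hbv : b ≠ v := fun h' => hnv' (h' ▸ hab)
            by_cases hvb : A v b
            · exact Or.inr (Or.inr hvb)
            · exact Or.inr (Or.inl (huniq b hbv hvb (h b hab)))
          · have hbv : b ≠ v := fun h' => hasym v a hva (h' ▸ hab)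
            by_cases hvb : A v b
            · exact Or.inr (Or.inr hvb)
            · exact Or.inr (Or.inl (huniq b hbv hvb (h3c a b hva hab)))
        obtain ⟨i, hiv⟩ := hI
        have hiX := reach_closed hclosed (Or.inl rfl) (hstrong v i)
        rcases hiX with h' | h' | h'
        · exact hirr v (h' ▸ hiv)
        · exact hnv' (h' ▸ hiv)
        · exact hasym v i h' hiv
      obtain ⟨i, hnwi, hiv⟩ := hnwI
      have h1 : v ≠ o := fun h => hirr v (h ▸ hvo)
      have h2 : o ≠ nw := fun h => hirr o (h ▸ honw)
      have h3 : nw ≠ i := fun h => hirr nw (h ▸ hnwi)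
      have h4 : i ≠ v := fun h => hirr i (h ▸ hiv)
      have h5 : o ≠ i := fun h => hasym v o hvo (h ▸ hiv)
      set W : ℕ → V := fun j => if j = 0 then v else if j = 1 then o
        else if j = 2 then nw else i with hWd
      have g0 : W 0 = v := rfl
      have g1 : W 1 = o := rfl
      have g2 : W 2 = nw := rfl
      have g3 : W 3 = i := rfl
      refine ⟨4, W, Or.inr rfl, ⟨?_, ?_⟩, g0⟩
      · intro a ha b hb hab
        simp only [Set.mem_Iio] at ha hb
        rcases (by omega : a = 0 ∨ a = 1 ∨ a = 2 ∨ a = 3) with rfl | rfl | rfl | rfl <;>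
          rcases (by omega : b = 0 ∨ b = 1 ∨ b = 2 ∨ b = 3) with rfl | rfl | rfl | rfl
        · rfl
        · rw [g0, g1] at hab; exact absurd hab h1
        · rw [g0, g2] at hab; exact absurd hab (Ne.symm hnv)
        · rw [g0, g3] at hab; exact absurd hab (Ne.symm h4)
        · rw [g1, g0] at hab; exact absurd hab (Ne.symm h1)
        · rfl
        · rw [g1, g2] at hab; exact absurd hab h2
        · rw [g1, g3] at hab; exact absurd hab h5
        · rw [g2, g0] at hab; exact absurd hab hnv
        · rw [g2, g1] at hab; exact absurd hab (Ne.symm h2)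
        · rfl
        · rw [g2, g3] at hab; exact absurd hab h3
        · rw [g3, g0] at hab; exact absurd hab h4
        · rw [g3, g1] at hab; exact absurd hab (Ne.symm h5)
        · rw [g3, g2] at hab; exact absurd hab (Ne.symm h3)
        · rfl
      · intro j hj
        rcases (by omega : j = 0 ∨ j = 1 ∨ j = 2 ∨ j = 3) with rfl | rfl | rfl | rfl
        · rw [show (0 + 1) % 4 = 1 from rfl, g0, g1]; exact hvo
        · rw [show (1 + 1) % 4 = 2 from rfl, g1, g2]; exact honw
        · rw [show (2 + 1) % 4 = 3 from rfl, g2, g3]; exact hnwi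
        · rw [show (3 + 1) % 4 = 0 from rfl, g3, g0]; exact hiv
    · exfalso
      push_neg at hnw
      have hclosed : ∀ a ∈ {x : V | x = v ∨ A v x}, ∀ b, A a b →
          b ∈ {x : V | x = v ∨ A v x} := by
        rintro a (rfl | hva) b hab
        · exact Or.inr hab
        · have hbv : b ≠ v := fun h' => hasym v a hva (h' ▸ hab)
          by_cases hvb : A v b
          · exact Or.inr hvb
          · exact absurd (hnw b hbv hvb) (h3c a b hva hab)
      obtain ⟨i, hiv⟩ := hI
      have hiX := reach_closed hclosed (Or.inl rfl) (hstrong v i)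
      rcases hiX with h' | h'
      · exact hirr v (h' ▸ hiv)
      · exact hasym v i h' hiv

lemma grow [Fintype V] (hD : IsMonoC3FreeTournament A)
    (hstrong : ∀ u v : V, Relation.ReflTransGen A u v) :
    ∀ d : ℕ, ∀ {k : ℕ} {w : ℕ → V} {v : V}, IsCyc A k w → 3 ≤ k →
      k + d ≤ Fintype.card V → (∃ i < k, w i = v) →
      ∃ w', IsCyc A (k + d) w' ∧ ∃ i < k + d, w' i = v := by
  intro d
  induction d with
  | zero => exact fun hc _ _ hv => ⟨_, hc, hv⟩
  | succ d ih =>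
      intro k w v hc h3 hle hv
      obtain ⟨w', hc', hv'⟩ := ih hc h3 (by omega) hv
      obtain ⟨w'', hc'', hv''⟩ := extend hD hstrong hc' (by omega) (by omega) hv'
      exact ⟨w'', hc'', hv''⟩

end MonoC3

/-- Let `D` be a strongly connected mono-`C3`-free tournament with at
least `4` vertices.  Then each vertex of `D` is contained in directed cycles of every
length from `4` to `|V(D)|`. -/
theorem vertex_in_cycles_of_all_lengths {V : Type*} [Fintype V] (A : V → V → Prop)
    (hD : IsMonoC3FreeTournament A)
    (hstrong : ∀ u v : V, Relation.ReflTransGen A u v)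
    (hcard : 4 ≤ Fintype.card V) :
    ∀ v : V, ∀ m : ℕ, 4 ≤ m → m ≤ Fintype.card V →
      ∃ f : ℕ → V, f 0 = v ∧ Set.InjOn f (Set.Iio m) ∧
        ∀ j < m, A (f j) (f ((j + 1) % m)) := by

  intro v m hm4 hmc
  obtain ⟨k, w, hk34, hcyc, hw0⟩ := MonoC3.base hD hstrong hcard v
  have hk3 : 3 ≤ k := by rcases hk34 with rfl | rfl <;> omega
  have hkm : k ≤ m := by rcases hk34 with rfl | rfl <;> omega
  obtain ⟨w', hcyc', i0, hi0m, hi0v⟩ :=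
    MonoC3.grow hD hstrong (m - k) hcyc hk3 (by omega)
      ⟨0, by omega, hw0⟩
  rw [show k + (m - k) = m by omega] at hcyc' hi0m
  have hm0 : 0 < m := by omega
  have hrot := hcyc'.rot i0
  refine ⟨fun j => w' ((j + i0) % m), ?_, hrot.1, hrot.2⟩
  show w' ((0 + i0) % m) = v
  rw [Nat.zero_add, Nat.mod_eq_of_lt hi0m]
  exact hi0v
end

section
/- Let D be a strongly connected mono-C3-free tournament with |V(D)| ≥ 3. Then D contains a directed Hamilton cycle. -/
open Function

theorem List.exists_eq_append_cons_cons_of_not_of {α : Type*} {p : α → Prop} :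
    ∀ {x : α} {l : List α}, ¬p x → (∃ y ∈ l, p y) →
      ∃ l₁ a b l₂, x :: l = l₁ ++ a :: b :: l₂ ∧ ¬p a ∧ p b
  | _, [], _, ⟨_, hy, _⟩ => absurd hy List.not_mem_nil
  | x, b :: l, hx, ⟨y, hy, hpy⟩ => by
    by_cases hb : p b
    · exact ⟨[], x, b, l, rfl, hx, hb⟩
    · have hyl : y ∈ l := (List.mem_cons.1 hy).resolve_left (by rintro rfl; exact hb hpy)
      obtain ⟨l₁, a, c, l₂, he, ha, hc⟩ :=
        exists_eq_append_cons_cons_of_not_of hb ⟨y, hyl, hpy⟩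
      exact ⟨x :: l₁, a, c, l₂, by rw [he]; rfl, ha, hc⟩

theorem Relation.ReflTransGen.exists_rel_of_mem_of_notMem {α : Type*} {r : α → α → Prop}
    {S : Set α} {a b : α} (h : ReflTransGen r a b) (ha : a ∈ S) (hb : b ∉ S) :
    ∃ x ∈ S, ∃ y ∉ S, r x y := by
  induction h with
  | refl => exact absurd ha hb
  | @tail c d _ hcd ih =>
    by_cases hc : c ∈ S
    · exact ⟨c, hc, d, hb, hcd⟩
    · exact ih hc

theorem Function.exists_mem_periodicPts {α : Type*} [Finite α] [Nonempty α] (f : α → α) :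
    ∃ x, x ∈ periodicPts f := by
  obtain ⟨x⟩ := ‹Nonempty α›
  obtain ⟨m, n, hne, heq⟩ := Finite.exists_ne_map_eq_of_infinite (f^[·] x)
  wlog hlt : m < n generalizing m n
  · exact this n m hne.symm heq.symm (by omega)
  refine ⟨f^[m] x, mk_mem_periodicPts (Nat.sub_pos_of_lt hlt) ?_⟩
  rw [IsPeriodicPt, IsFixedPt, ← iterate_add_apply, Nat.sub_add_cancel hlt.le]
  exact heq.symm

namespace Cycle

variable {α : Type*} {r : α → α → Prop} {s : Cycle α}

theorem exists_eq_cons_of_mem {a : α} (h : a ∈ s) : ∃ l : List α, s = ↑(a :: l) := by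
  induction s using Quot.induction_on with
  | h l =>
    obtain ⟨p, t, rfl⟩ := List.mem_iff_append.1 h
    exact ⟨t ++ p, coe_eq_coe.2 List.isRotated_append⟩

theorem exists_eq_cons_cons (hs : 2 ≤ s.length) :
    ∃ (a b : α) (l : List α), s = ↑(a :: b :: l) := by
  induction s using Quot.induction_on with
  | h l =>
    match l, hs with
    | a :: b :: l, _ => exact ⟨a, b, l, rfl⟩

theorem exists_eq_cons_cons_of_mem (hs : 2 ≤ s.length) {a : α} (h : a ∈ s) :
    ∃ b l, s = ↑(a :: b :: l) := by
  obtain ⟨_ | ⟨b, l⟩, rfl⟩ := exists_eq_cons_of_mem h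
  · simp at hs
  · exact ⟨b, l, rfl⟩

theorem exists_eq_cons_cons_of_not_of {p : α → Prop} {x y : α} (hx : x ∈ s) (hpx : ¬p x)
    (hy : y ∈ s) (hpy : p y) : ∃ a b l, s = ↑(a :: b :: l) ∧ ¬p a ∧ p b := by
  obtain ⟨l, rfl⟩ := exists_eq_cons_of_mem hx
  have hyl : ∃ y ∈ l, p y :=
    ⟨y, (List.mem_cons.1 (mem_coe_iff.1 hy)).resolve_left (by rintro rfl; exact hpx hpy), hpy⟩
  obtain ⟨l₁, a, b, l₂, he, ha, hb⟩ := List.exists_eq_append_cons_cons_of_not_of hpx hyl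
  exact ⟨a, b, l₂ ++ l₁, by rw [he, coe_eq_coe]; exact List.isRotated_append, ha, hb⟩

theorem Nodup.ne_of_eq_cons_cons {a b : α} {l : List α} (hs : s.Nodup)
    (h : s = ↑(a :: b :: l)) : a ≠ b := by
  subst h
  simp only [nodup_coe_iff, List.nodup_cons, List.mem_cons, not_or] at hs
  exact hs.1.1

theorem Nodup.length_le_card [Fintype α] (hs : s.Nodup) : s.length ≤ Fintype.card α := by
  induction s using Quot.induction_on with
  | h l => exact List.Nodup.length_le_card hs

theorem Chain.rel_of_eq_cons_cons {a b : α} {l : List α} (h : Chain r ↑(a :: b :: l)) :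
    r a b := by
  simp only [chain_coe_cons, List.cons_append, List.isChain_cons_cons] at h
  exact h.1

theorem Chain.two_le_length (hr : ∀ a, ¬r a a) (h : s.Chain r) (hs : s ≠ Cycle.nil) :
    2 ≤ s.length := by
  induction s using Quot.induction_on with
  | h l =>
    match l, h, hs with
    | [], _, hs => exact absurd rfl hs
    | [a], h, _ => exact absurd ((chain_singleton r a).1 h) (hr a)
    | _ :: _ :: l, _, _ => simp

theorem Chain.rel_getElem {l : List α} (h : Chain r ↑l) (i : ℕ) (hi : i < l.length) :
    r l[i] (l[(i + 1) % l.length]'(Nat.mod_lt _ (by omega))) := by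
  obtain _ | ⟨a, m⟩ := l
  · simp at hi
  rw [chain_coe_cons, ← List.cons_append, List.isChain_iff_getElem] at h
  have := h i (by simp at hi ⊢; omega)
  rw [List.getElem_append_left hi] at this
  rcases Nat.lt_or_ge (i + 1) (a :: m).length with hlt | hge
  · simp only [Nat.mod_eq_of_lt hlt]
    rwa [List.getElem_append_left hlt] at this
  · have hlast : i + 1 = (a :: m).length := by omega
    simp only [hlast, Nat.mod_self]
    simpa [List.getElem_append_right hge, hlast] using this

theorem exists_longer_of_detour (hs : s.Nodup) (hc : s.Chain r) {a b : α} {l P : List α}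
    (hs_eq : s = ↑(a :: b :: l)) (hP : P ≠ []) (hPn : P.Nodup) (hPs : ∀ x ∈ P, x ∉ s)
    (hpath : List.IsChain r (a :: P ++ [b])) :
    ∃ t : Cycle α, t.Nodup ∧ t.Chain r ∧ s.length < t.length := by
  subst hs_eq
  refine ⟨↑(a :: (P ++ b :: l)), ?_, ?_, ?_⟩
  · rw [nodup_coe_iff] at hs ⊢
    simp only [mem_coe_iff] at hPs
    refine List.perm_middle.nodup_iff.1 (List.nodup_append.2 ⟨hPn, hs, ?_⟩)
    rintro x hx _ hy rfl
    exact hPs x hx hy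
  · simp only [chain_coe_cons] at hc ⊢
    rw [List.append_assoc, List.cons_append, List.isChain_cons_split]
    exact ⟨hpath, List.isChain_cons_cons.1 hc |>.2⟩
  · simpa using List.length_pos_iff.2 hP

theorem exists_nodup_chain_ne_nil [Finite α] [Nonempty α]
    (h : ∀ a, ∃ b, r a b) : ∃ s : Cycle α, s.Nodup ∧ s.Chain r ∧ s ≠ nil := by
  choose f hf using h
  obtain ⟨x, hx⟩ := exists_mem_periodicPts f
  refine ⟨periodicOrbit f x, nodup_periodicOrbit, ?_, ?_⟩
  · exact (periodicOrbit_chain r).2 fun n _ => by rw [iterate_succ_apply']; exact hf _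
  · exact mt periodicOrbit_eq_nil_iff_not_periodic_pt.1 (not_not.2 hx)

theorem exists_cyclic_enumeration [Fintype α] [Nonempty α] (hs : s.Nodup) (hc : s.Chain r)
    (hall : ∀ a, a ∈ s) :
    ∃ f : ℕ → α, Set.InjOn f (Set.Iio (Fintype.card α)) ∧
      (∀ x : α, ∃ j < Fintype.card α, f j = x) ∧
      ∀ j < Fintype.card α, r (f j) (f ((j + 1) % Fintype.card α)) := by
  classical
  induction s using Quot.induction_on with
  | h l =>
  have hlen : l.length = Fintype.card α := by
    rw [← List.toFinset_card_of_nodup hs, ← Finset.card_univ]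
    exact congrArg _ (Finset.eq_univ_of_forall fun a => List.mem_toFinset.2 (hall a))
  rw [← hlen]
  have hpos : 0 < l.length := List.length_pos_of_mem (hall (Classical.arbitrary α))
  refine ⟨fun j => l[j % l.length]'(Nat.mod_lt _ hpos), ?_, ?_, ?_⟩
  · intro i hi j hj hij
    simp only [Set.mem_Iio] at hi hj
    simp only [Nat.mod_eq_of_lt hi, Nat.mod_eq_of_lt hj] at hij
    exact (List.Nodup.getElem_inj_iff hs).1 hij
  · intro x
    obtain ⟨i, hi, rfl⟩ := List.mem_iff_getElem.1 (hall x)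
    exact ⟨i, hi, by simp only [Nat.mod_eq_of_lt hi]⟩
  · intro j hj
    simp only [Nat.mod_eq_of_lt hj, Nat.mod_mod]
    exact Chain.rel_getElem hc j hj

end Cycle

namespace IsMonoC3FreeTournament

variable {V : Type*} {A : V → V → Prop} {s : Cycle V}

theorem eq_of_not_rel (hD : IsMonoC3FreeTournament A) {v x y : V} (hx : x ≠ v) (hy : y ≠ v)
    (hxv : ¬A x v) (hvx : ¬A v x) (hyv : ¬A y v) (hvy : ¬A v y) : x = y := by
  by_contra hxy
  rcases hD.2.2.1 x v y hx hy.symm hxy hxv hvx with h | h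
  exacts [hvy h, hyv h]

theorem exists_mem_rel_or_rel (hD : IsMonoC3FreeTournament A) (hs : s.Nodup)
    (hlen : 2 ≤ s.length) {v : V} (hv : v ∉ s) : ∃ c ∈ s, A c v ∨ A v c := by
  obtain ⟨c, d, l, hcd⟩ := Cycle.exists_eq_cons_cons hlen
  have hcs : c ∈ s := by simp [hcd]
  have hds : d ∈ s := by simp [hcd]
  by_contra! h
  exact hs.ne_of_eq_cons_cons hcd <| hD.eq_of_not_rel (ne_of_mem_of_not_mem hcs hv)
    (ne_of_mem_of_not_mem hds hv) (h c hcs).1 (h c hcs).2 (h d hds).1 (h d hds).2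

theorem exists_longer_cycle_of_rel_of_rel (hD : IsMonoC3FreeTournament A) (hs : s.Nodup)
    (hc : s.Chain A) {v c₁ c₂ : V} (hv : v ∉ s) (hc₁ : c₁ ∈ s) (h₁ : A c₁ v) (hc₂ : c₂ ∈ s)
    (h₂ : A v c₂) : ∃ t : Cycle V, t.Nodup ∧ t.Chain A ∧ s.length < t.length := by
  obtain ⟨a, b, l, rfl, hva, hvb⟩ :=
    Cycle.exists_eq_cons_cons_of_not_of (p := A v) hc₁ (hD.2.1 _ _ h₁) hc₂ h₂
  have hab : A a b := hc.rel_of_eq_cons_cons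
  -- otherwise `a` and `v` would be a partite pair with the common out-neighbour `b`
  have hav : A a v := by
    by_contra hav
    have hne : a ≠ v := by rintro rfl; exact hv (by simp)
    exact hD.2.2.2 a v hne hav hva b ⟨hab, hvb⟩
  refine Cycle.exists_longer_of_detour hs hc rfl (List.cons_ne_nil v []) (List.nodup_singleton v)
    (by simpa using hv) ?_
  simp [hav, hvb]

theorem exists_longer_cycle_of_sink_rel_source (hD : IsMonoC3FreeTournament A) (hs : s.Nodup)
    (hc : s.Chain A) (hlen : 2 ≤ s.length) {x y : V} (hx : x ∉ s) (hy : y ∉ s) (hxy : A x y)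
    (hxs : ∀ c ∈ s, ¬A x c) (hys : ∀ c ∈ s, ¬A c y) :
    ∃ t : Cycle V, t.Nodup ∧ t.Chain A ∧ s.length < t.length := by
  have hxy' : x ≠ y := by rintro rfl; exact hD.1 x hxy
  have hPn : [x, y].Nodup := by simp [hxy']
  have hPs : ∀ z ∈ [x, y], z ∉ s := by simp [hx, hy]
  obtain ⟨a, has, hax⟩ : ∃ a ∈ s, A a x := by
    obtain ⟨a, ha, h | h⟩ := hD.exists_mem_rel_or_rel hs hlen hx
    exacts [⟨a, ha, h⟩, absurd h (hxs a ha)]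
  obtain ⟨b, l, hab⟩ := Cycle.exists_eq_cons_cons_of_mem hlen has
  by_cases hyb : A y b
  · exact Cycle.exists_longer_of_detour hs hc hab (List.cons_ne_nil _ _) hPn hPs
      (by simp [hax, hxy, hyb])
  -- `b` is the partner of `y`, so it is not the partner of `x`, and its successor `c` is not
  -- the partner of `y`
  · have hbs : b ∈ s := by simp [hab]
    obtain ⟨c, l', hbc⟩ := Cycle.exists_eq_cons_cons_of_mem hlen hbs
    have hcs : c ∈ s := by simp [hbc]
    have hbx : A b x := by
      by_contra hbx
      exact hxy' <| hD.eq_of_not_rel (ne_of_mem_of_not_mem hbs hx).symm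
        (ne_of_mem_of_not_mem hbs hy).symm (hxs b hbs) hbx hyb (hys b hbs)
    have hyc : A y c := by
      by_contra hyc
      exact hs.ne_of_eq_cons_cons hbc <| hD.eq_of_not_rel (ne_of_mem_of_not_mem hbs hy)
        (ne_of_mem_of_not_mem hcs hy) (hys b hbs) hyb (hys c hcs) hyc
    exact Cycle.exists_longer_of_detour hs hc hbc (List.cons_ne_nil _ _) hPn hPs
      (by simp [hbx, hxy, hyc])

theorem exists_longer_cycle (hD : IsMonoC3FreeTournament A)
    (hstrong : ∀ u v : V, Relation.ReflTransGen A u v) (hs : s.Nodup) (hc : s.Chain A)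
    (hne : s ≠ Cycle.nil) {v : V} (hv : v ∉ s) :
    ∃ t : Cycle V, t.Nodup ∧ t.Chain A ∧ s.length < t.length := by
  have hlen : 2 ≤ s.length := hc.two_le_length hD.1 hne
  obtain ⟨c, d, l, hcd⟩ := Cycle.exists_eq_cons_cons hlen
  have hcs : c ∈ s := by simp [hcd]
  by_contra hmax
  have hswitch : ∀ y ∉ s, ∀ c₁ ∈ s, A c₁ y → ∀ c₂ ∈ s, ¬A y c₂ :=
    fun _ hy _ hc₁ h₁ _ hc₂ h₂ =>
      hmax (hD.exists_longer_cycle_of_rel_of_rel hs hc hy hc₁ h₁ hc₂ h₂)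
  by_cases hsink : ∃ x ∉ s, ∀ c ∈ s, ¬A x c
  · obtain ⟨x, hx, hxs⟩ := hsink
    obtain ⟨x', ⟨hx', hx's⟩, y, hy, hxy⟩ :=
      (hstrong x c).exists_rel_of_mem_of_notMem (S := {u | u ∉ s ∧ ∀ c ∈ s, ¬A u c})
        ⟨hx, hxs⟩ fun h => h.1 hcs
    have hy' : y ∉ s := fun h => hx's y h hxy
    obtain ⟨c', hc', hyc'⟩ : ∃ c' ∈ s, A y c' := by
      simpa [hy'] using hy
    exact hmax (hD.exists_longer_cycle_of_sink_rel_source hs hc hlen hx' hy' hxy hx's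
      fun c₁ hc₁ h₁ => hswitch y hy' c₁ hc₁ h₁ c' hc' hyc')
  · push Not at hsink
    obtain ⟨x, hx, y, hy, hxy⟩ :=
      (hstrong c v).exists_rel_of_mem_of_notMem (S := {u | u ∈ s}) hcs hv
    obtain ⟨c', hc', hyc'⟩ := hsink y hy
    exact hswitch y hy x hx hxy c' hc' hyc'

theorem exists_hamiltonian_cycle [Fintype V] (hD : IsMonoC3FreeTournament A)
    (hstrong : ∀ u v : V, Relation.ReflTransGen A u v) (s : Cycle V) (hs : s.Nodup)
    (hc : s.Chain A) (hne : s ≠ Cycle.nil) :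
    ∃ t : Cycle V, t.Nodup ∧ t.Chain A ∧ ∀ v, v ∈ t := by
  by_cases hall : ∀ v, v ∈ s
  · exact ⟨s, hs, hc, hall⟩
  obtain ⟨v, hv⟩ := not_forall.1 hall
  obtain ⟨t, ht, htc, hlt⟩ := hD.exists_longer_cycle hstrong hs hc hne hv
  have := ht.length_le_card
  exact hD.exists_hamiltonian_cycle hstrong t ht htc (by rintro rfl; simp at hlt)
termination_by Fintype.card V - s.length

end IsMonoC3FreeTournament

/-- Let `D` be a strongly connected mono-`C3`-free tournament with at
least `3` vertices.  Then `D` contains a directed Hamilton cycle. -/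
theorem directed_hamilton_cycle {V : Type*} [Fintype V] (A : V → V → Prop)
    (hD : IsMonoC3FreeTournament A)
    (hstrong : ∀ u v : V, Relation.ReflTransGen A u v)
    (hcard : 3 ≤ Fintype.card V) :
    ∃ f : ℕ → V, Set.InjOn f (Set.Iio (Fintype.card V)) ∧
      (∀ x : V, ∃ j < Fintype.card V, f j = x) ∧
      ∀ j < Fintype.card V, A (f j) (f ((j + 1) % Fintype.card V)) := by
  have : Nonempty V := Fintype.card_pos_iff.1 (by omega)
  have hout : ∀ u, ∃ w, A u w := fun u => by
    obtain ⟨w, hw⟩ := Fintype.exists_ne_of_one_lt_card (by omega) u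
    obtain h | ⟨c, huc, -⟩ := (hstrong u w).cases_head
    exacts [absurd h.symm hw, ⟨c, huc⟩]
  obtain ⟨s, hs, hc, hne⟩ := Cycle.exists_nodup_chain_ne_nil hout
  obtain ⟨t, ht, htc, hall⟩ := hD.exists_hamiltonian_cycle hstrong s hs hc hne
  exact Cycle.exists_cyclic_enumeration ht htc hall
end

section
/- Let D be a mono-C3-free tournament with |V(D)| ≥ 3 whose strongly connected components are D_0, D_1, …, D_p with p ≥ 1, such that for all 0 ≤ i < j ≤ p, either every arc between D_i and D_j goes from D_j to D_i, or there is no arc between D_i and D_j. If every vertex v of D has |N⁺(v)| ≥ 1, then every partite set of size 2 is contained in D_0, D − D_0 is a tournament (no two of its vertices lie in a common partite set), and for all 0 ≤ i < j ≤ p every vertex of D_j dominates every vertex of D_i. -/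
/-- Let `D` be a mono-`C3`-free tournament with `|V(D)| ≥ 3` whose
strongly connected components are `C 0, C 1, …, C p` with `p ≥ 1`, indexed so that for
`i < j` no arc goes from `C i` to `C j`.  If every vertex has at least one out-neighbor,
then every partite set of size `2` (i.e. every non-adjacent pair of distinct vertices)
is contained in `C 0`, `D − C 0` is a tournament (any two distinct vertices outside
`C 0` are adjacent), and for `i < j` every vertex of `C j` dominates every vertex of
`C i`. -/
theorem components_structure_of_min_outdegree_one {V : Type*} [Fintype V]
    (A : V → V → Prop) (hD : IsMonoC3FreeTournament A)
    (hcard : 3 ≤ Fintype.card V)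
    (p : ℕ) (hp : 1 ≤ p) (C : ℕ → Set V)
    (hcover : ∀ v : V, ∃ i ≤ p, v ∈ C i)
    (hne : ∀ i ≤ p, (C i).Nonempty)
    (hconn : ∀ i ≤ p, ∀ u ∈ C i, ∀ v ∈ C i, Relation.ReflTransGen A u v)
    (hmax : ∀ i ≤ p, ∀ u ∈ C i, ∀ v : V,
      Relation.ReflTransGen A u v → Relation.ReflTransGen A v u → v ∈ C i)
    (hdisj : ∀ i j, i ≤ p → j ≤ p → i ≠ j → Disjoint (C i) (C j))
    (horder : ∀ i j, i < j → j ≤ p → ∀ u ∈ C i, ∀ v ∈ C j, ¬A u v)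
    (hout : ∀ v : V, ∃ u, A v u) :
    (∀ x y : V, x ≠ y → ¬A x y → ¬A y x → x ∈ C 0 ∧ y ∈ C 0) ∧
    (∀ x y : V, x ∉ C 0 → y ∉ C 0 → x ≠ y → A x y ∨ A y x) ∧
    (∀ i j, i < j → j ≤ p → ∀ u ∈ C j, ∀ v ∈ C i, A u v) := by
  obtain ⟨hirr, hasym, hcomp, hmono⟩ := hD
  have claim1 : ∀ x y : V, x ≠ y → ¬A x y → ¬A y x → x ∈ C 0 ∧ y ∈ C 0 := by
    intro x y hxy hxyA hyxA
    have hadjx : ∀ z : V, z ≠ x → z ≠ y → A x z ∨ A z x := by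
      intro z hzx hzy
      exact hcomp y x z hxy.symm hzx.symm hzy.symm hyxA hxyA
    have hadjy : ∀ z : V, z ≠ x → z ≠ y → A y z ∨ A z y := by
      intro z hzx hzy
      exact hcomp x y z hxy hzy.symm hzx.symm hxyA hyxA
    have hnocommon := hmono x y hxy hxyA hyxA
    obtain ⟨k, hkp, hxk⟩ := hcover x
    -- x reaches y
    obtain ⟨u, hxu⟩ := hout x
    have hux : u ≠ x := fun h => hirr x (h ▸ hxu)
    have huy : u ≠ y := fun h => hxyA (h ▸ hxu)
    have hAuy : A u y := by
      rcases hadjy u hux huy with h | h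
      · exact absurd ⟨hxu, h⟩ (hnocommon u)
      · exact h
    have rxy : Relation.ReflTransGen A x y :=
      Relation.ReflTransGen.head hxu (Relation.ReflTransGen.single hAuy)
    -- y reaches x
    obtain ⟨w, hyw⟩ := hout y
    have hwx : w ≠ x := fun h => hyxA (h ▸ hyw)
    have hwy : w ≠ y := fun h => hirr y (h ▸ hyw)
    have hAwx : A w x := by
      rcases hadjx w hwx hwy with h | h
      · exact absurd ⟨h, hyw⟩ (hnocommon w)
      · exact h
    have ryx : Relation.ReflTransGen A y x :=
      Relation.ReflTransGen.head hyw (Relation.ReflTransGen.single hAwx)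
    have hyk : y ∈ C k := hmax k hkp x hxk y rxy ryx
    by_cases hk0 : k = 0
    · exact ⟨hk0 ▸ hxk, hk0 ▸ hyk⟩
    · exfalso
      have hkpos : 0 < k := Nat.pos_of_ne_zero hk0
      obtain ⟨v, hv0⟩ := hne 0 (Nat.zero_le p)
      have hvx : v ≠ x := (hdisj 0 k (Nat.zero_le p) hkp (Ne.symm hk0)).ne_of_mem hv0 hxk
      have hvy : v ≠ y := (hdisj 0 k (Nat.zero_le p) hkp (Ne.symm hk0)).ne_of_mem hv0 hyk
      have hnvx : ¬A v x := horder 0 k hkpos hkp v hv0 x hxk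
      have hnvy : ¬A v y := horder 0 k hkpos hkp v hv0 y hyk
      have hAxv : A x v := (hadjx v hvx hvy).resolve_right hnvx
      have hAyv : A y v := (hadjy v hvx hvy).resolve_right hnvy
      exact hnocommon v ⟨hAxv, hAyv⟩
  refine ⟨claim1, ?_, ?_⟩
  · intro x y hx0 hy0 hxy
    by_contra h
    push_neg at h
    exact hx0 (claim1 x y hxy h.1 h.2).1
  · intro i j hij hjp u hu v hv
    have hnvu : ¬A v u := horder i j hij hjp v hv u hu
    by_contra hnuv
    have huv : u ≠ v := by
      rintro rfl
      exact (hdisj i j (le_of_lt (lt_of_lt_of_le hij hjp)) hjp hij.ne) |>.ne_of_mem hv hu rfl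
    have := (claim1 u v huv hnuv hnvu).1
    have hj0 : j ≠ 0 := by omega
    exact (hdisj 0 j (Nat.zero_le p) hjp (Ne.symm hj0)).ne_of_mem this hu rfl
end

section
/- Let D be a mono-C3-free tournament with |V(D)| ≥ 3 whose strongly connected components D_0, D_1, …, D_p (p ≥ 0) satisfy that for all 0 ≤ i < j ≤ p, either every arc between D_i and D_j goes from D_j to D_i, or there is no arc between D_i and D_j. If every vertex v of D has |N⁺(v)| ≥ 1, then D contains a directed Hamilton path. -/
/-!
Two local facts drive everything: in a mono-`C3`-free tournament every vertex has at most one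
non-neighbour, and if `x, y` are non-adjacent then every out-neighbour of `y` dominates `x`.

Hence a strong component with at least two vertices has a Hamiltonian cycle. A longest cycle
absorbs every outside vertex `w` having both an in- and an out-neighbour on it: some cycle arc
`a → b` has `w → b` but not `w → a`, and then `a → w` by the second fact. Otherwise strong
connectivity yields an arc `u → d` between outside vertices such that `u` dominates nothing and
`d` is dominated by nothing on the cycle; all cycle vertices but one dominate `u` and all but one
are dominated by `d`, so on a cycle of length at least `3` some cut `z | b` has `z → u` and
`d → b`, and `u d` is spliced in there.

The same cut argument opens the cycle of a component into a Hamiltonian path that starts at a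
vertex dominated by the end of the path through the component above, and ends at a vertex with an
out-neighbour in the component below (out-degree at least one provides one when the component is
a singleton). Concatenating these paths from the top component down gives the Hamilton path.
-/

namespace List

variable {α : Type*}

theorem exists_eq_append_cons_append_cons_of_not_nodup :
    ∀ {l : List α}, ¬l.Nodup → ∃ s a t r, l = s ++ a :: (t ++ a :: r)
  | [], h => absurd nodup_nil h
  | b :: l, h => by
    by_cases hb : b ∈ l
    · obtain ⟨t, r, rfl⟩ := append_of_mem hb
      exact ⟨[], b, t, r, rfl⟩
    · obtain ⟨s, a, t, r, rfl⟩ :=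
        exists_eq_append_cons_append_cons_of_not_nodup fun hl => h (nodup_cons.2 ⟨hb, hl⟩)
      exact ⟨b :: s, a, t, r, rfl⟩

theorem exists_eq_append_cons_cons_of_not_of_mem {P : α → Prop} {y : α} :
    ∀ {x : α} {l : List α}, ¬P x → y ∈ x :: l → P y →
      ∃ s a b t, x :: l = s ++ a :: b :: t ∧ ¬P a ∧ P b
  | x, [], hx, hy, hPy => absurd (mem_singleton.1 hy ▸ hPy) hx
  | x, b :: l, hx, hy, hPy => by
    by_cases hb : P b
    · exact ⟨[], x, b, l, rfl, hx, hb⟩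
    · obtain ⟨s, a, b', t, he, ha, hb'⟩ :=
        exists_eq_append_cons_cons_of_not_of_mem hb
          ((mem_cons.1 hy).resolve_left fun e => hx (e ▸ hPy)) hPy
      exact ⟨x :: s, a, b', t, by rw [he, cons_append], ha, hb'⟩

theorem exists_isRotated_not_and {P : α → Prop} {l : List α} {x y : α} (hx : x ∈ l)
    (hPx : ¬P x) (hy : y ∈ l) (hPy : P y) : ∃ a b m, b :: (m ++ [a]) ~r l ∧ ¬P a ∧ P b := by
  obtain ⟨s, t, rfl⟩ := append_of_mem hx
  have hrot : x :: (t ++ s) ~r s ++ x :: t := by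
    simpa using (isRotated_append (l := s) (l' := x :: t)).symm
  obtain ⟨s', a, b, t', he, ha, hb⟩ :=
    exists_eq_append_cons_cons_of_not_of_mem hPx (hrot.mem_iff.2 hy) hPy
  refine ⟨a, b, t' ++ s', ?_, ha, hb⟩
  have : (s' ++ [a]) ++ b :: t' ~r b :: (t' ++ s' ++ [a]) := by
    simpa using isRotated_append (l := s' ++ [a]) (l' := b :: t')
  exact this.symm.trans (by simpa [he] using hrot)

theorem exists_isRotated_cons_append_singleton {P Q : α → Prop} {l : List α} (hl : l.Nodup)
    (h3 : 3 ≤ l.length) (hP : {x | x ∈ l ∧ ¬P x}.Subsingleton)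
    (hQ : {x | x ∈ l ∧ ¬Q x}.Subsingleton) : ∃ b m z, b :: (m ++ [z]) ~r l ∧ P z ∧ Q b := by
  have hP2 : ∀ x ∈ l, ∀ y ∈ l, x ≠ y → P x ∨ P y := fun x hx y hy hxy => by
    by_contra! h; exact hxy (hP ⟨hx, h.1⟩ ⟨hy, h.2⟩)
  have hQ2 : ∀ x ∈ l, ∀ y ∈ l, x ≠ y → Q x ∨ Q y := fun x hx y hy hxy => by
    by_contra! h; exact hxy (hQ ⟨hx, h.1⟩ ⟨hy, h.2⟩)
  obtain ⟨a, b, c, r, rfl⟩ : ∃ a b c r, l = a :: b :: c :: r := by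
    match l, h3 with | a :: b :: c :: r, _ => exact ⟨a, b, c, r, rfl⟩
  set z := (c :: r).getLast (cons_ne_nil c r)
  have hz : z ∈ c :: r := getLast_mem _
  -- the three cuts (z|a), (a|b), (b|c) of the cycle; each bad vertex spoils at most one of them
  by_contra! H
  have h0 := H a (b :: (c :: r).dropLast) z (by rw [cons_append, dropLast_append_getLast])
  have r1 : a :: b :: c :: r ~r b :: (c :: r ++ [a]) := ⟨1, by simp⟩
  have r2 : a :: b :: c :: r ~r c :: (r ++ [a] ++ [b]) := ⟨2, by simp⟩
  have h1 := H b (c :: r) a r1.symm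
  have h2 := H c (r ++ [a]) b r2.symm
  simp only [nodup_cons, mem_cons, not_or] at hl
  have hza : z ≠ a := by rintro rfl; simp_all
  have hzb : z ≠ b := by rintro rfl; simp_all
  have := hP2 z (by simp [hz]) a (by simp) hza
  have := hP2 z (by simp [hz]) b (by simp) hzb
  have := hP2 a (by simp) b (by simp) hl.1.1
  have := hQ2 a (by simp) b (by simp) hl.1.1
  have := hQ2 a (by simp) c (by simp) hl.1.2.1
  have := hQ2 b (by simp) c (by simp) hl.2.1.1
  clear H
  tauto

theorem three_le_length_of_cycle_chain {R : α → α → Prop} (hR : ∀ x y, R x y → ¬R y x) :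
    ∀ {l : List α}, l ≠ [] → (l : Cycle α).Chain R → 3 ≤ l.length
  | [a], _, h => absurd ((Cycle.chain_singleton R a).1 h) (fun h' => hR a a h' h')
  | [a, b], _, h => by
    simp only [Cycle.chain_coe_cons, cons_append, nil_append, isChain_cons_cons] at h
    exact absurd h.2.1 (hR a b h.1)
  | _ :: _ :: _ :: _, _, _ => by simp

theorem exists_nodup_cycle_chain {R : α → α → Prop} {l : List α} (hl : l ≠ [])
    (h : (l : Cycle α).Chain R) : ∃ l' : List α, l' ≠ [] ∧ l'.Nodup ∧ (l' : Cycle α).Chain R := by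
  by_cases hnd : l.Nodup
  · exact ⟨l, hl, hnd, h⟩
  obtain ⟨s, a, t, r, hl'⟩ := exists_eq_append_cons_append_cons_of_not_nodup hnd
  have hlt : (a :: t).length < l.length := by simp [hl']; omega
  rw [hl'] at h
  have hrot : ((s ++ a :: (t ++ a :: r) : List α) : Cycle α) = (a :: (t ++ a :: (r ++ s)) : List α) :=
    Cycle.coe_eq_coe.2 (by simpa using isRotated_append (l := s) (l' := a :: (t ++ a :: r)))
  rw [hrot, Cycle.chain_coe_cons] at h
  have hsub : ((a :: t : List α) : Cycle α).Chain R :=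
    (Cycle.chain_coe_cons R a t).2 (h.prefix (by simp))
  exact exists_nodup_cycle_chain (cons_ne_nil a t) hsub
termination_by l.length

end List

theorem Cycle.chain_coe_cons_append_singleton {α : Type*} {R : α → α → Prop} {b z : α}
    {m : List α} :
    ((b :: (m ++ [z]) : List α) : Cycle α).Chain R ↔ List.IsChain R (b :: (m ++ [z])) ∧ R z b := by
  rw [Cycle.chain_coe_cons, ← List.cons_append, ← List.cons_append, List.isChain_append,
    List.getLast?_concat]
  simp

theorem Cycle.Chain.splice {α : Type*} {R : α → α → Prop} {b z : α} {m k : List α}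
    (h : ((b :: (m ++ [z]) : List α) : Cycle α).Chain R) (hk : List.IsChain R (z :: (k ++ [b]))) :
    ((b :: (m ++ z :: k) : List α) : Cycle α).Chain R := by
  have e1 : b :: (m ++ [z] ++ [b]) = (b :: m) ++ [z, b] := by simp
  have e2 : b :: (m ++ z :: k ++ [b]) = (b :: m) ++ z :: (k ++ [b]) := by simp
  rw [Cycle.chain_coe_cons, e1, List.isChain_append] at h
  rw [Cycle.chain_coe_cons, e2, List.isChain_append]
  exact ⟨h.1, hk, fun x hx y hy => h.2.2 x hx y (by simpa using hy)⟩

theorem Relation.ReflTransGen.exists_rel_not_and {α : Type*} {r : α → α → Prop} {P : α → Prop}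
    {a b : α} (h : Relation.ReflTransGen r a b) (ha : ¬P a) (hb : P b) :
    ∃ x y, r x y ∧ ¬P x ∧ P y := by
  induction h with
  | refl => exact absurd hb ha
  | @tail c d _ hcd ih => by_cases hc : P c; exacts [ih hc, ⟨c, d, hcd, hc, hb⟩]

theorem exists_rel_outside_of_forall_not_rel {V : Type*} {A : V → V → Prop}
    (hA : ∀ x y, Relation.ReflTransGen A x y) {l : List V} {a v : V} (ha : a ∈ l) (hv : v ∉ l)
    (hl : ∀ w ∉ l, (∃ x ∈ l, A x w) → ∀ y ∈ l, ¬A w y) :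
    ∃ u d, u ∉ l ∧ d ∉ l ∧ A u d ∧ (∀ x ∈ l, ¬A u x) ∧ ∀ x ∈ l, ¬A x d := by
  obtain ⟨s, y, hsy, hs, hy⟩ := (hA v a).exists_rel_not_and (P := (· ∈ l)) hv ha
  have hs' : ∀ x ∈ l, ¬A x s := fun x hx hxs => hl s hs ⟨x, hx, hxs⟩ y hy hsy
  obtain ⟨u, d, hud, hu, hd⟩ := (hA a s).exists_rel_not_and
    (P := fun w => w ∉ l ∧ ∀ x ∈ l, ¬A x w) (fun h => h.1 ha) ⟨hs, hs'⟩
  have hul : u ∉ l := fun h => hd.2 u h hud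
  have hu' : ∃ x ∈ l, A x u := by simpa using not_and.1 hu hul
  exact ⟨u, d, hul, hd.1, hud, hl u hul hu', hd.2⟩

open Relation

namespace IsMonoC3FreeTournament

variable {V : Type*} {A : V → V → Prop}

theorem irrefl (hD : IsMonoC3FreeTournament A) (x : V) : ¬A x x := hD.1 x

theorem asymm (hD : IsMonoC3FreeTournament A) {x y : V} (h : A x y) : ¬A y x := hD.2.1 x y h

theorem comap (hD : IsMonoC3FreeTournament A) {W : Type*} {f : W → V}
    (hf : Function.Injective f) : IsMonoC3FreeTournament fun a b => A (f a) (f b) :=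
  ⟨fun _ => hD.1 _, fun _ _ => hD.2.1 _ _,
    fun _ _ _ huv hvw huw => hD.2.2.1 _ _ _ (hf.ne huv) (hf.ne hvw) (hf.ne huw),
    fun _ _ hxy h₁ h₂ z => hD.2.2.2 _ _ (hf.ne hxy) h₁ h₂ (f z)⟩

theorem subsingleton_nonAdj (hD : IsMonoC3FreeTournament A) (x : V) :
    {y | y ≠ x ∧ ¬A x y ∧ ¬A y x}.Subsingleton := by
  rintro y ⟨hyx, hxy, hyx'⟩ z ⟨hzx, hxz, hzx'⟩
  by_contra hyz
  rcases hD.2.2.1 y x z hyx hzx.symm hyz hyx' hxy with h | h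
  exacts [hxz h, hzx' h]

theorem rel_of_nonAdj_of_rel (hD : IsMonoC3FreeTournament A) {x y z : V} (hxy : x ≠ y)
    (h₁ : ¬A x y) (h₂ : ¬A y x) (hyz : A y z) : A z x := by
  by_contra hzx
  have hxz : ¬A x z := fun hxz => hD.2.2.2 x y hxy h₁ h₂ z ⟨hxz, hyz⟩
  have hzy : z ≠ y := fun h => hD.irrefl y (h ▸ hyz)
  exact hzy (hD.subsingleton_nonAdj x ⟨fun h => h₂ (h ▸ hyz), hxz, hzx⟩ ⟨hxy.symm, h₁, h₂⟩)

open List in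
theorem exists_cycle_insert (hD : IsMonoC3FreeTournament A) {l : List V}
    (hc : (l : Cycle V).Chain A) {w x y : V} (hw : w ∉ l) (hx : x ∈ l) (hxw : A x w) (hy : y ∈ l)
    (hwy : A w y) : ∃ l' : List V, l'.Perm (w :: l) ∧ (l' : Cycle V).Chain A := by
  obtain ⟨a, b, m, hrot, hwa, hwb⟩ :=
    List.exists_isRotated_not_and (P := (A w ·)) hx (hD.asymm hxw) hy hwy
  rw [← Cycle.coe_eq_coe.2 hrot] at hc
  have haw : A a w := by
    by_contra haw
    have ha : a ∈ l := hrot.mem_iff.1 (by simp)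
    exact hD.asymm hwb (hD.rel_of_nonAdj_of_rel (ne_of_mem_of_not_mem ha hw).symm hwa haw
      (Cycle.chain_coe_cons_append_singleton.1 hc).2)
  refine ⟨b :: (m ++ [a, w]), ?_, hc.splice (by simp [haw, hwb])⟩
  calc b :: (m ++ [a, w]) = (b :: (m ++ [a])) ++ [w] := by simp
    _ ~ w :: b :: (m ++ [a]) := List.perm_append_singleton _ _
    _ ~ w :: l := hrot.perm.cons w

open List in
theorem exists_cycle_insert_pair (hD : IsMonoC3FreeTournament A) {l : List V}
    (hc : (l : Cycle V).Chain A) (hnd : l.Nodup) (h3 : 3 ≤ l.length) {u d : V} (hu : u ∉ l)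
    (hd : d ∉ l) (hud : A u d) (hul : ∀ x ∈ l, ¬A u x) (hdl : ∀ x ∈ l, ¬A x d) :
    ∃ l' : List V, l'.Perm (u :: d :: l) ∧ (l' : Cycle V).Chain A := by
  obtain ⟨b, m, z, hrot, hzu, hdb⟩ :=
    List.exists_isRotated_cons_append_singleton (P := (A · u)) (Q := (A d ·)) hnd h3
      ((hD.subsingleton_nonAdj u).anti fun x ⟨hx, hxu⟩ =>
        ⟨ne_of_mem_of_not_mem hx hu, hul x hx, hxu⟩)
      ((hD.subsingleton_nonAdj d).anti fun x ⟨hx, hdx⟩ =>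
        ⟨ne_of_mem_of_not_mem hx hd, hdx, hdl x hx⟩)
  rw [← Cycle.coe_eq_coe.2 hrot] at hc
  refine ⟨b :: (m ++ [z, u, d]), ?_, hc.splice (by simp [hzu, hud, hdb])⟩
  calc b :: (m ++ [z, u, d]) = (b :: (m ++ [z])) ++ [u, d] := by simp
    _ ~ [u, d] ++ b :: (m ++ [z]) := List.perm_append_comm
    _ ~ u :: d :: l := (hrot.perm.cons d).cons u

theorem exists_longer_cycle_s9 (hD : IsMonoC3FreeTournament A) (hA : ∀ x y, ReflTransGen A x y)
    {l : List V} (hl : l ≠ []) (hnd : l.Nodup) (hc : (l : Cycle V).Chain A) {v : V} (hv : v ∉ l) :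
    ∃ l' : List V, l'.Nodup ∧ (l' : Cycle V).Chain A ∧ l.length < l'.length := by
  by_cases hins : ∃ w ∉ l, (∃ x ∈ l, A x w) ∧ ∃ y ∈ l, A w y
  · obtain ⟨w, hw, ⟨x, hx, hxw⟩, y, hy, hwy⟩ := hins
    obtain ⟨l', hperm, hc'⟩ := hD.exists_cycle_insert hc hw hx hxw hy hwy
    exact ⟨l', hperm.nodup_iff.2 (List.nodup_cons.2 ⟨hw, hnd⟩), hc', by simp [hperm.length_eq]⟩
  · obtain ⟨a, ha⟩ := List.exists_mem_of_ne_nil l hl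
    obtain ⟨u, d, hu, hd, hud, hul, hdl⟩ := exists_rel_outside_of_forall_not_rel hA ha hv
      fun w hw hxw y hy hwy => hins ⟨w, hw, hxw, y, hy, hwy⟩
    obtain ⟨l', hperm, hc'⟩ := hD.exists_cycle_insert_pair hc hnd
      (List.three_le_length_of_cycle_chain (fun _ _ => hD.asymm) hl hc) hu hd hud hul hdl
    have hud' : u ≠ d := fun h => hD.irrefl u (h ▸ hud)
    exact ⟨l', hperm.nodup_iff.2 (by simp [hu, hd, hnd, hud']), hc', by simp [hperm.length_eq]⟩

theorem exists_hamiltonian_cycle_of_cycle [Fintype V] (hD : IsMonoC3FreeTournament A)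
    (hA : ∀ x y, ReflTransGen A x y) {l : List V} (hl : l ≠ []) (hnd : l.Nodup)
    (hc : (l : Cycle V).Chain A) :
    ∃ l' : List V, l'.Nodup ∧ (∀ x, x ∈ l') ∧ (l' : Cycle V).Chain A := by
  by_cases hall : ∀ x, x ∈ l
  · exact ⟨l, hnd, hall, hc⟩
  obtain ⟨v, hv⟩ := not_forall.1 hall
  obtain ⟨l', hnd', hc', hlt⟩ := hD.exists_longer_cycle_s9 hA hl hnd hc hv
  have := hnd'.length_le_card
  exact hD.exists_hamiltonian_cycle_of_cycle hA (List.ne_nil_of_length_pos (by omega)) hnd' hc'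
termination_by Fintype.card V - l.length

theorem exists_hamiltonian_cycle_s9 [Fintype V] [Nontrivial V] (hD : IsMonoC3FreeTournament A)
    (hA : ∀ x y, ReflTransGen A x y) :
    ∃ l : List V, l.Nodup ∧ (∀ x, x ∈ l) ∧ (l : Cycle V).Chain A := by
  obtain ⟨x, y, hxy⟩ := exists_pair_ne V
  obtain ⟨z, hxz, -⟩ := (hA x y).cases_head.resolve_left hxy
  obtain ⟨l, hch, hlast⟩ := List.exists_isChain_cons_of_relationReflTransGen (hA z x)
  have hc : ((z :: l : List V) : Cycle V).Chain A := by
    rw [Cycle.chain_coe_cons, ← List.cons_append, List.isChain_append,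
      List.getLast?_eq_some_getLast (List.cons_ne_nil z l), hlast]
    simpa using ⟨hch, hxz⟩
  obtain ⟨l₀, hl₀, hnd₀, hc₀⟩ := List.exists_nodup_cycle_chain (List.cons_ne_nil z l) hc
  exact hD.exists_hamiltonian_cycle_of_cycle hA hl₀ hnd₀ hc₀

theorem exists_hamiltonian_path [Fintype V] (hD : IsMonoC3FreeTournament A)
    (hA : ∀ x y, ReflTransGen A x y) {P Q : V → Prop} (hP : {x | ¬P x}.Subsingleton)
    (hQ : {x | ¬Q x}.Subsingleton) (hP' : ∃ x, P x) (hQ' : ∃ x, Q x) :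
    ∃ l : List V, l.Nodup ∧ (∀ x, x ∈ l) ∧ l.IsChain A ∧ (∀ x ∈ l.head?, P x) ∧
      ∀ x ∈ l.getLast?, Q x := by
  obtain ⟨x, hx⟩ := hP'
  rcases subsingleton_or_nontrivial V with hV | hV
  · obtain ⟨y, hy⟩ := hQ'
    refine ⟨[x], List.nodup_singleton x, fun v => by simp [Subsingleton.elim v x],
      .singleton x, by simpa using hx, by simpa [Subsingleton.elim x y] using hy⟩
  obtain ⟨l, hnd, hall, hc⟩ := hD.exists_hamiltonian_cycle_s9 hA
  obtain ⟨b, m, z, hrot, hz, hb⟩ := List.exists_isRotated_cons_append_singleton hnd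
    (List.three_le_length_of_cycle_chain (fun _ _ => hD.asymm) (List.ne_nil_of_mem (hall x)) hc)
    (hQ.anti fun _ h => h.2) (hP.anti fun _ h => h.2)
  rw [← Cycle.coe_eq_coe.2 hrot] at hc
  refine ⟨b :: (m ++ [z]), hrot.nodup_iff.2 hnd, fun v => hrot.mem_iff.2 (hall v),
    (Cycle.chain_coe_cons_append_singleton.1 hc).1, by simpa using hb, ?_⟩
  rw [← List.cons_append, List.getLast?_concat]
  simpa using hz

end IsMonoC3FreeTournament

section Levels

/- `c v` plays the role of the index of the strong component containing `v`: arcs never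
increase it, and the components are its level sets. -/

variable {V : Type*} {A : V → V → Prop} {c : V → ℕ}

theorem level_le_of_reflTransGen (hmono : ∀ u v, A u v → c v ≤ c u) {u v : V}
    (h : ReflTransGen A u v) : c v ≤ c u := by
  induction h with
  | refl => exact le_rfl
  | tail _ hbc ih => exact (hmono _ _ hbc).trans ih

theorem reflTransGen_level (hmono : ∀ u v, A u v → c v ≤ c u) {u v : V}
    (h : ReflTransGen A u v) {i : ℕ} (hu : c u = i) (hv : c v = i) :
    ReflTransGen (fun x y : {x // c x = i} => A x y) ⟨u, hu⟩ ⟨v, hv⟩ := by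
  induction h with
  | refl => exact .refl
  | @tail b w hub hbw ih =>
    have hb : c b = i := le_antisymm (hu ▸ level_le_of_reflTransGen hmono hub) (hv ▸ hmono _ _ hbw)
    exact (ih hb).tail hbw

theorem exists_path_level [Fintype V] (hD : IsMonoC3FreeTournament A)
    (hmono : ∀ u v, A u v → c v ≤ c u) (hconn : ∀ u v, c u = c v → ReflTransGen A u v) {i : ℕ}
    {P Q : V → Prop} (hP : {x | c x = i ∧ ¬P x}.Subsingleton)
    (hQ : {x | c x = i ∧ ¬Q x}.Subsingleton) (hP' : ∃ x, c x = i ∧ P x)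
    (hQ' : ∃ x, c x = i ∧ Q x) :
    ∃ L : List V, L.Nodup ∧ (∀ x, x ∈ L ↔ c x = i) ∧ L.IsChain A ∧ (∀ x ∈ L.head?, P x) ∧
      ∀ x ∈ L.getLast?, Q x := by
  obtain ⟨x, hx, hPx⟩ := hP'
  obtain ⟨y, hy, hQy⟩ := hQ'
  obtain ⟨l, hnd, hall, hch, hhead, hlast⟩ :=
    (hD.comap (Subtype.val_injective (p := fun x => c x = i))).exists_hamiltonian_path
      (fun a b => reflTransGen_level hmono (hconn a b (a.2.trans b.2.symm)) a.2 b.2)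
      (P := fun a => P a) (Q := fun a => Q a)
      (fun a ha b hb => Subtype.ext (hP ⟨a.2, ha⟩ ⟨b.2, hb⟩))
      (fun a ha b hb => Subtype.ext (hQ ⟨a.2, ha⟩ ⟨b.2, hb⟩)) ⟨⟨x, hx⟩, hPx⟩ ⟨⟨y, hy⟩, hQy⟩
  refine ⟨l.map Subtype.val, hnd.map Subtype.val_injective,
    fun v => ⟨fun hv => ?_, fun hv => List.mem_map_of_mem (hall ⟨v, hv⟩)⟩,
    (List.isChain_map _).2 hch, fun x hx => ?_, fun x hx => ?_⟩
  · obtain ⟨a, -, rfl⟩ := List.mem_map.1 hv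
    exact a.2
  · obtain ⟨a, ha, rfl⟩ := Option.mem_map.1 (List.head?_map ▸ hx)
    exact hhead a ha
  · obtain ⟨a, ha, rfl⟩ := Option.mem_map.1 (List.getLast?_map ▸ hx)
    exact hlast a ha

theorem exists_rel_level_succ (hD : IsMonoC3FreeTournament A)
    (hmono : ∀ u v, A u v → c v ≤ c u) (hout : ∀ v, ∃ w, A v w) {j : ℕ} {u v : V}
    (hu : c u = j + 1) (hv : c v = j) : ∃ x, c x = j + 1 ∧ ∃ y, c y = j ∧ A x y := by
  by_cases huv : A u v
  · exact ⟨u, hu, v, hv, huv⟩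
  have hvu : ¬A v u := fun h => by have := hmono _ _ h; omega
  obtain ⟨w, huw⟩ := hout u
  have hwv : A w v := hD.rel_of_nonAdj_of_rel (by rintro rfl; omega) hvu huv huw
  have := hmono _ _ hwv
  have := hmono _ _ huw
  rcases (by omega : c w = j ∨ c w = j + 1) with hw | hw
  exacts [⟨u, hu, w, hw, huw⟩, ⟨w, hw, v, hv, hwv⟩]

theorem subsingleton_level_succ_not_exists_rel (hD : IsMonoC3FreeTournament A)
    (hmono : ∀ u v, A u v → c v ≤ c u) {j : ℕ} {v : V} (hv : c v = j) :
    {x | c x = j + 1 ∧ ¬∃ y, c y = j ∧ A x y}.Subsingleton :=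
  (hD.subsingleton_nonAdj v).anti fun x ⟨hx, hxy⟩ =>
    ⟨by rintro rfl; omega, fun h => by have := hmono _ _ h; omega, fun h => hxy ⟨v, hv, h⟩⟩

theorem subsingleton_level_not_rel (hD : IsMonoC3FreeTournament A)
    (hmono : ∀ u v, A u v → c v ≤ c u) {j : ℕ} {t : V} (ht : j < c t) :
    {x | c x = j ∧ ¬A t x}.Subsingleton :=
  (hD.subsingleton_nonAdj t).anti fun x ⟨hx, htx⟩ =>
    ⟨by rintro rfl; omega, htx, fun h => by have := hmono _ _ h; omega⟩

theorem exists_path_levels_le [Fintype V] (hD : IsMonoC3FreeTournament A)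
    (hmono : ∀ u v, A u v → c v ≤ c u) (hconn : ∀ u v, c u = c v → ReflTransGen A u v)
    (hout : ∀ v, ∃ w, A v w) (j : ℕ) (hne : ∀ i < j, ∃ v, c v = i) {Q : V → Prop}
    (hQ : {x | c x = j ∧ ¬Q x}.Subsingleton) (hQ' : ∃ x, c x = j ∧ Q x) :
    ∃ L : List V, L.Nodup ∧ (∀ x, x ∈ L ↔ c x ≤ j) ∧ L.IsChain A ∧ ∀ x ∈ L.head?, Q x := by
  induction j generalizing Q with
  | zero =>
    obtain ⟨L, hnd, hmem, hch, hhead, -⟩ := exists_path_level hD hmono hconn (Q := fun _ => True)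
      hQ (fun _ hx => absurd trivial hx.2) hQ' (hQ'.imp fun _ h => ⟨h.1, trivial⟩)
    exact ⟨L, hnd, fun x => (hmem x).trans Nat.le_zero.symm, hch, hhead⟩
  | succ j ih =>
    obtain ⟨v, hv⟩ := hne j j.lt_succ_self
    obtain ⟨u, hu, hQu⟩ := hQ'
    obtain ⟨L₁, hnd₁, hmem₁, hch₁, hhead₁, hlast₁⟩ := exists_path_level hD hmono hconn hQ
      (subsingleton_level_succ_not_exists_rel hD hmono hv) ⟨u, hu, hQu⟩
      (exists_rel_level_succ hD hmono hout hu hv)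
    have hL₁ : L₁ ≠ [] := List.ne_nil_of_mem ((hmem₁ u).2 hu)
    obtain ⟨t, ht⟩ := Option.isSome_iff_exists.1 (List.getLast?_isSome.2 hL₁)
    obtain ⟨h, hh, hth⟩ := hlast₁ t ht
    have hct : c t = j + 1 := (hmem₁ t).1 (List.mem_of_getLast? ht)
    obtain ⟨L₂, hnd₂, hmem₂, hch₂, hhead₂⟩ := ih (fun i hi => hne i (by omega))
      (subsingleton_level_not_rel hD hmono (hct ▸ j.lt_succ_self)) ⟨h, hh, hth⟩
    refine ⟨L₁ ++ L₂, ?_, fun x => ?_, ?_, ?_⟩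
    · refine List.nodup_append.2 ⟨hnd₁, hnd₂, fun x hx y hy => ?_⟩
      rintro rfl
      have := (hmem₁ x).1 hx
      have := (hmem₂ x).1 hy
      omega
    · simp only [List.mem_append, hmem₁, hmem₂]
      omega
    · exact List.isChain_append.2
        ⟨hch₁, hch₂, fun x hx y hy => Option.mem_unique hx ht ▸ hhead₂ y hy⟩
    · exact fun x hx => hhead₁ x (List.head?_append_of_ne_nil L₁ hL₁ ▸ hx)

end Levels

theorem List.IsChain.exists_hamiltonian_enum {V : Type*} [Fintype V] [Nonempty V]
    {A : V → V → Prop} {L : List V} (hch : L.IsChain A) (hnd : L.Nodup) (hL : ∀ x, x ∈ L) :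
    ∃ f : ℕ → V, Set.InjOn f (Set.Iio (Fintype.card V)) ∧
      (∀ x : V, ∃ j < Fintype.card V, f j = x) ∧
      ∀ j : ℕ, j + 1 < Fintype.card V → A (f j) (f (j + 1)) := by
  classical
  obtain ⟨x₀⟩ := ‹Nonempty V›
  have hlen : L.length = Fintype.card V := by
    simpa using Fintype.card_congr (hnd.getEquivOfForallMemList L hL)
  refine ⟨fun n => L.getD n x₀, ?_, fun x => ?_, fun j hj => ?_⟩
  · intro i hi j hj hij
    rw [Set.mem_Iio, ← hlen] at hi hj
    simp only [List.getD_eq_getElem _ _ hi, List.getD_eq_getElem _ _ hj] at hij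
    exact hnd.getElem_inj_iff.1 hij
  · obtain ⟨n, hn, rfl⟩ := List.mem_iff_getElem.1 (hL x)
    exact ⟨n, hlen ▸ hn, List.getD_eq_getElem _ _ hn⟩
  · rw [← hlen] at hj
    simp only [List.getD_eq_getElem _ _ hj, List.getD_eq_getElem _ _ (by omega : j < L.length)]
    exact List.isChain_iff_getElem.1 hch j hj

theorem directed_hamilton_path_of_min_outdegree_one_general {V : Type*} [Fintype V]
    (A : V → V → Prop) (hD : IsMonoC3FreeTournament A)
    (p : ℕ) (C : ℕ → Set V)
    (hcover : ∀ v : V, ∃ i ≤ p, v ∈ C i)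
    (hne : ∀ i ≤ p, (C i).Nonempty)
    (hconn : ∀ i ≤ p, ∀ u ∈ C i, ∀ v ∈ C i, Relation.ReflTransGen A u v)
    (hdisj : ∀ i j, i ≤ p → j ≤ p → i ≠ j → Disjoint (C i) (C j))
    (horder : ∀ i j, i < j → j ≤ p → ∀ u ∈ C i, ∀ v ∈ C j, ¬A u v)
    (hout : ∀ v : V, ∃ u, A v u) :
    ∃ f : ℕ → V, Set.InjOn f (Set.Iio (Fintype.card V)) ∧
      (∀ x : V, ∃ j < Fintype.card V, f j = x) ∧
      ∀ j : ℕ, j + 1 < Fintype.card V → A (f j) (f (j + 1)) := by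
  choose c hcp hc using hcover
  have hmono : ∀ u v, A u v → c v ≤ c u := fun u v huv =>
    not_lt.1 fun h => horder _ _ h (hcp v) u (hc u) v (hc v) huv
  have hlevel : ∀ i ≤ p, ∀ v ∈ C i, c v = i := fun i hi v hv =>
    by_contra fun h => Set.disjoint_left.1 (hdisj _ _ (hcp v) hi h) (hc v) hv
  obtain ⟨v, hv⟩ := hne p le_rfl
  have : Nonempty V := ⟨v⟩
  obtain ⟨L, hnd, hmem, hch, -⟩ := exists_path_levels_le hD hmono
    (fun u w h => hconn _ (hcp u) u (hc u) w (h ▸ hc w)) hout p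
    (fun i hi => (hne i hi.le).imp (hlevel i hi.le)) (Q := fun _ => True)
    (fun _ hx => absurd trivial hx.2) ⟨v, hlevel p le_rfl v hv, trivial⟩
  exact hch.exists_hamiltonian_enum hnd fun x => (hmem x).2 (hcp x)

/-- Let `D` be a mono-`C3`-free tournament with `|V(D)| ≥ 3` whose
strongly connected components are `C 0, C 1, …, C p` (`p ≥ 0`), indexed so that for
`i < j` no arc goes from `C i` to `C j`.  If every vertex has at least one out-neighbor,
then `D` contains a directed Hamilton path. -/
theorem directed_hamilton_path_of_min_outdegree_one {V : Type*} [Fintype V]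
    (A : V → V → Prop) (hD : IsMonoC3FreeTournament A)
    (hcard : 3 ≤ Fintype.card V)
    (p : ℕ) (C : ℕ → Set V)
    (hcover : ∀ v : V, ∃ i ≤ p, v ∈ C i)
    (hne : ∀ i ≤ p, (C i).Nonempty)
    (hconn : ∀ i ≤ p, ∀ u ∈ C i, ∀ v ∈ C i, Relation.ReflTransGen A u v)
    (hmax : ∀ i ≤ p, ∀ u ∈ C i, ∀ v : V,
      Relation.ReflTransGen A u v → Relation.ReflTransGen A v u → v ∈ C i)
    (hdisj : ∀ i j, i ≤ p → j ≤ p → i ≠ j → Disjoint (C i) (C j))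
    (horder : ∀ i j, i < j → j ≤ p → ∀ u ∈ C i, ∀ v ∈ C j, ¬A u v)
    (hout : ∀ v : V, ∃ u, A v u) :
    ∃ f : ℕ → V, Set.InjOn f (Set.Iio (Fintype.card V)) ∧
      (∀ x : V, ∃ j < Fintype.card V, f j = x) ∧
      ∀ j : ℕ, j + 1 < Fintype.card V → A (f j) (f (j + 1)) :=
  directed_hamilton_path_of_min_outdegree_one_general A hD p C hcover hne hconn hdisj horder hout
end

section
/- Let D be a mono-C3-free tournament with |V(D)| ≥ 3 whose strongly connected components are D_0, D_1, …, D_p (p ≥ 0), such that for all 0 ≤ i < j ≤ p, either every arc between D_i and D_j goes from D_j to D_i, or there is no arc between D_i and D_j. If D has at least two partite sets of size 2, then all partite sets of size 2 are contained in D_0, D − D_0 is a tournament (no two of its vertices lie in a common partite set), and for all 0 ≤ i < j ≤ p every vertex of D_j dominates every vertex of D_i. -/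
/-- Let `D` be a mono-`C3`-free tournament with `|V(D)| ≥ 3` whose
strongly connected components are `C 0, C 1, …, C p` (`p ≥ 0`), indexed so that for
`i < j` no arc goes from `C i` to `C j`.  If `D` has at least two partite sets of size
`2` (two disjoint non-adjacent pairs), then all partite sets of size `2` are contained
in `C 0`, `D − C 0` is a tournament (any two distinct vertices outside `C 0` are
adjacent), and for `i < j` every vertex of `C j` dominates every vertex of `C i`. -/
theorem components_structure_of_two_doubleton_parts {V : Type*} [Fintype V]
    (A : V → V → Prop) (hD : IsMonoC3FreeTournament A)
    (hcard : 3 ≤ Fintype.card V)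
    (p : ℕ) (C : ℕ → Set V)
    (hcover : ∀ v : V, ∃ i ≤ p, v ∈ C i)
    (hne : ∀ i ≤ p, (C i).Nonempty)
    (hconn : ∀ i ≤ p, ∀ u ∈ C i, ∀ v ∈ C i, Relation.ReflTransGen A u v)
    (hmax : ∀ i ≤ p, ∀ u ∈ C i, ∀ v : V,
      Relation.ReflTransGen A u v → Relation.ReflTransGen A v u → v ∈ C i)
    (hdisj : ∀ i j, i ≤ p → j ≤ p → i ≠ j → Disjoint (C i) (C j))
    (horder : ∀ i j, i < j → j ≤ p → ∀ u ∈ C i, ∀ v ∈ C j, ¬A u v)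
    (htwo : ∃ x y x' y' : V, x ≠ y ∧ ¬A x y ∧ ¬A y x ∧ x' ≠ y' ∧ ¬A x' y' ∧ ¬A y' x' ∧
      x ≠ x' ∧ x ≠ y' ∧ y ≠ x' ∧ y ≠ y') :
    (∀ x y : V, x ≠ y → ¬A x y → ¬A y x → x ∈ C 0 ∧ y ∈ C 0) ∧
    (∀ x y : V, x ∉ C 0 → y ∉ C 0 → x ≠ y → A x y ∨ A y x) ∧
    (∀ i j, i < j → j ≤ p → ∀ u ∈ C j, ∀ v ∈ C i, A u v) := by
  obtain ⟨hirr, hasym, h3, h4⟩ := hD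
  obtain ⟨x, y, x', y', hxy, hAxy, hAyx, hx'y', hAx'y', hAy'x', hxx', hxy2, hyx', hyy'⟩ := htwo
  -- partner uniqueness
  have huniq : ∀ a b c : V, a ≠ b → ¬A a b → ¬A b a → a ≠ c → ¬A a c → ¬A c a → b = c := by
    intro a b c hab h1 h2 hac h1' h2'
    by_contra hbc
    rcases h3 b a c (Ne.symm hab) hac hbc h2 h1 with h | h
    · exact h1' h
    · exact h2' h
  -- mutual reachability within a pair, given a disjoint second pair
  have hcyc : ∀ a b c d : V, a ≠ b → ¬A a b → ¬A b a → c ≠ d → ¬A c d → ¬A d c →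
      a ≠ c → a ≠ d → b ≠ c → b ≠ d →
      Relation.ReflTransGen A a b ∧ Relation.ReflTransGen A b a := by
    intro a b c d hab h1 h2 hcd h5 h6 hac had hbc hbd
    have adjac : A a c ∨ A c a := h3 b a c (Ne.symm hab) hac hbc h2 h1
    have adjad : A a d ∨ A d a := h3 b a d (Ne.symm hab) had hbd h2 h1
    have adjbc : A b c ∨ A c b := h3 a b c hab hbc hac h1 h2
    have adjbd : A b d ∨ A d b := h3 a b d hab hbd had h1 h2
    rcases adjac with hac' | hca
    · have hcb : A c b := adjbc.resolve_left (fun h => h4 a b hab h1 h2 c ⟨hac', h⟩)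
      have hbd' : A b d := adjbd.resolve_right (fun h => h4 c d hcd h5 h6 b ⟨hcb, h⟩)
      have hda : A d a := adjad.resolve_left (fun h => h4 a b hab h1 h2 d ⟨h, hbd'⟩)
      exact ⟨Relation.ReflTransGen.head hac' (Relation.ReflTransGen.single hcb),
        Relation.ReflTransGen.head hbd' (Relation.ReflTransGen.single hda)⟩
    · have had' : A a d := adjad.resolve_right (fun h => h4 c d hcd h5 h6 a ⟨hca, h⟩)
      have hdb : A d b := adjbd.resolve_left (fun h => h4 a b hab h1 h2 d ⟨had', h⟩)
      have hbc' : A b c := adjbc.resolve_right (fun h => h4 c d hcd h5 h6 b ⟨h, hdb⟩)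
      exact ⟨Relation.ReflTransGen.head had' (Relation.ReflTransGen.single hdb),
        Relation.ReflTransGen.head hbc' (Relation.ReflTransGen.single hca)⟩
  -- a vertex of a pair lies in C 0, given a disjoint second pair
  have hin : ∀ a b c d : V, a ≠ b → ¬A a b → ¬A b a → c ≠ d → ¬A c d → ¬A d c →
      a ≠ c → a ≠ d → b ≠ c → b ≠ d → a ∈ C 0 := by
    intro a b c d hab h1 h2 hcd h5 h6 hac had hbc hbd
    obtain ⟨hrab, hrba⟩ := hcyc a b c d hab h1 h2 hcd h5 h6 hac had hbc hbd
    obtain ⟨i, hip, hai⟩ := hcover a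
    rcases Nat.eq_zero_or_pos i with h0 | hpos
    · exact h0 ▸ hai
    · exfalso
      have hbi : b ∈ C i := hmax i hip a hai b hrab hrba
      obtain ⟨w, hw⟩ := hne 0 (Nat.zero_le p)
      have hdis := hdisj 0 i (Nat.zero_le p) hip (Nat.ne_of_lt hpos)
      have hwa : w ≠ a := fun h => Set.disjoint_left.mp hdis hw (h ▸ hai)
      have hwb : w ≠ b := fun h => Set.disjoint_left.mp hdis hw (h ▸ hbi)
      have hnwa : ¬A w a := horder 0 i hpos hip w hw a hai
      have hnwb : ¬A w b := horder 0 i hpos hip w hw b hbi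
      have haw : A a w := (h3 b a w (Ne.symm hab) (Ne.symm hwa) (Ne.symm hwb) h2 h1).resolve_right hnwa
      have hbw : A b w := (h3 a b w hab (Ne.symm hwb) (Ne.symm hwa) h1 h2).resolve_right hnwb
      exact h4 a b hab h1 h2 w ⟨haw, hbw⟩
  have item1 : ∀ u v : V, u ≠ v → ¬A u v → ¬A v u → u ∈ C 0 ∧ v ∈ C 0 := by
    intro u v huv h1 h2
    by_cases hux : u = x
    · subst hux
      have hv : v = y := huniq u v y huv h1 h2 hxy hAxy hAyx
      subst hv
      exact ⟨hin u v x' y' huv h1 h2 hx'y' hAx'y' hAy'x' hxx' hxy2 hyx' hyy',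
        hin v u x' y' (Ne.symm huv) h2 h1 hx'y' hAx'y' hAy'x' hyx' hyy' hxx' hxy2⟩
    · by_cases huy : u = y
      · subst huy
        have hv : v = x := huniq u v x huv h1 h2 (Ne.symm hxy) hAyx hAxy
        subst hv
        exact ⟨hin u v x' y' huv h1 h2 hx'y' hAx'y' hAy'x' hyx' hyy' hxx' hxy2,
          hin v u x' y' (Ne.symm huv) h2 h1 hx'y' hAx'y' hAy'x' hxx' hxy2 hyx' hyy'⟩
      · have hvx : v ≠ x := fun h => huy (huniq v u y (Ne.symm huv) h2 h1
          (h ▸ hxy : v ≠ y) (h ▸ hAxy) (h ▸ hAyx) ▸ rfl)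
        have hvy : v ≠ y := fun h => hux (huniq v u x (Ne.symm huv) h2 h1
          (h ▸ Ne.symm hxy : v ≠ x) (h ▸ hAyx) (h ▸ hAxy) ▸ rfl)
        exact ⟨hin u v x y huv h1 h2 hxy hAxy hAyx hux huy hvx hvy,
          hin v u x y (Ne.symm huv) h2 h1 hxy hAxy hAyx hvx hvy hux huy⟩
  refine ⟨item1, ?_, ?_⟩
  · intro a b ha hb hab
    by_contra hcon
    push_neg at hcon
    exact ha (item1 a b hab hcon.1 hcon.2).1
  · intro i j hij hjp u hu v hv
    have hne' : u ≠ v := fun h =>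
      Set.disjoint_left.mp (hdisj i j (le_of_lt (lt_of_lt_of_le hij hjp)) hjp (Nat.ne_of_lt hij))
        hv (h ▸ hu)
    by_contra hcon
    have hnvu : ¬A v u := horder i j hij hjp v hv u hu
    have hu0 : u ∈ C 0 := (item1 u v hne' hcon hnvu).1
    exact Set.disjoint_left.mp (hdisj 0 j (Nat.zero_le p) hjp (Nat.ne_of_lt (lt_of_le_of_lt (Nat.zero_le i) hij))) hu0 hu
end

section
/- Let D be a mono-C3-free tournament and let P = v_1 v_2 ⋯ v_t be a directed path in D. If there exists a vertex v ∈ V(D) \ V(P) such that v → v_i for some i ∈ [1, t], then D contains a directed path P' = u_1 u_2 ⋯ u_{t+1} with V(P') = V(P) ∪ {v} and u_{t+1} = v_t. -/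
/-- Let `D` be a mono-`C3`-free tournament and let
`P = p 0, p 1, …, p (t-1)` be a directed path in `D`.  If a vertex `v` outside `P`
dominates some vertex of `P`, then `D` contains a directed path on the vertex set
`V(P) ∪ {v}` ending at `p (t-1)`. -/
theorem directed_path_insert {V : Type*} [Fintype V] (A : V → V → Prop)
    (hD : IsMonoC3FreeTournament A)
    (t : ℕ) (ht : 1 ≤ t) (p : ℕ → V)
    (hinj : Set.InjOn p (Set.Iio t))
    (hpath : ∀ j : ℕ, j + 1 < t → A (p j) (p (j + 1)))
    (v : V) (hv : ∀ j < t, p j ≠ v)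
    (hdom : ∃ i < t, A v (p i)) :
    ∃ q : ℕ → V, Set.InjOn q (Set.Iio (t + 1)) ∧
      (∀ j : ℕ, j + 1 < t + 1 → A (q j) (q (j + 1))) ∧
      q t = p (t - 1) ∧
      ∀ x : V, (∃ j < t + 1, q j = x) ↔ (x = v ∨ ∃ j < t, p j = x) := by
  classical
  obtain ⟨hirr, hasym, hadj, hcom⟩ := hD
  have hex : ∃ i, i < t ∧ A v (p i) := by
    obtain ⟨i, hi, ha⟩ := hdom; exact ⟨i, hi, ha⟩
  set i := Nat.find hex with hi_def
  obtain ⟨hit, hvi⟩ := Nat.find_spec hex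
  have hmin : ∀ j < i, ¬ A v (p j) := fun j hj hA =>
    Nat.find_min hex hj ⟨lt_trans hj hit, hA⟩
  have hkey : 0 < i → A (p (i - 1)) v := by
    intro hpos
    by_contra hnA
    have h1 : i - 1 < i := Nat.sub_lt hpos one_pos
    have hnA' : ¬ A v (p (i - 1)) := hmin _ h1
    have hne : p (i - 1) ≠ v := hv _ (lt_trans h1 hit)
    have hpath' : A (p (i - 1)) (p i) := by
      have := hpath (i - 1) (by omega)
      rwa [Nat.sub_add_cancel hpos] at this
    exact hcom (p (i - 1)) v hne hnA hnA' (p i) ⟨hpath', hvi⟩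
  refine ⟨fun j => if j < i then p j else if j = i then v else p (j - 1), ?_, ?_, ?_, ?_⟩
  · -- injectivity
    intro a ha b hb hab
    simp only [Set.mem_Iio] at ha hb
    by_cases hai : a = i <;> by_cases hbi : b = i
    · omega
    · exfalso
      rcases lt_or_gt_of_ne hbi with hblt | hbgt
      · simp only [hai, lt_irrefl, if_false, if_pos rfl, if_pos hblt] at hab
        exact hv b (lt_trans hblt hit) hab.symm
      · simp only [hai, lt_irrefl, if_false, if_pos rfl,
          if_neg (by omega : ¬ b < i), if_neg hbi] at hab
        exact hv (b - 1) (by omega) hab.symm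
    · exfalso
      rcases lt_or_gt_of_ne hai with halt | hagt
      · simp only [hbi, lt_irrefl, if_false, if_pos rfl, if_pos halt] at hab
        exact hv a (lt_trans halt hit) hab
      · simp only [hbi, lt_irrefl, if_false, if_pos rfl,
          if_neg (by omega : ¬ a < i), if_neg hai] at hab
        exact hv (a - 1) (by omega) hab
    · rcases lt_or_gt_of_ne hai with halt | hagt <;>
        rcases lt_or_gt_of_ne hbi with hblt | hbgt
      · simp only [if_pos halt, if_pos hblt] at hab
        exact hinj (by simp; omega) (by simp; omega) hab
      · simp only [if_pos halt, if_neg (by omega : ¬ b < i), if_neg hbi] at hab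
        have := hinj (by simp; omega) (Set.mem_Iio.2 (by omega : b - 1 < t)) hab
        omega
      · simp only [if_pos hblt, if_neg (by omega : ¬ a < i), if_neg hai] at hab
        have := hinj (Set.mem_Iio.2 (by omega : a - 1 < t)) (by simp; omega) hab
        omega
      · simp only [if_neg (by omega : ¬ a < i), if_neg hai,
          if_neg (by omega : ¬ b < i), if_neg hbi] at hab
        have := hinj (Set.mem_Iio.2 (by omega : a - 1 < t))
          (Set.mem_Iio.2 (by omega : b - 1 < t)) hab
        omega
  · -- path property
    intro j hj
    rcases lt_trichotomy (j + 1) i with h1 | h1 | h1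
    · simp only [if_pos (by omega : j < i), if_pos h1]
      exact hpath j (by omega)
    · simp only [if_pos (by omega : j < i), h1, lt_irrefl, if_false, if_pos rfl]
      have := hkey (by omega)
      have h2 : i - 1 = j := by omega
      rw [h2] at this
      simpa using this
    · by_cases hji : j = i
      · simp only [hji, lt_irrefl, if_false, if_pos rfl,
          if_neg (by omega : ¬ i + 1 < i), if_neg (by omega : i + 1 ≠ i),
          Nat.add_sub_cancel]
        exact hvi
      · simp only [if_neg (by omega : ¬ j < i), if_neg hji,
          if_neg (by omega : ¬ j + 1 < i), if_neg (by omega : j + 1 ≠ i),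
          Nat.add_sub_cancel]
        have := hpath (j - 1) (by omega)
        rwa [Nat.sub_add_cancel (by omega : 1 ≤ j)] at this
  · -- endpoint
    simp only [if_neg (by omega : ¬ t < i), if_neg (by omega : t ≠ i)]
  · -- vertex set
    intro x
    constructor
    · rintro ⟨j, hj, rfl⟩
      by_cases hji : j = i
      · left; simp [hji]
      · rcases lt_or_gt_of_ne hji with h1 | h1
        · right; exact ⟨j, by omega, by simp [if_pos h1]⟩
        · right
          refine ⟨j - 1, by omega, ?_⟩
          simp [if_neg (by omega : ¬ j < i), if_neg hji]
    · rintro (rfl | ⟨j, hj, rfl⟩)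
      · exact ⟨i, by omega, by simp⟩
      · rcases lt_or_ge j i with h1 | h1
        · exact ⟨j, by omega, by simp [if_pos h1]⟩
        · refine ⟨j + 1, by omega, ?_⟩
          simp [if_neg (by omega : ¬ j + 1 < i), if_neg (by omega : j + 1 ≠ i)]
end

section
/- Let k ≥ 1 be an integer and let G be a mono-C3-free edge-colored complete graph K_n with n ≥ (k+2)!. Then G contains a properly colored copy of every tree with k edges. -/
open Finset SimpleGraph Function

def localRamseyBound : ℕ → ℕ
  | 0 => 1
  | t + 1 => (t + 1) * localRamseyBound t + 1

lemma two_mul_localRamseyBound_le_factorial (t : ℕ) :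
    2 * localRamseyBound t ≤ (t + 2).factorial := by
  induction t with
  | zero => simp [localRamseyBound]
  | succ t ih =>
    have hfac : 1 ≤ (t + 2).factorial := Nat.factorial_pos _
    calc 2 * localRamseyBound (t + 1) = (t + 1) * (2 * localRamseyBound t) + 2 := by
          rw [localRamseyBound]; ring
      _ ≤ (t + 1) * (t + 2).factorial + 2 := by gcongr
      _ ≤ (t + 3) * (t + 2).factorial := by nlinarith
      _ = (t + 3).factorial := rfl

variable {n : ℕ} {c : Fin n → Fin n → ℕ}

lemma MonoC3Free.comp_injective (hmono : MonoC3Free n c) {m : ℕ} {f : Fin m → Fin n}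
    (hf : Injective f) : MonoC3Free m fun i j => c (f i) (f j) :=
  fun _ _ _ hij hjk hik => hmono _ _ _ (hf.ne hij) (hf.ne hjk) (hf.ne hik)

/-- Pigeonhole on the colors at one vertex `x`: inside the largest color class `γ` at `x` no
edge has color `γ`, since `c` is mono-`C₃`-free, so there every vertex sees at most `t` colors. -/
theorem MonoC3Free.card_le_localRamseyBound (hsym : ∀ u v, c u v = c v u)
    (hmono : MonoC3Free n c) (t : ℕ) (F : Fin n → Finset ℕ) (X : Finset (Fin n))
    (hF : ∀ x ∈ X, #(F x) ≤ t) (hX : ∀ x ∈ X, ∀ y ∈ X, y ≠ x → c x y ∈ F x) :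
    #X ≤ localRamseyBound t := by
  induction t generalizing F X with
  | zero =>
    refine card_le_one.mpr fun x hx y hy => by_contra fun hxy => ?_
    have hFx : F x = ∅ := card_eq_zero.mp (Nat.le_zero.mp (hF x hx))
    simpa [hFx] using hX x hx y hy (Ne.symm hxy)
  | succ t ih =>
    by_contra! hlarge
    obtain ⟨x, hx⟩ : X.Nonempty := card_pos.mp (by omega)
    obtain ⟨γ, -, hfiber⟩ := exists_lt_card_fiber_of_mul_lt_card_of_maps_to (f := c x)
      (n := localRamseyBound t)
      (fun y hy => hX x hx y (mem_of_mem_erase hy) (ne_of_mem_erase hy)) (by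
        rw [card_erase_of_mem hx]
        have := Nat.mul_le_mul_right (localRamseyBound t) (hF x hx)
        have hrec : localRamseyBound (t + 1) = (t + 1) * localRamseyBound t + 1 := rfl
        omega)
    refine hfiber.not_ge (ih (fun y => (F y).erase γ) _ ?_ ?_)
    · intro y hy
      obtain ⟨hy, hxy⟩ := mem_filter.mp hy
      have hγ : γ ∈ F y := by
        rw [← hxy, hsym]
        exact hX y (mem_of_mem_erase hy) x hx (ne_of_mem_erase hy).symm
      rw [card_erase_of_mem hγ]
      have := hF y (mem_of_mem_erase hy)
      omega
    · intro y hy z hz hzy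
      obtain ⟨hy, hxy⟩ := mem_filter.mp hy
      obtain ⟨hz, hxz⟩ := mem_filter.mp hz
      refine mem_erase.mpr
        ⟨fun hyz => ?_, hX y (mem_of_mem_erase hy) z (mem_of_mem_erase hz) hzy⟩
      exact hmono x y z (ne_of_mem_erase hy).symm hzy.symm (ne_of_mem_erase hz).symm
        ⟨hxy.trans hyz.symm, hxy.trans hxz.symm⟩

theorem MonoC3Free.exists_color_not_mem (hsym : ∀ u v, c u v = c v u) (hmono : MonoC3Free n c)
    {t : ℕ} {F : Fin n → Finset ℕ} (hF : ∀ x, #(F x) ≤ t) (hn : localRamseyBound t < n) :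
    ∃ x y, y ≠ x ∧ c x y ∉ F x := by
  by_contra! h
  have := hmono.card_le_localRamseyBound hsym t F univ (fun x _ => hF x)
    fun x _ y _ hyx => h x y hyx
  rw [card_univ, Fintype.card_fin] at this
  omega

variable {W : Type*}

structure IsPCEmbedding (c : Fin n → Fin n → ℕ) (T : SimpleGraph W) (S : Finset (Fin n))
    (φ : W → Fin n) : Prop where
  mem : ∀ u, φ u ∈ S
  injective : Injective φ
  proper : ∀ a b d, T.Adj a b → T.Adj b d → a ≠ d → c (φ a) (φ b) ≠ c (φ b) (φ d)

lemma IsPCEmbedding.mono {T : SimpleGraph W} {S S' : Finset (Fin n)} {φ : W → Fin n}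
    (hφ : IsPCEmbedding c T S φ) (hS : S ⊆ S') : IsPCEmbedding c T S' φ :=
  ⟨fun u => hS (hφ.mem u), hφ.injective, hφ.proper⟩

lemma exists_pairwise_disjoint_pcEmbeddings [Fintype W] {T : SimpleGraph W} {N : ℕ}
    (h : ∀ S : Finset (Fin n), N ≤ #S → ∃ φ, IsPCEmbedding c T S φ) :
    ∀ (M : ℕ) (S : Finset (Fin n)), N + M * Fintype.card W ≤ #S →
      ∃ Φ : Fin (M + 1) → W → Fin n, (∀ i, IsPCEmbedding c T S (Φ i)) ∧
        Pairwise fun i j => Disjoint (Set.range (Φ i)) (Set.range (Φ j))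
  | 0, S, hS => by
    obtain ⟨φ, hφ⟩ := h S (by simpa using hS)
    exact ⟨fun _ => φ, fun _ => hφ,
      fun i j hij => absurd (Subsingleton.elim (α := Fin 1) i j) hij⟩
  | M + 1, S, hS => by
    obtain ⟨φ, hφ⟩ := h S ((Nat.le_add_right _ _).trans hS)
    have hrest : N + M * Fintype.card W ≤ #(S \ univ.image φ) := by
      have := le_card_sdiff (univ.image φ) S
      have := card_image_le (s := univ) (f := φ)
      rw [card_univ] at this
      have : (M + 1) * Fintype.card W = M * Fintype.card W + Fintype.card W := by ring
      omega
    obtain ⟨Φ, hΦ, hdisj⟩ := exists_pairwise_disjoint_pcEmbeddings h M _ hrest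
    have hφΦ : ∀ i, Disjoint (Set.range φ) (Set.range (Φ i)) := by
      refine fun i => Set.disjoint_left.mpr ?_
      rintro _ ⟨u, rfl⟩ ⟨w, hw⟩
      exact (mem_sdiff.mp ((hΦ i).mem w)).2 (hw ▸ mem_image_of_mem φ (mem_univ u))
    refine ⟨Fin.cons φ Φ, Fin.cases hφ fun i => (hΦ i).mono sdiff_subset, ?_⟩
    refine pairwise_fin_succ_iff.mpr ⟨fun i => ?_, fun i => ?_, fun i j hij => ?_⟩
    · simpa using (hφΦ i).symm
    · simpa using hφΦ i
    · simpa using hdisj hij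

open Classical in
noncomputable def starColors [Fintype W] (c : Fin n → Fin n → ℕ) (T : SimpleGraph W)
    (φ : W → Fin n) (x : W) : Finset ℕ :=
  (univ.filter (T.Adj x)).image fun u => c (φ x) (φ u)

lemma card_starColors_le [Fintype W] (T : SimpleGraph W) (φ : W → Fin n) (x : W) :
    #(starColors c T φ x) ≤ Fintype.card W - 1 := by
  classical
  calc #(starColors c T φ x) ≤ #(univ.filter (T.Adj x)) := card_image_le
    _ ≤ #(univ.erase x) :=
      card_le_card fun u hu => mem_erase.mpr ⟨(mem_filter.mp hu).2.ne', mem_univ u⟩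
    _ = Fintype.card W - 1 := by rw [card_erase_of_mem (mem_univ x), card_univ]

lemma IsPCEmbedding.extend_leaf [Fintype W] [DecidableEq W] (hsym : ∀ u v, c u v = c v u)
    {T : SimpleGraph W} {S : Finset (Fin n)} {v p : W} (hleaf : ∀ u, T.Adj v u ↔ u = p)
    (hpv : p ≠ v)
    {ψ : ({v}ᶜ : Set W) → Fin n} (hψ : IsPCEmbedding c (T.induce {v}ᶜ) S ψ) {w : Fin n}
    (hwS : w ∈ S) (hw : w ∉ Set.range ψ)
    (hwc : c (ψ ⟨p, hpv⟩) w ∉ starColors c (T.induce {v}ᶜ) ψ ⟨p, hpv⟩) :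
    IsPCEmbedding c T S fun u => if h : u = v then w else ψ ⟨u, h⟩ := by
  classical
  set φ : W → Fin n := fun u => if h : u = v then w else ψ ⟨u, h⟩
  have hφv : φ v = w := dif_pos rfl
  have hφ : ∀ u (hu : u ≠ v), φ u = ψ ⟨u, hu⟩ := fun u hu => dif_neg hu
  have hstar : ∀ u, u ≠ v → T.Adj p u → c (φ p) w ≠ c (φ p) (φ u) := by
    intro u hu hpu heq
    rw [hφ p hpv, hφ u hu] at heq
    exact hwc (heq ▸ mem_image_of_mem _ (mem_filter.mpr ⟨mem_univ _, hpu⟩))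
  refine ⟨fun u => ?_, fun u u' huu' => ?_, fun a b d hab hbd had => ?_⟩
  · by_cases hu : u = v
    · rw [hu, hφv]; exact hwS
    · rw [hφ u hu]; exact hψ.mem _
  · by_cases hu : u = v <;> by_cases hu' : u' = v
    · rw [hu, hu']
    · rw [hu, hφv, hφ u' hu'] at huu'
      exact absurd ⟨_, huu'.symm⟩ hw
    · rw [hu', hφv, hφ u hu] at huu'
      exact absurd ⟨_, huu'⟩ hw
    · rw [hφ u hu, hφ u' hu'] at huu'
      exact congrArg Subtype.val (hψ.injective huu')
  · by_cases hb : b = v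
    · subst hb
      exact absurd (((hleaf a).mp hab.symm).trans ((hleaf d).mp hbd).symm) had
    by_cases ha : a = v
    · subst ha
      obtain rfl := (hleaf b).mp hab
      rw [hφv, hsym]
      exact hstar d (Ne.symm had) hbd
    by_cases hd : d = v
    · subst hd
      obtain rfl := (hleaf b).mp hbd.symm
      rw [hφv, hsym]
      exact (hstar a ha hab.symm).symm
    rw [hφ a ha, hφ b hb, hφ d hd]
    exact hψ.proper ⟨a, ha⟩ ⟨b, hb⟩ ⟨d, hd⟩ hab hbd fun h => had (congrArg Subtype.val h)

lemma Fintype.card_compl_singleton_add_one [Fintype W] [DecidableEq W] (v : W) :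
    Fintype.card ({v}ᶜ : Set W) + 1 = Fintype.card W := by
  rw [Fintype.card_compl_set, Set.card_singleton]
  have : 0 < Fintype.card W := Fintype.card_pos_iff.mpr ⟨v⟩
  omega

lemma exists_pcEmbedding_of_leaf [Fintype W] [DecidableEq W] (hsym : ∀ u v, c u v = c v u)
    (hmono : MonoC3Free n c) {T : SimpleGraph W} {v p : W} (hleaf : ∀ u, T.Adj v u ↔ u = p)
    (hsub : ∀ S : Finset (Fin n), (Fintype.card W).factorial ≤ #S →
      ∃ ψ, IsPCEmbedding c (T.induce {v}ᶜ) S ψ)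
    {S : Finset (Fin n)} (hS : (Fintype.card W + 1).factorial ≤ #S) :
    ∃ φ, IsPCEmbedding c T S φ := by
  have hpv : p ≠ v := ((hleaf p).mpr rfl).ne'
  set p' : ({v}ᶜ : Set W) := ⟨p, hpv⟩
  have hcard := Fintype.card_compl_singleton_add_one v
  set N := (Fintype.card W).factorial
  obtain ⟨Φ, hΦ, hdisj⟩ := exists_pairwise_disjoint_pcEmbeddings hsub N S <| calc
    N + N * Fintype.card ({v}ᶜ : Set W) = N * Fintype.card W := by rw [← hcard]; ring
    _ ≤ (Fintype.card W + 1) * N := by nlinarith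
    _ ≤ #S := hS
  have hinj : Injective fun i => Φ i p' := fun i j hij =>
    by_contra fun hne => Set.disjoint_left.mp (hdisj hne) ⟨p', rfl⟩ ⟨p', hij.symm⟩
  have hbound : localRamseyBound (Fintype.card W - 2) < N + 1 := by
    have hL := two_mul_localRamseyBound_le_factorial (Fintype.card W - 2)
    have : 0 < Fintype.card ({v}ᶜ : Set W) := Fintype.card_pos_iff.mpr ⟨p'⟩
    rw [show Fintype.card W - 2 + 2 = Fintype.card W by omega] at hL
    omega
  -- If no copy of `p` had an edge of a new color to another copy of `p`, the `N + 1` copies of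
  -- `p` would contradict the local Ramsey bound.
  obtain ⟨i, j, hji, hc⟩ := (hmono.comp_injective hinj).exists_color_not_mem
    (fun _ _ => hsym _ _) (F := fun i => starColors c (T.induce {v}ᶜ) (Φ i) p')
    (fun i => (card_starColors_le _ _ _).trans (by omega)) hbound
  exact ⟨_, (hΦ i).extend_leaf hsym hleaf hpv ((hΦ j).mem p')
    (Set.disjoint_left.mp (hdisj hji) ⟨p', rfl⟩) hc⟩

theorem exists_pcEmbedding_of_isTree (hsym : ∀ u v, c u v = c v u) (hmono : MonoC3Free n c)
    [Fintype W] {T : SimpleGraph W} (hT : T.IsTree) {S : Finset (Fin n)}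
    (hS : (Fintype.card W + 1).factorial ≤ #S) : ∃ φ, IsPCEmbedding c T S φ := by
  revert T S
  refine Fintype.induction_subsingleton_or_nontrivial (P := fun W _ => ∀ {T : SimpleGraph W},
    T.IsTree → ∀ {S : Finset (Fin n)}, (Fintype.card W + 1).factorial ≤ #S →
      ∃ φ, IsPCEmbedding c T S φ) W (fun W _ _ T _ S hS => ?_) (fun W _ _ ih T hT S hS => ?_)
  · obtain ⟨s, hs⟩ : S.Nonempty := card_pos.mp ((Nat.factorial_pos _).trans_le hS)
    refine ⟨fun _ => s, fun _ => hs, injective_of_subsingleton _, fun a b _ hab => ?_⟩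
    exact absurd hab (Subsingleton.elim a b ▸ T.irrefl)
  · classical
    obtain ⟨v, hv⟩ := hT.exists_vert_degree_one_of_nontrivial
    obtain ⟨p, hvp, hp⟩ := degree_eq_one_iff_existsUnique_adj.mp hv
    have hT' : (T.induce {v}ᶜ).IsTree :=
      ⟨hT.connected.induce_compl_singleton_of_degree_eq_one hv, hT.isAcyclic.induce _⟩
    have hcard := Fintype.card_compl_singleton_add_one v
    exact exists_pcEmbedding_of_leaf hsym hmono (fun u => ⟨hp u, fun h => h ▸ hvp⟩)
      (fun S' hS' => ih _ (by omega) hT' (by rwa [hcard])) hS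

theorem pc_copy_of_every_tree_general (k n : ℕ) (c : Fin n → Fin n → ℕ)
    (hsym : ∀ u v, c u v = c v u) (hmono : MonoC3Free n c)
    (hn : (k + 2).factorial ≤ n) :
    ∀ T : SimpleGraph (Fin (k + 1)), T.IsTree →
      ∃ φ : Fin (k + 1) → Fin n, Function.Injective φ ∧
        ∀ a b d : Fin (k + 1), T.Adj a b → T.Adj b d → a ≠ d →
          c (φ a) (φ b) ≠ c (φ b) (φ d) := by
  intro T hT
  obtain ⟨φ, hφ⟩ := exists_pcEmbedding_of_isTree hsym hmono hT (S := univ) (by simpa using hn)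
  exact ⟨φ, hφ.injective, hφ.proper⟩

/-- Let `k ≥ 1` and let `G` be a mono-`C3`-free edge-colored `K_n`
with `n ≥ (k+2)!`.  Then `G` contains a properly colored copy of every tree with `k`
edges (i.e. of every tree on `k+1` vertices): there is an injective embedding `φ` of
the tree such that any two adjacent edges of the embedded tree get distinct colors. -/
theorem pc_copy_of_every_tree (k n : ℕ) (hk : 1 ≤ k) (c : Fin n → Fin n → ℕ)
    (hsym : ∀ u v, c u v = c v u) (hmono : MonoC3Free n c)
    (hn : (k + 2).factorial ≤ n) :
    ∀ T : SimpleGraph (Fin (k + 1)), T.IsTree →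
      ∃ φ : Fin (k + 1) → Fin n, Function.Injective φ ∧
        ∀ a b d : Fin (k + 1), T.Adj a b → T.Adj b d → a ≠ d →
          c (φ a) (φ b) ≠ c (φ b) (φ d) :=
  pc_copy_of_every_tree_general k n c hsym hmono hn
end

section
/- Let H be a mono-C3-free edge-colored complete graph that contains no nice short bowtie. Then for each vertex v of H, at most one color appears more than once among the edges incident to v. -/
/-- An edge-coloring of a complete graph on vertex type `V` has no monochromatic
triangle. -/
def MonoC3Free' {V : Type*} (c : V → V → ℕ) : Prop :=
  ∀ u v w : V, u ≠ v → v ≠ w → u ≠ w → ¬(c u v = c v w ∧ c u v = c u w)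

/-- The edge-colored complete graph contains a nice short bowtie: two triangles
`u₀a₁a₂` and `u₀b₁b₂` sharing only the center `u₀`, such that `a₁a₂` and `b₁b₂` are
center edges of their triangles, and the colors of the two edges joining `u₀` to
`{a₁, a₂}` are disjoint from the colors of the two edges joining `u₀` to `{b₁, b₂}`. -/
def HasNiceShortBowtie {V : Type*} (c : V → V → ℕ) : Prop :=
  ∃ u₀ a₁ a₂ b₁ b₂ : V, List.Pairwise (· ≠ ·) [u₀, a₁, a₂, b₁, b₂] ∧
    c a₁ a₂ ≠ c u₀ a₁ ∧ c a₁ a₂ ≠ c u₀ a₂ ∧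
    c b₁ b₂ ≠ c u₀ b₁ ∧ c b₁ b₂ ≠ c u₀ b₂ ∧
    c u₀ a₁ ≠ c u₀ b₁ ∧ c u₀ a₁ ≠ c u₀ b₂ ∧
    c u₀ a₂ ≠ c u₀ b₁ ∧ c u₀ a₂ ≠ c u₀ b₂

/-- Let `H` be a mono-`C3`-free edge-colored complete graph containing
no nice short bowtie.  Then for each vertex `v` of `H`, at most one color appears more
than once among the edges incident to `v`. -/
theorem at_most_one_repeated_color {V : Type*} [Fintype V] (c : V → V → ℕ)
    (hsym : ∀ u v, c u v = c v u) (hmono : MonoC3Free' c)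
    (hnb : ¬HasNiceShortBowtie c) :
    ∀ v x₁ x₂ y₁ y₂ : V, x₁ ≠ x₂ → y₁ ≠ y₂ →
      x₁ ≠ v → x₂ ≠ v → y₁ ≠ v → y₂ ≠ v →
      c v x₁ = c v x₂ → c v y₁ = c v y₂ → c v x₁ = c v y₁ := by
  intro v x₁ x₂ y₁ y₂ hx hy hx1 hx2 hy1 hy2 hcx hcy
  by_contra hne
  apply hnb
  have h11 : x₁ ≠ y₁ := fun h => hne (by rw [h])
  have h12 : x₁ ≠ y₂ := fun h => hne (by rw [h, ← hcy])
  have h21 : x₂ ≠ y₁ := fun h => hne (by rw [hcx, h])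
  have h22 : x₂ ≠ y₂ := fun h => hne (by rw [hcx, h, ← hcy])
  refine ⟨v, x₁, x₂, y₁, y₂, ?_, ?_, ?_, ?_, ?_, hne, ?_, ?_, ?_⟩
  · simp [List.pairwise_cons, hx1.symm, hx2.symm, hy1.symm, hy2.symm, hx, hy, h11, h12, h21, h22]
  · exact fun h => hmono v x₁ x₂ (Ne.symm hx1) hx (Ne.symm hx2) ⟨h.symm, hcx⟩
  · exact fun h => hmono v x₁ x₂ (Ne.symm hx1) hx (Ne.symm hx2) ⟨hcx.trans h.symm, hcx⟩
  · exact fun h => hmono v y₁ y₂ (Ne.symm hy1) hy (Ne.symm hy2) ⟨h.symm, hcy⟩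
  · exact fun h => hmono v y₁ y₂ (Ne.symm hy1) hy (Ne.symm hy2) ⟨hcy.trans h.symm, hcy⟩
  · exact fun h => hne (h.trans hcy.symm)
  · exact fun h => hne (hcx.trans h)
  · exact fun h => hne (hcx.trans (h.trans hcy.symm))
end
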